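/- arXiv:2401.07844 — 10 statements merged into one kernel-verified Lean document; each statement's English description precedes it below -/
import Mathlib

section
/- Diminishing asymptotic rate of change (deterministic core of Lemma 1). Let ψ : ℕ → ℝ^d be a sequence satisfying lim_{n→∞} α(n)·‖∑_{i=0}^{n} ψ(i)‖ = 0. Then the weighted sums of ψ over time windows have zero asymptotic rate of change: for every τ > 0, limsup_{n→∞} sup_{−τ ≤ t₁ ≤ t₂ ≤ τ} ‖∑_{i=m(t(n)+t₁)}^{m(t(n)+t₂)−1} α(i)·ψ(i)‖ = 0. (In the paper this is applied with ψ(i) = H(x, Y_{i+1}) − h(x), ψ(i) = L_b(Y_{i+1}) − L̄_b, and ψ(i) = L(Y_{i+1}) − L̄, on a sample path satisfying the strong-law condition of Assumption 6.) -/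
/-!
Write `S k = ∑_{i<k} ψ i`. Abel summation turns a window sum `∑_{a ≤ i < b} α i • ψ i` into
`α (b-1) • S b - α a • S a - ∑_{a ≤ i < b-1} (α (i+1) - α i) • S (i+1)`. Each boundary term is
small because `α n • S (n+1) → 0`; since `α i - α (i+1) ≤ C α i ²`, the remaining sum is at most
`C · (∑_{a ≤ i < b} α i) · sup α i ‖S (i+1)‖`, and the `α`-mass of a window `[m s₁, m s₂)` is at most
`s₂ - s₁ + α 0`. Far along the sequence the whole window sum is therefore uniformly small.
-/

open Filter Finset

theorem norm_sum_Ico_smul_le_of_partialSums {E : Type*} [NormedAddCommGroup E]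
    [NormedSpace ℝ E] {α : ℕ → ℝ} (hα : ∀ n, 0 ≤ α n) (hα_anti : Antitone α)
    {C : ℝ} (hC : 0 ≤ C) (hαC : ∀ n, α n - α (n + 1) ≤ C * α n ^ 2) {ψ : ℕ → E} {a b : ℕ}
    {δ : ℝ} (hδ : ∀ i, a ≤ i + 1 → α i * ‖∑ j ∈ range (i + 1), ψ j‖ ≤ δ) :
    ‖∑ i ∈ Ico a b, α i • ψ i‖ ≤ (2 + C * ∑ i ∈ Ico a b, α i) * δ := by
  set S : ℕ → E := fun k => ∑ j ∈ range k, ψ j with hS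
  have hδ_nonneg : 0 ≤ δ :=
    (mul_nonneg (hα a) (norm_nonneg _)).trans (hδ a a.le_succ)
  rcases le_or_gt b a with hba | hab
  · rw [Ico_eq_empty_of_le hba, sum_empty, norm_zero, sum_empty]
    linarith
  have hlast : ‖α (b - 1) • S b‖ ≤ δ := by
    rw [norm_smul, Real.norm_of_nonneg (hα _)]
    simpa only [Nat.sub_add_cancel (Nat.one_le_of_lt hab)] using hδ (b - 1) (by omega)
  have hfirst : ‖α a • S a‖ ≤ δ := by
    cases a with
    | zero => simpa [hS] using hδ_nonneg
    | succ j =>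
      rw [norm_smul, Real.norm_of_nonneg (hα _)]
      exact (mul_le_mul_of_nonneg_right (hα_anti j.le_succ) (norm_nonneg _)).trans
        (hδ j le_rfl)
  have hstep : ∀ i ∈ Ico a (b - 1), ‖(α (i + 1) - α i) • S (i + 1)‖ ≤ C * δ * α i := by
    intro i hi
    have hi' : a ≤ i + 1 := by have := (mem_Ico.mp hi).1; omega
    rw [norm_smul, Real.norm_eq_abs, abs_sub_comm, abs_of_nonneg (sub_nonneg.mpr
      (hα_anti i.le_succ))]
    calc (α i - α (i + 1)) * ‖S (i + 1)‖ ≤ C * α i ^ 2 * ‖S (i + 1)‖ :=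
          mul_le_mul_of_nonneg_right (hαC i) (norm_nonneg _)
      _ = C * α i * (α i * ‖S (i + 1)‖) := by ring
      _ ≤ C * α i * δ := mul_le_mul_of_nonneg_left (hδ i hi') (mul_nonneg hC (hα i))
      _ = C * δ * α i := by ring
  have hmiddle : ‖∑ i ∈ Ico a (b - 1), (α (i + 1) - α i) • S (i + 1)‖
      ≤ C * δ * ∑ i ∈ Ico a b, α i := by
    calc _ ≤ ∑ i ∈ Ico a (b - 1), C * δ * α i := norm_sum_le_of_le _ hstep
      _ = C * δ * ∑ i ∈ Ico a (b - 1), α i := (mul_sum _ _ _).symm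
      _ ≤ C * δ * ∑ i ∈ Ico a b, α i :=
        mul_le_mul_of_nonneg_left (sum_le_sum_of_subset_of_nonneg
          (Ico_subset_Ico_right (Nat.sub_le b 1)) fun i _ _ => hα i) (mul_nonneg hC hδ_nonneg)
  rw [sum_Ico_by_parts α ψ hab]
  calc _ ≤ ‖α (b - 1) • S b‖ + ‖α a • S a‖
          + ‖∑ i ∈ Ico a (b - 1), (α (i + 1) - α i) • S (i + 1)‖ :=
        (norm_sub_le _ _).trans (add_le_add_left (norm_sub_le _ _) _)
    _ ≤ δ + δ + C * δ * ∑ i ∈ Ico a b, α i := by gcongr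
    _ = (2 + C * ∑ i ∈ Ico a b, α i) * δ := by ring

theorem sum_Ico_m_le_sub_add {α t : ℕ → ℝ} (ht : ∀ n, t n = ∑ i ∈ range n, α i) {m : ℝ → ℕ}
    (hm_le : ∀ s : ℝ, 0 ≤ s → t (m s) ≤ s)
    (hm_max : ∀ s : ℝ, 0 ≤ s → ∀ i : ℕ, t i ≤ s → i ≤ m s)
    {s₁ s₂ : ℝ} (hs₁ : 0 ≤ s₁) (hs : s₁ ≤ s₂) :
    ∑ i ∈ Ico (m s₁) (m s₂), α i ≤ s₂ - s₁ + α (m s₁) := by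
  have hmono : m s₁ ≤ m s₂ := hm_max s₂ (hs₁.trans hs) _ ((hm_le s₁ hs₁).trans hs)
  have hnext : s₁ < t (m s₁ + 1) := by
    by_contra! h
    exact (m s₁).lt_irrefl (hm_max s₁ hs₁ _ h)
  have hsucc : t (m s₁ + 1) = t (m s₁) + α (m s₁) := by rw [ht, ht, sum_range_succ]
  rw [sum_Ico_eq_sub _ hmono, ← ht, ← ht]
  linarith [hm_le s₂ (hs₁.trans hs)]

theorem diminishing_asymptotic_rate_of_change_general
    {E : Type*} [NormedAddCommGroup E] [NormedSpace ℝ E]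
    (α : ℕ → ℝ)
    (hα_pos : ∀ n, 0 < α n)
    (hα_anti : ∀ n, α (n + 1) ≤ α n)
    (hα_div : Tendsto (fun n => ∑ i ∈ Finset.range n, α i) atTop atTop)
    (Cα : ℝ)
    (hCα : ∀ n, α n - α (n + 1) ≤ Cα * α n ^ 2)
    (t : ℕ → ℝ) (ht : ∀ n, t n = ∑ i ∈ Finset.range n, α i)
    (m : ℝ → ℕ)
    (hm_le : ∀ s : ℝ, 0 ≤ s → t (m s) ≤ s)
    (hm_max : ∀ s : ℝ, 0 ≤ s → ∀ i : ℕ, t i ≤ s → i ≤ m s)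
    (ψ : ℕ → E)
    (hψ : Tendsto (fun n => α n * ‖∑ i ∈ Finset.range (n + 1), ψ i‖) atTop (nhds 0)) :
    ∀ τ : ℝ, 0 < τ → ∀ ε : ℝ, 0 < ε → ∃ N : ℕ, ∀ n ≥ N,
      ∀ t₁ t₂ : ℝ, -τ ≤ t₁ → t₁ ≤ t₂ → t₂ ≤ τ →
        ‖∑ i ∈ Finset.Ico (m (t n + t₁)) (m (t n + t₂)), α i • ψ i‖ ≤ ε := by
  intro τ hτ ε hε
  have hα : ∀ n, 0 ≤ α n := fun n => (hα_pos n).le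
  have hα_mono : Antitone α := antitone_nat_of_succ_le hα_anti
  have hC : 0 ≤ Cα :=
    nonneg_of_mul_nonneg_left ((sub_nonneg.mpr (hα_anti 0)).trans (hCα 0)) (pow_pos (hα_pos 0) 2)
  set D : ℝ := 2 + Cα * (2 * τ + α 0) with hD
  have hD_pos : 0 < D := by nlinarith [hα 0]
  obtain ⟨N, hN⟩ := eventually_atTop.mp (hψ.eventually (ge_mem_nhds (div_pos hε hD_pos)))
  obtain ⟨n₀, hn₀⟩ := eventually_atTop.mp
    ((hα_div.congr fun n => (ht n).symm).eventually_ge_atTop (τ + t (N + 1)))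
  refine ⟨n₀, fun n hn t₁ t₂ h₁ h₁₂ h₂ => ?_⟩
  have ht_nonneg : 0 ≤ t (N + 1) := (ht _).symm ▸ sum_nonneg fun i _ => hα i
  have hs₁ : t (N + 1) ≤ t n + t₁ := by linarith [hn₀ n hn]
  have hN_le : N + 1 ≤ m (t n + t₁) := hm_max _ (ht_nonneg.trans hs₁) _ hs₁
  have hwindow : ∑ i ∈ Ico (m (t n + t₁)) (m (t n + t₂)), α i ≤ 2 * τ + α 0 := by
    have := sum_Ico_m_le_sub_add ht hm_le hm_max (ht_nonneg.trans hs₁)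
      (by linarith : t n + t₁ ≤ t n + t₂)
    linarith [hα_mono (Nat.zero_le (m (t n + t₁)))]
  calc _ ≤ (2 + Cα * ∑ i ∈ Ico (m (t n + t₁)) (m (t n + t₂)), α i) * (ε / D) :=
        norm_sum_Ico_smul_le_of_partialSums hα hα_mono hC hCα fun i hi => hN i (by omega)
    _ ≤ D * (ε / D) := by rw [hD]; gcongr
    _ = ε := mul_div_cancel₀ ε hD_pos.ne'

theorem diminishing_asymptotic_rate_of_change
    {E : Type*} [NormedAddCommGroup E] [NormedSpace ℝ E] [FiniteDimensional ℝ E]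
    [Nontrivial E]
    (α : ℕ → ℝ)
    (hα_pos : ∀ n, 0 < α n)
    (hα_anti : ∀ n, α (n + 1) ≤ α n)
    (hα_div : Tendsto (fun n => ∑ i ∈ Finset.range n, α i) atTop atTop)
    (hα_to0 : Tendsto α atTop (nhds 0))
    (Cα : ℝ) (hCα_pos : 0 < Cα)
    (hCα : ∀ n, α n - α (n + 1) ≤ Cα * α n ^ 2)
    (t : ℕ → ℝ) (ht : ∀ n, t n = ∑ i ∈ Finset.range n, α i)
    (m : ℝ → ℕ)
    (hm_le : ∀ s : ℝ, 0 ≤ s → t (m s) ≤ s)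
    (hm_max : ∀ s : ℝ, 0 ≤ s → ∀ i : ℕ, t i ≤ s → i ≤ m s)
    (hm_neg : ∀ s : ℝ, s < 0 → m s = 0)
    (ψ : ℕ → E)
    (hψ : Tendsto (fun n => α n * ‖∑ i ∈ Finset.range (n + 1), ψ i‖) atTop (nhds 0)) :
    ∀ τ : ℝ, 0 < τ → ∀ ε : ℝ, 0 < ε → ∃ N : ℕ, ∀ n ≥ N,
      ∀ t₁ t₂ : ℝ, -τ ≤ t₁ → t₁ ≤ t₂ → t₂ ≤ τ →
        ‖∑ i ∈ Finset.Ico (m (t n + t₁)) (m (t n + t₂)), α i • ψ i‖ ≤ ε :=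
  diminishing_asymptotic_rate_of_change_general α hα_pos hα_anti hα_div Cα hCα t ht m hm_le hm_max ψ
    hψ
end

section
/- Uniform convergence of H_c to H_∞ over windows (Lemma 2, deterministic form). Assume additionally: (i) sup_n sup_{0 ≤ t₁ ≤ t₂ ≤ T_{n+1} − T_n} ∑_{i=m(T_n+t₁)}^{m(T_n+t₂)−1} α(i)·L_b(Y_{i+1}) < ∞; and (ii) there exists x₀ ∈ ℝ^d with sup_n sup_{t ∈ [0,T]} ‖∑_{i=m(T_n)}^{m(T_n+t)−1} α(i)·b(x₀, Y_{i+1})‖ < ∞. Then for every compact set B ⊆ ℝ^d, lim_{c→∞} sup_{x ∈ B} sup_n sup_{t ∈ [0,T]} ‖∑_{i=m(T_n)}^{m(T_n+t)−1} α(i)·(H_c(x, Y_{i+1}) − H_∞(x, Y_{i+1}))‖ = 0. -/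
/-! On every `H_c` the window sums of `H_c - H_∞` equal `κ c` times the window sums of `b`.
The latter are bounded uniformly over the compact set `B`: at `x₀` by (ii), and the increment
from `x₀` to `x` by the Lipschitz constants of `b`, whose window sums are bounded by (i) because
every window `[T_n, T_{n+1}]` has length at least `T`. Since `κ c → 0`, the claim follows. -/

open Filter Finset

theorem lt_apply_succ_index {t : ℕ → ℝ} {m : ℝ → ℕ}
    (hm_max : ∀ s : ℝ, 0 ≤ s → ∀ i : ℕ, t i ≤ s → i ≤ m s)
    (hm_neg : ∀ s : ℝ, s < 0 → m s = 0) (ht₁ : 0 < t 1) (s : ℝ) :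
    s < t (m s + 1) := by
  rcases lt_or_ge s 0 with hs | hs
  · rw [hm_neg s hs]
    linarith
  · by_contra! h
    have := hm_max s hs _ h
    omega

theorem norm_sum_smul_le_of_lipschitz {ι X E : Type*} [PseudoMetricSpace X]
    [SeminormedAddCommGroup E] [NormedSpace ℝ E] (S : Finset ι) {a K : ι → ℝ}
    (ha : ∀ i, 0 ≤ a i) {f : ι → X → E} (hf : ∀ i x y, ‖f i x - f i y‖ ≤ K i * dist x y)
    (x x₀ : X) :
    ‖∑ i ∈ S, a i • f i x‖ ≤ ‖∑ i ∈ S, a i • f i x₀‖ + (∑ i ∈ S, a i * K i) * dist x x₀ :=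
  calc ‖∑ i ∈ S, a i • f i x‖
      = ‖∑ i ∈ S, a i • f i x₀ + ∑ i ∈ S, a i • (f i x - f i x₀)‖ := by
        simp only [← sum_add_distrib, smul_sub, add_sub_cancel]
    _ ≤ ‖∑ i ∈ S, a i • f i x₀‖ + ∑ i ∈ S, ‖a i • (f i x - f i x₀)‖ :=
        norm_add_le_of_le le_rfl (norm_sum_le _ _)
    _ ≤ ‖∑ i ∈ S, a i • f i x₀‖ + ∑ i ∈ S, a i * K i * dist x x₀ := by
        gcongr with i
        rw [norm_smul, Real.norm_of_nonneg (ha i), mul_assoc]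
        exact mul_le_mul_of_nonneg_left (hf i x x₀) (ha i)
    _ = ‖∑ i ∈ S, a i • f i x₀‖ + (∑ i ∈ S, a i * K i) * dist x x₀ := by rw [sum_mul]

theorem exists_forall_ge_abs_mul_le {κ : ℝ → ℝ} (hκ : Tendsto κ atTop (nhds 0))
    {ε : ℝ} (hε : 0 < ε) (M : ℝ) : ∃ c₀ : ℝ, ∀ c ≥ c₀, |κ c| * M ≤ ε := by
  have hlim : Tendsto (fun c => |κ c| * M) atTop (nhds 0) := by
    simpa using hκ.abs.mul_const M
  exact eventually_atTop.mp (hlim.eventually (ge_mem_nhds hε))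

theorem uniform_convergence_Hc_to_Hinf_over_windows_general
    {E : Type*} [NormedAddCommGroup E] [NormedSpace ℝ E]
    {𝓨 : Type*}
    (α : ℕ → ℝ)
    (hα_pos : ∀ n, 0 < α n)
    (t : ℕ → ℝ) (ht : ∀ n, t n = ∑ i ∈ Finset.range n, α i)
    (m : ℝ → ℕ)
    (hm_max : ∀ s : ℝ, 0 ≤ s → ∀ i : ℕ, t i ≤ s → i ≤ m s)
    (hm_neg : ∀ s : ℝ, s < 0 → m s = 0)
    (T : ℝ)
    (Tseq : ℕ → ℝ)
    (hTseq : ∀ n, Tseq (n + 1) = t (m (Tseq n + T) + 1))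
    (Y : ℕ → 𝓨) (H : E → 𝓨 → E)
    (Hinf : E → 𝓨 → E) (κ : ℝ → ℝ) (hκ : Tendsto κ atTop (nhds 0))
    (b : E → 𝓨 → E) (Lb : 𝓨 → ℝ)
    (hHc : ∀ c : ℝ, 1 ≤ c → ∀ x' : E, ∀ y : 𝓨,
      c⁻¹ • H (c • x') y - Hinf x' y = κ c • b x' y)
    (hb_lip : ∀ x₁ x₂ : E, ∀ y : 𝓨, ‖b x₁ y - b x₂ y‖ ≤ Lb y * ‖x₁ - x₂‖)
    (hLb_sum : ∃ C : ℝ, ∀ n : ℕ, ∀ t₁ t₂ : ℝ, 0 ≤ t₁ → t₁ ≤ t₂ → t₂ ≤ Tseq (n + 1) - Tseq n →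
      ∑ i ∈ Finset.Ico (m (Tseq n + t₁)) (m (Tseq n + t₂)), α i * Lb (Y (i + 1)) ≤ C)
    (hb_sum : ∃ x₀ : E, ∃ C : ℝ, ∀ n : ℕ, ∀ s : ℝ, 0 ≤ s → s ≤ T →
      ‖∑ i ∈ Finset.Ico (m (Tseq n)) (m (Tseq n + s)), α i • b x₀ (Y (i + 1))‖ ≤ C) :
    ∀ B : Set E, IsCompact B → ∀ ε : ℝ, 0 < ε → ∃ c₀ : ℝ, ∀ c : ℝ, c₀ ≤ c → 1 ≤ c →
      ∀ x' ∈ B, ∀ n : ℕ, ∀ s : ℝ, 0 ≤ s → s ≤ T →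
        ‖∑ i ∈ Finset.Ico (m (Tseq n)) (m (Tseq n + s)),
            α i • (c⁻¹ • H (c • x') (Y (i + 1)) - Hinf x' (Y (i + 1)))‖ ≤ ε := by
  intro B hB ε hε
  obtain ⟨C₁, hC₁⟩ := hLb_sum
  obtain ⟨x₀, C₂, hC₂⟩ := hb_sum
  obtain ⟨R, hR⟩ := hB.isBounded.subset_closedBall x₀
  have hwindow (n : ℕ) : T ≤ Tseq (n + 1) - Tseq n := by
    have := lt_apply_succ_index hm_max hm_neg (by simp [ht, hα_pos 0]) (Tseq n + T)
    rw [hTseq]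
    linarith
  obtain ⟨c₀, hc₀⟩ := exists_forall_ge_abs_mul_le hκ hε (C₂ + |C₁| * R)
  refine ⟨c₀, fun c hc hc1 x hx n s hs hsT => ?_⟩
  have hdrift : ∑ i ∈ Ico (m (Tseq n)) (m (Tseq n + s)),
      α i • (c⁻¹ • H (c • x) (Y (i + 1)) - Hinf x (Y (i + 1)))
        = κ c • ∑ i ∈ Ico (m (Tseq n)) (m (Tseq n + s)), α i • b x (Y (i + 1)) := by
    rw [smul_sum]
    exact sum_congr rfl fun i _ => by rw [hHc c hc1, smul_comm]
  have hLb_window : ∑ i ∈ Ico (m (Tseq n)) (m (Tseq n + s)), α i * Lb (Y (i + 1)) ≤ C₁ := by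
    simpa using hC₁ n 0 s le_rfl hs (hsT.trans (hwindow n))
  have hb_window : ‖∑ i ∈ Ico (m (Tseq n)) (m (Tseq n + s)), α i • b x (Y (i + 1))‖
      ≤ C₂ + |C₁| * R :=
    (norm_sum_smul_le_of_lipschitz _ (fun i => (hα_pos i).le)
      (fun i x y => (hb_lip x y (Y (i + 1))).trans_eq (by rw [dist_eq_norm])) x x₀).trans
      (add_le_add (hC₂ n s hs hsT)
        (mul_le_mul (hLb_window.trans (le_abs_self C₁)) (hR hx) dist_nonneg (abs_nonneg _)))
  rw [hdrift, norm_smul, Real.norm_eq_abs]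
  exact (mul_le_mul_of_nonneg_left hb_window (abs_nonneg _)).trans (hc₀ c hc)

theorem uniform_convergence_Hc_to_Hinf_over_windows
    {E : Type*} [NormedAddCommGroup E] [NormedSpace ℝ E] [FiniteDimensional ℝ E]
    [Nontrivial E]
    {𝓨 : Type*}
    (α : ℕ → ℝ)
    (hα_pos : ∀ n, 0 < α n)
    (hα_anti : ∀ n, α (n + 1) ≤ α n)
    (hα_div : Tendsto (fun n => ∑ i ∈ Finset.range n, α i) atTop atTop)
    (hα_to0 : Tendsto α atTop (nhds 0))
    (t : ℕ → ℝ) (ht : ∀ n, t n = ∑ i ∈ Finset.range n, α i)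
    (m : ℝ → ℕ)
    (hm_le : ∀ s : ℝ, 0 ≤ s → t (m s) ≤ s)
    (hm_max : ∀ s : ℝ, 0 ≤ s → ∀ i : ℕ, t i ≤ s → i ≤ m s)
    (hm_neg : ∀ s : ℝ, s < 0 → m s = 0)
    (T : ℝ) (hT : 0 < T)
    (Tseq : ℕ → ℝ) (hTseq0 : Tseq 0 = 0)
    (hTseq : ∀ n, Tseq (n + 1) = t (m (Tseq n + T) + 1))
    (Y : ℕ → 𝓨) (H : E → 𝓨 → E)
    (L : 𝓨 → ℝ) (hL_nonneg : ∀ y, 0 ≤ L y)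
    (hH_lip : ∀ x₁ x₂ : E, ∀ y : 𝓨, ‖H x₁ y - H x₂ y‖ ≤ L y * ‖x₁ - x₂‖)
    (Hinf : E → 𝓨 → E) (κ : ℝ → ℝ) (hκ : Tendsto κ atTop (nhds 0))
    (b : E → 𝓨 → E) (Lb : 𝓨 → ℝ) (hLb_nonneg : ∀ y, 0 ≤ Lb y)
    (hHc : ∀ c : ℝ, 1 ≤ c → ∀ x' : E, ∀ y : 𝓨,
      c⁻¹ • H (c • x') y - Hinf x' y = κ c • b x' y)
    (hb_lip : ∀ x₁ x₂ : E, ∀ y : 𝓨, ‖b x₁ y - b x₂ y‖ ≤ Lb y * ‖x₁ - x₂‖)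
    (hHinf_lip : ∀ x₁ x₂ : E, ∀ y : 𝓨, ‖Hinf x₁ y - Hinf x₂ y‖ ≤ L y * ‖x₁ - x₂‖)
    (hLb_sum : ∃ C : ℝ, ∀ n : ℕ, ∀ t₁ t₂ : ℝ, 0 ≤ t₁ → t₁ ≤ t₂ → t₂ ≤ Tseq (n + 1) - Tseq n →
      ∑ i ∈ Finset.Ico (m (Tseq n + t₁)) (m (Tseq n + t₂)), α i * Lb (Y (i + 1)) ≤ C)
    (hb_sum : ∃ x₀ : E, ∃ C : ℝ, ∀ n : ℕ, ∀ s : ℝ, 0 ≤ s → s ≤ T →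
      ‖∑ i ∈ Finset.Ico (m (Tseq n)) (m (Tseq n + s)), α i • b x₀ (Y (i + 1))‖ ≤ C) :
    ∀ B : Set E, IsCompact B → ∀ ε : ℝ, 0 < ε → ∃ c₀ : ℝ, ∀ c : ℝ, c₀ ≤ c → 1 ≤ c →
      ∀ x' ∈ B, ∀ n : ℕ, ∀ s : ℝ, 0 ≤ s → s ≤ T →
        ‖∑ i ∈ Finset.Ico (m (Tseq n)) (m (Tseq n + s)),
            α i • (c⁻¹ • H (c • x') (Y (i + 1)) - Hinf x' (Y (i + 1)))‖ ≤ ε :=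
  uniform_convergence_Hc_to_Hinf_over_windows_general α hα_pos t ht m hm_max hm_neg T Tseq hTseq Y H
    Hinf κ hκ b Lb hHc hb_lip hLb_sum hb_sum
end

section
/- Properties of the segment endpoints T_n (Lemma 'T-minus'). Under the learning-rate framework of the context: (i) T_{n+1} − T_n ≥ T for every n; (ii) lim_{n→∞} (T_{n+1} − T_n) = T; and (iii) for every τ > 0 and all real numbers t₁, t₂ with −τ ≤ t₁ ≤ t₂ ≤ τ, lim_{n→∞} ∑_{i=m(t(n)+t₁)}^{m(t(n)+t₂)−1} α(i) = t₂ − t₁. -/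
/-!
Write `e s = s - t (m s)` for the distance from `s` back to the last grid point `t (m s) ≤ s`.
Since `s < t (m s + 1)`, we have `0 ≤ e s < α (m s)`, and `m s → ∞`, so `e s → 0` as `s → ∞`.
Each increment `T_{n+1} - T_n` equals `T + (t (m s + 1) - s)` with `s = T_n + T`, and each sum in
(iii) equals `t₂ - t₁ - e (t n + t₂) + e (t n + t₁)`; both error terms vanish in the limit.
-/

open Filter Topology

section LastGridIndex

variable {t : ℕ → ℝ} {m : ℝ → ℕ}

lemma lt_succ_lastIndex (hm_max : ∀ s : ℝ, 0 ≤ s → ∀ i : ℕ, t i ≤ s → i ≤ m s)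
    {s : ℝ} (hs : 0 ≤ s) : s < t (m s + 1) := by
  by_contra! h
  exact (m s).lt_succ_self.not_ge (hm_max s hs _ h)

lemma lastIndex_mono (hm_le : ∀ s : ℝ, 0 ≤ s → t (m s) ≤ s)
    (hm_max : ∀ s : ℝ, 0 ≤ s → ∀ i : ℕ, t i ≤ s → i ≤ m s)
    {s₁ s₂ : ℝ} (hs₁ : 0 ≤ s₁) (h : s₁ ≤ s₂) : m s₁ ≤ m s₂ :=
  hm_max s₂ (hs₁.trans h) (m s₁) ((hm_le s₁ hs₁).trans h)

lemma tendsto_lastIndex_atTop (hm_max : ∀ s : ℝ, 0 ≤ s → ∀ i : ℕ, t i ≤ s → i ≤ m s) :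
    Tendsto m atTop atTop :=
  tendsto_atTop_atTop.2 fun N => ⟨max 0 (t N), fun s hs =>
    hm_max s (le_of_max_le_left hs) N (le_of_max_le_right hs)⟩

lemma tendsto_sub_lastGridPoint (hm_le : ∀ s : ℝ, 0 ≤ s → t (m s) ≤ s)
    (hm_max : ∀ s : ℝ, 0 ≤ s → ∀ i : ℕ, t i ≤ s → i ≤ m s)
    (hinc : Tendsto (fun k => t (k + 1) - t k) atTop (𝓝 0)) :
    Tendsto (fun s => s - t (m s)) atTop (𝓝 0) := by
  have hgap := hinc.comp (tendsto_lastIndex_atTop hm_max)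
  refine tendsto_of_tendsto_of_tendsto_of_le_of_le' tendsto_const_nhds hgap ?_ ?_ <;>
    filter_upwards [eventually_ge_atTop 0] with s hs
  · exact sub_nonneg.2 (hm_le s hs)
  · simpa using (lt_succ_lastIndex hm_max hs).le

lemma tendsto_nextGridPoint_sub (hm_le : ∀ s : ℝ, 0 ≤ s → t (m s) ≤ s)
    (hm_max : ∀ s : ℝ, 0 ≤ s → ∀ i : ℕ, t i ≤ s → i ≤ m s)
    (hinc : Tendsto (fun k => t (k + 1) - t k) atTop (𝓝 0)) :
    Tendsto (fun s => t (m s + 1) - s) atTop (𝓝 0) := by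
  simpa using (hinc.comp (tendsto_lastIndex_atTop hm_max)).sub
    (tendsto_sub_lastGridPoint hm_le hm_max hinc)

end LastGridIndex

lemma tendsto_atTop_of_add_le_succ {u : ℕ → ℝ} {c : ℝ} (hc : 0 < c)
    (h : ∀ n, u n + c ≤ u (n + 1)) : Tendsto u atTop atTop := by
  have hlin : ∀ n : ℕ, u 0 + n * c ≤ u n := by
    intro n
    induction n with
    | zero => simp
    | succ k ih => push_cast; linarith [h k]
  exact tendsto_atTop_mono hlin
    (tendsto_atTop_add_const_left _ _ (tendsto_natCast_atTop_atTop.atTop_mul_const hc))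

theorem segment_endpoint_properties_general
    (α : ℕ → ℝ)
    (hα_pos : ∀ n, 0 < α n)
    (hα_div : Tendsto (fun n => ∑ i ∈ Finset.range n, α i) atTop atTop)
    (hα_to0 : Tendsto α atTop (nhds 0))
    (t : ℕ → ℝ) (ht : ∀ n, t n = ∑ i ∈ Finset.range n, α i)
    (m : ℝ → ℕ)
    (hm_le : ∀ s : ℝ, 0 ≤ s → t (m s) ≤ s)
    (hm_max : ∀ s : ℝ, 0 ≤ s → ∀ i : ℕ, t i ≤ s → i ≤ m s)
    (T : ℝ) (hT : 0 < T)
    (Tseq : ℕ → ℝ) (hTseq0 : Tseq 0 = 0)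
    (hTseq : ∀ n, Tseq (n + 1) = t (m (Tseq n + T) + 1))
 :
    (∀ n : ℕ, T ≤ Tseq (n + 1) - Tseq n) ∧
    Tendsto (fun n => Tseq (n + 1) - Tseq n) atTop (nhds T) ∧
    (∀ τ : ℝ, 0 < τ → ∀ t₁ t₂ : ℝ, -τ ≤ t₁ → t₁ ≤ t₂ → t₂ ≤ τ →
      Tendsto (fun n => ∑ i ∈ Finset.Ico (m (t n + t₁)) (m (t n + t₂)), α i)
        atTop (nhds (t₂ - t₁))) := by
  have hinc : Tendsto (fun k => t (k + 1) - t k) atTop (𝓝 0) := by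
    simpa only [ht, Finset.sum_range_succ_sub_sum] using hα_to0
  have ht_top : Tendsto t atTop atTop := hα_div.congr fun n => (ht n).symm
  have hTseq_nonneg : ∀ n, 0 ≤ Tseq n
    | 0 => hTseq0.ge
    | n + 1 => (hTseq n).trans_ge (ht _ ▸ Finset.sum_nonneg fun i _ => (hα_pos i).le)
  have hstep : ∀ n, Tseq (n + 1) - Tseq n = T + (t (m (Tseq n + T) + 1) - (Tseq n + T)) :=
    fun n => by rw [hTseq n]; ring
  have hgap : ∀ n, T ≤ Tseq (n + 1) - Tseq n := fun n => by
    linarith [hstep n, lt_succ_lastIndex hm_max (add_nonneg (hTseq_nonneg n) hT.le)]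
  have hTseq_top : Tendsto Tseq atTop atTop :=
    tendsto_atTop_of_add_le_succ hT fun n => by linarith [hgap n]
  refine ⟨hgap, ?_, fun τ _ t₁ t₂ _ h₁₂ _ => ?_⟩
  · simpa [hstep] using ((tendsto_nextGridPoint_sub hm_le hm_max hinc).comp
      (tendsto_atTop_add_const_right _ T hTseq_top)).const_add T
  · have herr := fun c => (tendsto_sub_lastGridPoint hm_le hm_max hinc).comp
      (tendsto_atTop_add_const_right _ c ht_top)
    refine (((herr t₁).sub (herr t₂)).const_add (t₂ - t₁)).congr' ?_ |>.trans (by simp)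
    filter_upwards [ht_top.eventually_ge_atTop (-t₁)] with n hn
    have hmono := lastIndex_mono hm_le hm_max (by linarith : 0 ≤ t n + t₁)
      (by linarith : t n + t₁ ≤ t n + t₂)
    simp only [Function.comp_apply, Finset.sum_Ico_eq_sub _ hmono, ← ht]
    ring

theorem segment_endpoint_properties
    (α : ℕ → ℝ)
    (hα_pos : ∀ n, 0 < α n)
    (hα_anti : ∀ n, α (n + 1) ≤ α n)
    (hα_div : Tendsto (fun n => ∑ i ∈ Finset.range n, α i) atTop atTop)
    (hα_to0 : Tendsto α atTop (nhds 0))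
    (t : ℕ → ℝ) (ht : ∀ n, t n = ∑ i ∈ Finset.range n, α i)
    (m : ℝ → ℕ)
    (hm_le : ∀ s : ℝ, 0 ≤ s → t (m s) ≤ s)
    (hm_max : ∀ s : ℝ, 0 ≤ s → ∀ i : ℕ, t i ≤ s → i ≤ m s)
    (hm_neg : ∀ s : ℝ, s < 0 → m s = 0)
    (T : ℝ) (hT : 0 < T)
    (Tseq : ℕ → ℝ) (hTseq0 : Tseq 0 = 0)
    (hTseq : ∀ n, Tseq (n + 1) = t (m (Tseq n + T) + 1))
 :
    (∀ n : ℕ, T ≤ Tseq (n + 1) - Tseq n) ∧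
    Tendsto (fun n => Tseq (n + 1) - Tseq n) atTop (nhds T) ∧
    (∀ τ : ℝ, 0 < τ → ∀ t₁ t₂ : ℝ, -τ ≤ t₁ → t₁ ≤ t₂ → t₂ ≤ τ →
      Tendsto (fun n => ∑ i ∈ Finset.Ico (m (t n + t₁)) (m (t n + t₂)), α i)
        atTop (nhds (t₂ - t₁))) :=
  segment_endpoint_properties_general α hα_pos hα_div hα_to0 t ht m hm_le hm_max T hT Tseq hTseq0
    hTseq
end

section
/- Arzelà–Ascoli theorem in the extended sense on [0, T). Let K ≥ 1 and let (g_n)_{n≥0}, with g_n : [0, T) → ℝ^K, be a sequence of functions that is equicontinuous in the extended sense. Then there exist a continuous function g : [0, T) → ℝ^K and a strictly increasing sequence of indices (n_k) such that g_{n_k} converges to g uniformly on [0, T). -/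
/-!
Chaining steps of length `δ` inside `[0, T)` turns the bound at `0` into a bound at every point
for a tail of the sequence. On the countable union of finite `1/(k+1)`-nets of `[0, T)` a
subsequence converges pointwise, since a countable product of compact metric spaces is
sequentially compact; the asymptotic equicontinuity makes that subsequence uniformly Cauchy on
`[0, T)`, and passing to the limit in the equicontinuity estimate shows that the limit is
uniformly continuous.
-/

open Filter Bornology Metric Set Topology

section

variable {α β : Type*} [PseudoMetricSpace α] [PseudoMetricSpace β]

/-- The paper's "equicontinuity in the extended sense": uniform equicontinuity that only has to
hold, at each scale `ε`, for a tail of the sequence. -/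
def AsymptoticallyUniformEquicontinuousOn (f : ℕ → α → β) (S : Set α) : Prop :=
  ∀ ε > 0, ∃ δ > 0, ∀ᶠ n in atTop, ∀ x ∈ S, ∀ y ∈ S, dist x y ≤ δ → dist (f n x) (f n y) ≤ ε

lemma isBounded_range_of_eventually_dist_le {u v : ℕ → β} {R : ℝ} (hv : IsBounded (range v))
    (huv : ∀ᶠ n in atTop, dist (u n) (v n) ≤ R) : IsBounded (range u) := by
  obtain ⟨N, hN⟩ := eventually_atTop.1 huv
  refine (((finite_Iio N).image u).isBounded.union (hv.cthickening (δ := R))).subset ?_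
  rintro _ ⟨n, rfl⟩
  rcases lt_or_ge n N with hn | hn
  · exact Or.inl (mem_image_of_mem u hn)
  · exact Or.inr (mem_cthickening_of_dist_le _ _ _ _ (mem_range_self n) (hN n hn))

theorem tendsto_subseq_pi_of_isBounded {ι : Type*} [Countable ι] [ProperSpace β] {u : ℕ → ι → β}
    (hu : ∀ i, IsBounded (range fun n => u n i)) :
    ∃ y : ι → β, ∃ φ : ℕ → ℕ, StrictMono φ ∧ Tendsto (u ∘ φ) atTop (𝓝 y) := by
  obtain ⟨y, -, φ, hφ, hy⟩ := (isCompact_univ_pi fun i => (hu i).isCompact_closure).tendsto_subseq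
    (x := u) fun n i _ => subset_closure (mem_range_self n)
  exact ⟨y, φ, hφ, hy⟩

namespace AsymptoticallyUniformEquicontinuousOn

variable {f : ℕ → α → β} {S : Set α}

lemma comp_tendsto (hf : AsymptoticallyUniformEquicontinuousOn f S) {φ : ℕ → ℕ}
    (hφ : Tendsto φ atTop atTop) : AsymptoticallyUniformEquicontinuousOn (fun k => f (φ k)) S :=
  fun ε hε => (hf ε hε).imp fun _ ⟨hδ, hN⟩ => ⟨hδ, hφ.eventually hN⟩

lemma uniformContinuousOn_of_tendsto (hf : AsymptoticallyUniformEquicontinuousOn f S) {g : α → β}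
    (hg : ∀ x ∈ S, Tendsto (fun n => f n x) atTop (𝓝 (g x))) : UniformContinuousOn g S := by
  refine uniformContinuousOn_iff_le.2 fun ε hε => ?_
  obtain ⟨δ, hδ, hN⟩ := hf ε hε
  refine ⟨δ, hδ, fun x hx y hy hxy => le_of_tendsto ((hg x hx).dist (hg y hy)) ?_⟩
  filter_upwards [hN] with n hn using hn x hx y hy hxy

lemma uniformCauchySeqOn (hf : AsymptoticallyUniformEquicontinuousOn f S)
    (hnet : ∀ δ > 0, ∃ t ⊆ S, t.Finite ∧ S ⊆ ⋃ y ∈ t, ball y δ ∧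
      ∀ y ∈ t, CauchySeq fun n => f n y) :
    UniformCauchySeqOn f atTop S := by
  intro u hu
  obtain ⟨ε, hε, hεu⟩ := mem_uniformity_dist.1 hu
  obtain ⟨δ, hδ, hN⟩ := hf (ε / 4) (by positivity)
  obtain ⟨t, htS, htfin, hSt, htc⟩ := hnet δ hδ
  have hnet_close : ∀ᶠ p in atTop ×ˢ atTop, ∀ y ∈ t, dist (f p.1 y) (f p.2 y) < ε / 4 := by
    rw [prod_atTop_atTop_eq]
    exact htfin.eventually_all.2 fun y hy =>
      (htc y hy).tendsto_uniformity.eventually (dist_mem_uniformity (by positivity))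
  filter_upwards [hnet_close, hN.prod_inl atTop, hN.prod_inr atTop] with p hp hp₁ hp₂ x hx
  obtain ⟨y, hy, hxy⟩ := mem_iUnion₂.1 (hSt hx)
  have hxy : dist x y ≤ δ := (mem_ball.1 hxy).le
  refine hεu ?_
  calc dist (f p.1 x) (f p.2 x)
      ≤ dist (f p.1 x) (f p.1 y) + dist (f p.1 y) (f p.2 y) + dist (f p.2 y) (f p.2 x) :=
        dist_triangle4 _ _ _ _
    _ < ε := by
        linarith [hp₁ x hx y (htS hy) hxy, hp y hy, hp₂ y (htS hy) x hx (dist_comm x y ▸ hxy)]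

theorem exists_subseq_tendstoUniformlyOn [ProperSpace β]
    (hf : AsymptoticallyUniformEquicontinuousOn f S) (hS : TotallyBounded S)
    (hbdd : ∀ x ∈ S, IsBounded (range fun n => f n x)) :
    ∃ g : α → β, ∃ φ : ℕ → ℕ, StrictMono φ ∧
      TendstoUniformlyOn (fun k => f (φ k)) g atTop S := by
  have hnets := fun k : ℕ =>
    finite_approx_of_totallyBounded hS (1 / ((k : ℝ) + 1)) (by positivity)
  choose t htS htfin hcover using hnets
  have : Countable (⋃ k, t k) := (countable_iUnion fun k => (htfin k).countable).to_subtype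
  obtain ⟨y, φ, hφ, hy⟩ := tendsto_subseq_pi_of_isBounded (u := fun n (x : ⋃ k, t k) => f n x)
    fun x => hbdd x (iUnion_subset htS x.2)
  have hcauchy : UniformCauchySeqOn (fun k => f (φ k)) atTop S := by
    refine (hf.comp_tendsto hφ.tendsto_atTop).uniformCauchySeqOn fun δ hδ => ?_
    obtain ⟨k, hk⟩ := exists_nat_one_div_lt hδ
    refine ⟨t k, htS k, htfin k, (hcover k).trans (iUnion₂_mono fun x _ => ball_subset_ball hk.le),
      fun x hx => ?_⟩
    exact (tendsto_pi_nhds.1 hy ⟨x, mem_iUnion.2 ⟨k, hx⟩⟩).cauchySeq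
  -- `β` may be empty, so `choose!` is not available; off `S` the limit is set to `f 0 x`.
  have hlim : ∀ x, ∃ z, x ∈ S → Tendsto (fun k => f (φ k) x) atTop (𝓝 z) := fun x => by
    by_cases hx : x ∈ S
    · exact (cauchySeq_tendsto_of_complete (hcauchy.cauchySeq hx)).imp fun _ h _ => h
    · exact ⟨f 0 x, fun h => (hx h).elim⟩
  choose g hg using hlim
  exact ⟨g, φ, hφ, hcauchy.tendstoUniformlyOn_of_tendsto hg⟩

end AsymptoticallyUniformEquicontinuousOn

end

section Real

variable {β : Type*} [PseudoMetricSpace β]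

lemma dist_le_mul_of_ordConnected {f : ℝ → β} {S : Set ℝ} (hS : S.OrdConnected) {δ ε : ℝ}
    (hδ : 0 ≤ δ) (hf : ∀ x ∈ S, ∀ y ∈ S, dist x y ≤ δ → dist (f x) (f y) ≤ ε) (m : ℕ)
    {x y : ℝ} (hx : x ∈ S) (hy : y ∈ S) (hxy : dist x y ≤ m * δ) :
    dist (f x) (f y) ≤ m * ε := by
  wlog hle : x ≤ y generalizing x y
  · rw [dist_comm] at hxy ⊢
    exact this hy hx hxy (le_of_not_ge hle)
  rw [Real.dist_eq, abs_sub_comm, abs_of_nonneg (sub_nonneg.2 hle)] at hxy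
  induction m generalizing y with
  | zero => simp [le_antisymm (by simpa using hxy) hle]
  | succ m ih =>
    push_cast at hxy
    set z := max x (y - δ)
    have hxz : x ≤ z := le_max_left _ _
    have hyz : y - δ ≤ z := le_max_right _ _
    have hzy : z ≤ y := max_le hle (by linarith)
    have hz : z ∈ S := hS.out hx hy ⟨hxz, hzy⟩
    have hzx : z - x ≤ m * δ := by
      rw [sub_le_iff_le_add']
      exact max_le (le_add_of_nonneg_right (by positivity)) (by linarith)
    have hxz_dist : dist (f x) (f z) ≤ m * ε := ih hz hzx hxz
    have hzy_dist : dist (f z) (f y) ≤ ε :=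
      hf z hz y hy (by rw [Real.dist_eq, abs_sub_le_iff]; constructor <;> linarith)
    calc dist (f x) (f y) ≤ dist (f x) (f z) + dist (f z) (f y) := dist_triangle _ _ _
      _ ≤ (m + 1 : ℕ) * ε := by push_cast; linarith

variable {f : ℕ → ℝ → β} {S : Set ℝ}

lemma asymptoticallyUniformEquicontinuousOn_of_le
    (hf : ∀ ε > 0, ∃ δ > 0, ∀ᶠ n in atTop, ∀ x ∈ S, ∀ y ∈ S, x ≤ y → y - x ≤ δ →
      dist (f n x) (f n y) ≤ ε) :
    AsymptoticallyUniformEquicontinuousOn f S := by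
  refine fun ε hε => (hf ε hε).imp fun δ ⟨hδ, hN⟩ => ⟨hδ, hN.mono fun n hn x hx y hy hxy => ?_⟩
  rw [Real.dist_eq] at hxy
  rcases le_total x y with hle | hle
  · exact hn x hx y hy hle (by rw [abs_sub_comm] at hxy; exact (le_abs_self _).trans hxy)
  · rw [dist_comm]
    exact hn y hy x hx hle ((le_abs_self _).trans hxy)

lemma AsymptoticallyUniformEquicontinuousOn.isBounded_range
    (hf : AsymptoticallyUniformEquicontinuousOn f S) (hS : S.OrdConnected) {a : ℝ} (ha : a ∈ S)
    (hbdd : IsBounded (range fun n => f n a)) {x : ℝ} (hx : x ∈ S) :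
    IsBounded (range fun n => f n x) := by
  obtain ⟨δ, hδ, hN⟩ := hf 1 one_pos
  set m := ⌈dist x a / δ⌉₊
  have hm : dist x a ≤ m * δ := (div_le_iff₀ hδ).1 (Nat.le_ceil _)
  refine isBounded_range_of_eventually_dist_le hbdd (R := m) ?_
  filter_upwards [hN] with n hn
  simpa using dist_le_mul_of_ordConnected hS hδ.le hn m hx ha hm

end Real

theorem arzela_ascoli_extended_sense_general
    {E : Type*} [NormedAddCommGroup E] [NormedSpace ℝ E] [FiniteDimensional ℝ E]
    (T : ℝ)
    (g : ℕ → ℝ → E)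
    (hbound : ∃ C : ℝ, ∀ n : ℕ, ‖g n 0‖ ≤ C)
    (hequi : ∀ ε : ℝ, 0 < ε → ∃ δ : ℝ, 0 < δ ∧ ∃ N : ℕ, ∀ n ≥ N,
      ∀ t₁ t₂ : ℝ, 0 ≤ t₁ → t₁ ≤ t₂ → t₂ < T → t₂ - t₁ ≤ δ → ‖g n t₁ - g n t₂‖ ≤ ε) :
    ∃ glim : ℝ → E, ContinuousOn glim (Set.Ico 0 T) ∧
      ∃ φ : ℕ → ℕ, StrictMono φ ∧
        TendstoUniformlyOn (fun k => g (φ k)) glim atTop (Set.Ico 0 T) := by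
  obtain ⟨C, hC⟩ := hbound
  have hg : AsymptoticallyUniformEquicontinuousOn g (Ico 0 T) :=
    asymptoticallyUniformEquicontinuousOn_of_le fun ε hε =>
      (hequi ε hε).imp fun δ ⟨hδ, N, hN⟩ => ⟨hδ, eventually_atTop.2 ⟨N,
        fun n hn x hx y hy hxy hd => (dist_eq_norm _ _).trans_le (hN n hn x y hx.1 hxy hy.2 hd)⟩⟩
  have hbdd : ∀ t ∈ Ico 0 T, IsBounded (range fun n => g n t) := fun t ht =>
    hg.isBounded_range ordConnected_Ico (left_mem_Ico.2 (ht.1.trans_lt ht.2))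
      (isBounded_iff_forall_norm_le.2 ⟨C, forall_mem_range.2 hC⟩) ht
  obtain ⟨glim, φ, hφ, hlim⟩ := hg.exists_subseq_tendstoUniformlyOn (totallyBounded_Ico 0 T) hbdd
  have hcont : UniformContinuousOn glim (Ico 0 T) :=
    (hg.comp_tendsto hφ.tendsto_atTop).uniformContinuousOn_of_tendsto fun t ht => hlim.tendsto_at ht
  exact ⟨glim, hcont.continuousOn, φ, hφ, hlim⟩

theorem arzela_ascoli_extended_sense
    {E : Type*} [NormedAddCommGroup E] [NormedSpace ℝ E] [FiniteDimensional ℝ E]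
    [Nontrivial E]
    (T : ℝ) (hT : 0 < T)
    (g : ℕ → ℝ → E)
    (hbound : ∃ C : ℝ, ∀ n : ℕ, ‖g n 0‖ ≤ C)
    (hequi : ∀ ε : ℝ, 0 < ε → ∃ δ : ℝ, 0 < δ ∧ ∃ N : ℕ, ∀ n ≥ N,
      ∀ t₁ t₂ : ℝ, 0 ≤ t₁ → t₁ ≤ t₂ → t₂ < T → t₂ - t₁ ≤ δ → ‖g n t₁ - g n t₂‖ ≤ ε) :
    ∃ glim : ℝ → E, ContinuousOn glim (Set.Ico 0 T) ∧
      ∃ φ : ℕ → ℕ, StrictMono φ ∧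
        TendstoUniformlyOn (fun k => g (φ k)) glim atTop (Set.Ico 0 T) :=
  arzela_ascoli_extended_sense_general T g hbound hequi
end

section
/- Uniform-in-scale window bounds at the origin (Lemma 'bounded-h0'). Suppose there is a vector h₀ ∈ ℝ^d such that for every τ > 0, limsup_{n→∞} sup_{−τ ≤ t₁ ≤ t₂ ≤ τ} ‖∑_{i=m(t(n)+t₁)}^{m(t(n)+t₂)−1} α(i)·(H(0, Y_{i+1}) − h₀)‖ = 0. Then (note H_c(0, y) = H(0, y)/c): (a) sup_{c≥1} limsup_{n→∞} sup_{0 ≤ t₁ ≤ t₂ ≤ T_{n+1}−T_n} ‖∑_{i=m(T_n+t₁)}^{m(T_n+t₂)−1} α(i)·(H_c(0, Y_{i+1}) − h₀/c)‖ = 0; (b) sup_{c≥1} sup_n sup_{0 ≤ t₁ ≤ t₂ ≤ T_{n+1}−T_n} ‖∑_{i=m(T_n+t₁)}^{m(T_n+t₂)−1} α(i)·H_c(0, Y_{i+1})‖ < ∞; and (c) lim_{δ→0⁺} sup_{c≥1} limsup_{n→∞} sup { ‖∑_{i=m(T_n+t₁)}^{m(T_n+t₂)−1} α(i)·H_c(0,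 Y_{i+1})‖ : 0 ≤ t₁ ≤ t₂ ≤ T_{n+1}−T_n, t₂ − t₁ ≤ δ } = 0. -/
open Filter

theorem bounded_h0_window_bounds
    {E : Type*} [NormedAddCommGroup E] [NormedSpace ℝ E] [FiniteDimensional ℝ E]
    [Nontrivial E]
    {𝓨 : Type*}
    (α : ℕ → ℝ)
    (hα_pos : ∀ n, 0 < α n)
    (hα_anti : ∀ n, α (n + 1) ≤ α n)
    (hα_div : Tendsto (fun n => ∑ i ∈ Finset.range n, α i) atTop atTop)
    (hα_to0 : Tendsto α atTop (nhds 0))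
    (t : ℕ → ℝ) (ht : ∀ n, t n = ∑ i ∈ Finset.range n, α i)
    (m : ℝ → ℕ)
    (hm_le : ∀ s : ℝ, 0 ≤ s → t (m s) ≤ s)
    (hm_max : ∀ s : ℝ, 0 ≤ s → ∀ i : ℕ, t i ≤ s → i ≤ m s)
    (hm_neg : ∀ s : ℝ, s < 0 → m s = 0)
    (T : ℝ) (hT : 0 < T)
    (Tseq : ℕ → ℝ) (hTseq0 : Tseq 0 = 0)
    (hTseq : ∀ n, Tseq (n + 1) = t (m (Tseq n + T) + 1))
    (Y : ℕ → 𝓨) (H : E → 𝓨 → E)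
    (h0 : E)
    (hrate0 : ∀ τ : ℝ, 0 < τ → ∀ ε : ℝ, 0 < ε → ∃ N : ℕ, ∀ n ≥ N,
      ∀ t₁ t₂ : ℝ, -τ ≤ t₁ → t₁ ≤ t₂ → t₂ ≤ τ →
        ‖∑ i ∈ Finset.Ico (m (t n + t₁)) (m (t n + t₂)),
            α i • (H 0 (Y (i + 1)) - h0)‖ ≤ ε) :
    (∀ c : ℝ, 1 ≤ c → ∀ ε : ℝ, 0 < ε → ∃ N : ℕ, ∀ n ≥ N,
      ∀ t₁ t₂ : ℝ, 0 ≤ t₁ → t₁ ≤ t₂ → t₂ ≤ Tseq (n + 1) - Tseq n →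
        ‖∑ i ∈ Finset.Ico (m (Tseq n + t₁)) (m (Tseq n + t₂)),
            α i • (c⁻¹ • H 0 (Y (i + 1)) - c⁻¹ • h0)‖ ≤ ε) ∧
    (∃ C : ℝ, ∀ c : ℝ, 1 ≤ c → ∀ n : ℕ, ∀ t₁ t₂ : ℝ,
      0 ≤ t₁ → t₁ ≤ t₂ → t₂ ≤ Tseq (n + 1) - Tseq n →
        ‖∑ i ∈ Finset.Ico (m (Tseq n + t₁)) (m (Tseq n + t₂)),
            α i • (c⁻¹ • H 0 (Y (i + 1)))‖ ≤ C) ∧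
    (∀ ε : ℝ, 0 < ε → ∃ δ : ℝ, 0 < δ ∧ ∀ c : ℝ, 1 ≤ c → ∃ N : ℕ, ∀ n ≥ N,
      ∀ t₁ t₂ : ℝ, 0 ≤ t₁ → t₁ ≤ t₂ → t₂ ≤ Tseq (n + 1) - Tseq n → t₂ - t₁ ≤ δ →
        ‖∑ i ∈ Finset.Ico (m (Tseq n + t₁)) (m (Tseq n + t₂)),
            α i • (c⁻¹ • H 0 (Y (i + 1)))‖ ≤ ε) := by

  -- basic facts about t
  have ht0 : t 0 = 0 := by simp [ht]
  have htsucc : ∀ n, t (n + 1) = t n + α n := by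
    intro n; simp [ht, Finset.sum_range_succ]
  have ht_nonneg : ∀ n, 0 ≤ t n := by
    intro n; rw [ht]; exact Finset.sum_nonneg fun i _ => (hα_pos i).le
  have hαanti : Antitone α := antitone_nat_of_succ_le hα_anti
  have hm_gt : ∀ s : ℝ, 0 ≤ s → s < t (m s + 1) := by
    intro s hs
    by_contra h
    push_neg at h
    have := hm_max s hs _ h
    omega
  have hsumIco : ∀ a b : ℕ, a ≤ b → ∑ i ∈ Finset.Ico a b, α i = t b - t a := by
    intro a b hab
    rw [Finset.sum_Ico_eq_sub _ hab, ht, ht]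
  -- Tseq n is of the form t k with k ≥ n
  have hTk : ∀ n, ∃ k, Tseq n = t k ∧ n ≤ k := by
    intro n
    induction n with
    | zero => exact ⟨0, by rw [hTseq0, ht0], le_refl 0⟩
    | succ n ih =>
      obtain ⟨k, hk, hnk⟩ := ih
      refine ⟨m (Tseq n + T) + 1, hTseq n, ?_⟩
      have h1 : 0 ≤ Tseq n + T := by
        have h2 := ht_nonneg k; rw [← hk] at h2; linarith
      have h3 : k ≤ m (Tseq n + T) := hm_max _ h1 k (by rw [← hk]; linarith)
      omega
  have hTnonneg : ∀ n, 0 ≤ Tseq n := fun n => by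
    obtain ⟨k, hk, _⟩ := hTk n; rw [hk]; exact ht_nonneg k
  have hTstep : ∀ n, Tseq n ≤ Tseq (n + 1) := by
    intro n
    rw [hTseq]
    have h1 : 0 ≤ Tseq n + T := by have := hTnonneg n; linarith
    have h2 := hm_gt _ h1
    linarith
  have hTmono : Monotone Tseq := monotone_nat_of_le_succ hTstep
  have hwidth : ∀ n, Tseq (n + 1) - Tseq n ≤ T + α 0 := by
    intro n
    rw [hTseq n, htsucc]
    have h1 : 0 ≤ Tseq n + T := by have := hTnonneg n; linarith
    have h2 := hm_le _ h1
    have h3 : α (m (Tseq n + T)) ≤ α 0 := hαanti (Nat.zero_le _)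
    linarith
  -- bound on the sum of step sizes over a window
  have hsum_bound : ∀ n : ℕ, ∀ t₁ t₂ : ℝ, 0 ≤ t₁ → t₁ ≤ t₂ →
      ∑ i ∈ Finset.Ico (m (Tseq n + t₁)) (m (Tseq n + t₂)), α i
        ≤ t₂ - t₁ + α (m (Tseq n + t₁)) := by
    intro n t₁ t₂ h1 h12
    have hs1 : 0 ≤ Tseq n + t₁ := by have := hTnonneg n; linarith
    have hs2 : 0 ≤ Tseq n + t₂ := by linarith
    rcases le_or_gt (m (Tseq n + t₁)) (m (Tseq n + t₂)) with hab | hab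
    · rw [hsumIco _ _ hab]
      have hb : t (m (Tseq n + t₂)) ≤ Tseq n + t₂ := hm_le _ hs2
      have ha := hm_gt _ hs1
      rw [htsucc] at ha
      linarith
    · rw [Finset.Ico_eq_empty (by omega), Finset.sum_empty]
      have := hα_pos (m (Tseq n + t₁))
      linarith
  have hsum_nonneg : ∀ a b : ℕ, 0 ≤ ∑ i ∈ Finset.Ico a b, α i := fun a b =>
    Finset.sum_nonneg fun i _ => (hα_pos i).le
  -- core estimate: the centered sums over the Tseq-windows tend to 0
  have hcore : ∀ ε : ℝ, 0 < ε → ∃ N : ℕ, ∀ n ≥ N, ∀ t₁ t₂ : ℝ,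
      0 ≤ t₁ → t₁ ≤ t₂ → t₂ ≤ Tseq (n + 1) - Tseq n →
      ‖∑ i ∈ Finset.Ico (m (Tseq n + t₁)) (m (Tseq n + t₂)),
          α i • (H 0 (Y (i + 1)) - h0)‖ ≤ ε := by
    intro ε hε
    have hτ : (0:ℝ) < T + α 0 + 1 := by have := hα_pos 0; linarith
    obtain ⟨N, hN⟩ := hrate0 _ hτ ε hε
    refine ⟨N, fun n hn t₁ t₂ h1 h12 h2 => ?_⟩
    obtain ⟨k, hk, hnk⟩ := hTk n
    have hkN : k ≥ N := le_trans hn hnk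
    have key := hN k hkN t₁ t₂ (by linarith) h12 (by have := hwidth n; linarith)
    rw [hk]
    exact key
  -- splitting estimate
  have hsplit : ∀ c : ℝ, 1 ≤ c → ∀ a b : ℕ,
      ‖∑ i ∈ Finset.Ico a b, α i • (c⁻¹ • H 0 (Y (i + 1)))‖ ≤
        ‖∑ i ∈ Finset.Ico a b, α i • (H 0 (Y (i + 1)) - h0)‖ +
        (∑ i ∈ Finset.Ico a b, α i) * ‖h0‖ := by
    intro c hc a b
    have hc0 : (0:ℝ) < c := lt_of_lt_of_le one_pos hc
    have hci : c⁻¹ ≤ 1 := by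
      rw [inv_le_one_iff₀]; right; exact hc
    have hcinn : 0 ≤ c⁻¹ := by positivity
    have hrw : ∀ i ∈ Finset.Ico a b, α i • (c⁻¹ • H 0 (Y (i + 1)))
        = c⁻¹ • (α i • (H 0 (Y (i + 1)) - h0)) + c⁻¹ • (α i • h0) := by
      intro i _
      rw [smul_comm (α i) c⁻¹, ← smul_add]
      congr 1
      rw [smul_sub]
      abel
    rw [Finset.sum_congr rfl hrw, Finset.sum_add_distrib, ← Finset.smul_sum,
      ← Finset.smul_sum]
    have h2 : ‖∑ i ∈ Finset.Ico a b, α i • h0‖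
        ≤ (∑ i ∈ Finset.Ico a b, α i) * ‖h0‖ := by
      rw [← Finset.sum_smul, norm_smul, Real.norm_eq_abs,
        abs_of_nonneg (hsum_nonneg a b)]
    calc ‖c⁻¹ • (∑ i ∈ Finset.Ico a b, α i • (H 0 (Y (i + 1)) - h0))
            + c⁻¹ • (∑ i ∈ Finset.Ico a b, α i • h0)‖
        ≤ ‖c⁻¹ • (∑ i ∈ Finset.Ico a b, α i • (H 0 (Y (i + 1)) - h0))‖
            + ‖c⁻¹ • (∑ i ∈ Finset.Ico a b, α i • h0)‖ := norm_add_le _ _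
      _ ≤ ‖∑ i ∈ Finset.Ico a b, α i • (H 0 (Y (i + 1)) - h0)‖
            + (∑ i ∈ Finset.Ico a b, α i) * ‖h0‖ := by
          rw [norm_smul, norm_smul, Real.norm_eq_abs, abs_of_nonneg hcinn]
          have g1 : c⁻¹ * ‖∑ i ∈ Finset.Ico a b, α i • (H 0 (Y (i + 1)) - h0)‖
              ≤ ‖∑ i ∈ Finset.Ico a b, α i • (H 0 (Y (i + 1)) - h0)‖ := by
            nlinarith [norm_nonneg (∑ i ∈ Finset.Ico a b, α i • (H 0 (Y (i + 1)) - h0))]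
          have g2 : c⁻¹ * ‖∑ i ∈ Finset.Ico a b, α i • h0‖
              ≤ ‖∑ i ∈ Finset.Ico a b, α i • h0‖ := by
            nlinarith [norm_nonneg (∑ i ∈ Finset.Ico a b, α i • h0)]
          linarith
  refine ⟨?_, ?_, ?_⟩
  -- part (a)
  · intro c hc ε hε
    obtain ⟨N, hN⟩ := hcore ε hε
    refine ⟨N, fun n hn t₁ t₂ h1 h12 h2 => ?_⟩
    have key := hN n hn t₁ t₂ h1 h12 h2
    have hc0 : (0:ℝ) < c := lt_of_lt_of_le one_pos hc
    have hrw : ∀ i ∈ Finset.Ico (m (Tseq n + t₁)) (m (Tseq n + t₂)),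
        α i • (c⁻¹ • H 0 (Y (i + 1)) - c⁻¹ • h0)
          = c⁻¹ • (α i • (H 0 (Y (i + 1)) - h0)) := by
      intro i _
      rw [← smul_sub, smul_comm]
    rw [Finset.sum_congr rfl hrw, ← Finset.smul_sum, norm_smul,
      Real.norm_eq_abs, abs_of_pos (inv_pos.2 hc0)]
    have hci : c⁻¹ ≤ 1 := by rw [inv_le_one_iff₀]; right; exact hc
    nlinarith [norm_nonneg (∑ i ∈ Finset.Ico (m (Tseq n + t₁)) (m (Tseq n + t₂)),
      α i • (H 0 (Y (i + 1)) - h0)), inv_pos.2 hc0]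
  -- part (b)
  · obtain ⟨N, hN⟩ := hcore 1 one_pos
    set B := ∑ i ∈ Finset.range (m (Tseq N) + 1), α i * ‖H 0 (Y (i + 1)) - h0‖ with hB
    refine ⟨max 1 B + (T + α 0 + α 0) * ‖h0‖, ?_⟩
    intro c hc n t₁ t₂ h1 h12 h2
    have hdiff : ‖∑ i ∈ Finset.Ico (m (Tseq n + t₁)) (m (Tseq n + t₂)),
        α i • (H 0 (Y (i + 1)) - h0)‖ ≤ max 1 B := by
      rcases le_or_gt N n with hn | hn
      · exact le_trans (hN n hn t₁ t₂ h1 h12 h2) (le_max_left _ _)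
      · have hs2 : 0 ≤ Tseq n + t₂ := by have := hTnonneg n; linarith
        have hb : m (Tseq n + t₂) ≤ m (Tseq N) := by
          refine hm_max _ (hTnonneg N) _ ?_
          have g1 : t (m (Tseq n + t₂)) ≤ Tseq n + t₂ := hm_le _ hs2
          have g2 : Tseq (n + 1) ≤ Tseq N := hTmono hn
          linarith
        have hsub : Finset.Ico (m (Tseq n + t₁)) (m (Tseq n + t₂))
            ⊆ Finset.range (m (Tseq N) + 1) := by
          intro i hi
          simp only [Finset.mem_Ico] at hi
          simp only [Finset.mem_range]
          omega
        calc ‖∑ i ∈ Finset.Ico (m (Tseq n + t₁)) (m (Tseq n + t₂)),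
              α i • (H 0 (Y (i + 1)) - h0)‖
            ≤ ∑ i ∈ Finset.Ico (m (Tseq n + t₁)) (m (Tseq n + t₂)),
              ‖α i • (H 0 (Y (i + 1)) - h0)‖ := norm_sum_le _ _
          _ = ∑ i ∈ Finset.Ico (m (Tseq n + t₁)) (m (Tseq n + t₂)),
              α i * ‖H 0 (Y (i + 1)) - h0‖ := by
              refine Finset.sum_congr rfl fun i _ => ?_
              rw [norm_smul, Real.norm_eq_abs, abs_of_pos (hα_pos i)]
          _ ≤ B := Finset.sum_le_sum_of_subset_of_nonneg hsub
              (fun i _ _ => mul_nonneg (hα_pos i).le (norm_nonneg _))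
          _ ≤ max 1 B := le_max_right _ _
    have hsum := hsum_bound n t₁ t₂ h1 h12
    have hα0 : α (m (Tseq n + t₁)) ≤ α 0 := hαanti (Nat.zero_le _)
    have hw := hwidth n
    have hsp := hsplit c hc (m (Tseq n + t₁)) (m (Tseq n + t₂))
    have h5 : (∑ i ∈ Finset.Ico (m (Tseq n + t₁)) (m (Tseq n + t₂)), α i) * ‖h0‖
        ≤ (T + α 0 + α 0) * ‖h0‖ :=
      mul_le_mul_of_nonneg_right (by linarith) (norm_nonneg _)
    linarith
  -- part (c)
  · intro ε hε
    have hh1 : (0:ℝ) < ‖h0‖ + 1 := by positivity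
    set δ := ε / (4 * (‖h0‖ + 1)) with hδdef
    have hδ : 0 < δ := by positivity
    refine ⟨δ, hδ, ?_⟩
    intro c hc
    obtain ⟨N₁, hN₁⟩ := hcore (ε / 2) (by linarith)
    obtain ⟨N₂, hN₂⟩ := (Metric.tendsto_atTop.mp hα_to0) δ hδ
    refine ⟨max N₁ N₂, fun n hn t₁ t₂ h1 h12 h2 hδ12 => ?_⟩
    have hdiff := hN₁ n (le_trans (le_max_left _ _) hn) t₁ t₂ h1 h12 h2
    have hidx : n ≤ m (Tseq n + t₁) := by
      obtain ⟨k, hk, hnk⟩ := hTk n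
      have hk1 : k ≤ m (Tseq n + t₁) :=
        hm_max _ (by have := hTnonneg n; linarith) k (by rw [← hk]; linarith)
      omega
    have hαn : α (m (Tseq n + t₁)) ≤ δ := by
      have hgot := hN₂ (m (Tseq n + t₁))
        (le_trans (le_trans (le_max_right _ _) hn) hidx)
      rw [Real.dist_eq, sub_zero, abs_of_pos (hα_pos _)] at hgot
      linarith
    have hsum := hsum_bound n t₁ t₂ h1 h12
    have hsp := hsplit c hc (m (Tseq n + t₁)) (m (Tseq n + t₂))
    have h6 : (∑ i ∈ Finset.Ico (m (Tseq n + t₁)) (m (Tseq n + t₂)), α i) * ‖h0‖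
        ≤ 2 * δ * ‖h0‖ :=
      mul_le_mul_of_nonneg_right (by linarith) (norm_nonneg _)
    have h7 : δ * (‖h0‖ + 1) = ε / 4 := by
      rw [hδdef]; field_simp
    have h8 : 2 * δ * ‖h0‖ ≤ ε / 2 := by nlinarith [hδ.le]
    linarith
end

section
/- Per-segment growth bound for the interpolated iterates (Lemma 'bar x bounded'). Assume there is a constant C_H ≥ 0 such that (i) sup_n sup_{0 ≤ t₁ ≤ t₂ ≤ T_{n+1}−T_n} ‖∑_{i=m(T_n+t₁)}^{m(T_n+t₂)−1} α(i)·H(0, Y_{i+1})‖ ≤ C_H, and (ii) sup_n sup_{0 ≤ t₁ ≤ t₂ ≤ T_{n+1}−T_n} ∑_{i=m(T_n+t₁)}^{m(T_n+t₂)−1} α(i)·L(Y_{i+1}) ≤ C_H. Then for every n and every t ∈ [0, T_{n+1} − T_n], ‖x̄(T_n + t) − x̄(T_n)‖ ≤ (‖x̄(T_n)‖·C_H + C_H)·e^{C_H}; in particular ‖x̄(T_{n+1})‖ ≤ (‖x̄(T_n)‖·C_H + C_H)·e^{C_H} + ‖x̄(T_n)‖. -/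
open Filter

theorem per_segment_growth_bound
    {E : Type*} [NormedAddCommGroup E] [NormedSpace ℝ E] [FiniteDimensional ℝ E]
    [Nontrivial E]
    {𝓨 : Type*}
    (α : ℕ → ℝ)
    (hα_pos : ∀ n, 0 < α n)
    (hα_anti : ∀ n, α (n + 1) ≤ α n)
    (hα_div : Tendsto (fun n => ∑ i ∈ Finset.range n, α i) atTop atTop)
    (hα_to0 : Tendsto α atTop (nhds 0))
    (t : ℕ → ℝ) (ht : ∀ n, t n = ∑ i ∈ Finset.range n, α i)
    (m : ℝ → ℕ)
    (hm_le : ∀ s : ℝ, 0 ≤ s → t (m s) ≤ s)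
    (hm_max : ∀ s : ℝ, 0 ≤ s → ∀ i : ℕ, t i ≤ s → i ≤ m s)
    (hm_neg : ∀ s : ℝ, s < 0 → m s = 0)
    (T : ℝ) (hT : 0 < T)
    (Tseq : ℕ → ℝ) (hTseq0 : Tseq 0 = 0)
    (hTseq : ∀ n, Tseq (n + 1) = t (m (Tseq n + T) + 1))
    (Y : ℕ → 𝓨) (H : E → 𝓨 → E)
    (x : ℕ → E)
    (hx : ∀ n, x (n + 1) = x n + α n • H (x n) (Y (n + 1)))
    (L : 𝓨 → ℝ) (hL_nonneg : ∀ y, 0 ≤ L y)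
    (hH_lip : ∀ x₁ x₂ : E, ∀ y : 𝓨, ‖H x₁ y - H x₂ y‖ ≤ L y * ‖x₁ - x₂‖)
    (CH : ℝ) (hCH : 0 ≤ CH)
    (hH0_bound : ∀ n : ℕ, ∀ t₁ t₂ : ℝ, 0 ≤ t₁ → t₁ ≤ t₂ → t₂ ≤ Tseq (n + 1) - Tseq n →
      ‖∑ i ∈ Finset.Ico (m (Tseq n + t₁)) (m (Tseq n + t₂)),
          α i • H 0 (Y (i + 1))‖ ≤ CH)
    (hL_bound : ∀ n : ℕ, ∀ t₁ t₂ : ℝ, 0 ≤ t₁ → t₁ ≤ t₂ → t₂ ≤ Tseq (n + 1) - Tseq n →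
      ∑ i ∈ Finset.Ico (m (Tseq n + t₁)) (m (Tseq n + t₂)), α i * L (Y (i + 1)) ≤ CH) :
    (∀ n : ℕ, ∀ s : ℝ, 0 ≤ s → s ≤ Tseq (n + 1) - Tseq n →
      ‖x (m (Tseq n + s)) - x (m (Tseq n))‖ ≤
        (‖x (m (Tseq n))‖ * CH + CH) * Real.exp CH) ∧
    (∀ n : ℕ, ‖x (m (Tseq (n + 1)))‖ ≤
      (‖x (m (Tseq n))‖ * CH + CH) * Real.exp CH + ‖x (m (Tseq n))‖) := by
  -- basic facts about t and m
  have ht_mono : StrictMono t := by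
    apply strictMono_nat_of_lt_succ
    intro k
    rw [ht, ht, Finset.sum_range_succ]
    linarith [hα_pos k]
  have ht_nonneg : ∀ k, 0 ≤ t k := by
    intro k; rw [ht]
    exact Finset.sum_nonneg fun i _ => (hα_pos i).le
  have hm_t : ∀ k, m (t k) = k := by
    intro k
    have h1 : k ≤ m (t k) := hm_max _ (ht_nonneg k) k le_rfl
    have h2 : t (m (t k)) ≤ t k := hm_le _ (ht_nonneg k)
    have h3 : m (t k) ≤ k := ht_mono.le_iff_le.mp h2
    omega
  have hTseq_nonneg : ∀ n, 0 ≤ Tseq n := by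
    intro n
    cases n with
    | zero => simp [hTseq0]
    | succ k => rw [hTseq]; exact ht_nonneg _
  have hm_mono : ∀ s₁ s₂ : ℝ, 0 ≤ s₁ → s₁ ≤ s₂ → m s₁ ≤ m s₂ :=
    fun s₁ s₂ h0 h12 => hm_max s₂ (h0.trans h12) _ ((hm_le s₁ h0).trans h12)
  have hs_lt : ∀ s : ℝ, 0 ≤ s → s < t (m s + 1) := by
    intro s hs
    by_contra h
    push_neg at h
    have := hm_max s hs _ h
    omega
  have hTseq_diff : ∀ n, 0 ≤ Tseq (n + 1) - Tseq n := by
    intro n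
    have h0 : (0:ℝ) ≤ Tseq n + T := by linarith [hTseq_nonneg n, hT]
    have h1 := hs_lt (Tseq n + T) h0
    rw [hTseq]
    linarith
  -- main per-segment claim
  have key : ∀ n : ℕ, ∀ s : ℝ, 0 ≤ s → s ≤ Tseq (n + 1) - Tseq n →
      ‖x (m (Tseq n + s)) - x (m (Tseq n))‖ ≤
        (‖x (m (Tseq n))‖ * CH + CH) * Real.exp CH := by
    intro n s hs0 hs1
    set a := m (Tseq n) with ha
    set K := m (Tseq n + s) with hK
    have haK : a ≤ K := hm_mono _ _ (hTseq_nonneg n) (by linarith)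
    -- partial sums are bounded
    have hsum_bounds : ∀ k, a ≤ k → k ≤ K →
        ‖∑ i ∈ Finset.Ico a k, α i • H 0 (Y (i + 1))‖ ≤ CH ∧
        ∑ i ∈ Finset.Ico a k, α i * L (Y (i + 1)) ≤ CH := by
      intro k hak hkK
      rcases eq_or_lt_of_le hak with rfl | hlt
      · simp [hCH]
      · have h1 : Tseq n < t k := by
          have hA := hs_lt (Tseq n) (hTseq_nonneg n)
          have hAB : t (a + 1) ≤ t k := ht_mono.monotone (by omega)
          linarith
      
        have ht₂le : t k - Tseq n ≤ s := by
          have h2 : t K ≤ Tseq n + s := hm_le _ (by linarith [hTseq_nonneg n])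
          have h3 : t k ≤ t K := ht_mono.monotone hkK
          linarith
        have hm2 : m (Tseq n + (t k - Tseq n)) = k := by
          rw [show Tseq n + (t k - Tseq n) = t k by ring, hm_t]
        have hm1 : m (Tseq n + 0) = a := by rw [add_zero]
        constructor
        · have := hH0_bound n 0 (t k - Tseq n) le_rfl (by linarith) (by linarith)
          rwa [hm1, hm2] at this
        · have := hL_bound n 0 (t k - Tseq n) le_rfl (by linarith) (by linarith)
          rwa [hm1, hm2] at this
    -- telescoping
    have hx_tel : ∀ k, a ≤ k → x k - x a = ∑ i ∈ Finset.Ico a k, α i • H (x i) (Y (i + 1)) := by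
      intro k hak
      induction k with
      | zero =>
        have : a = 0 := by omega
        simp [this]
      | succ k ih =>
        rcases Nat.lt_or_ge k a with h | h
        · have : a = k + 1 := by omega
          simp [this]
        · rw [Finset.sum_Ico_succ_top h, ← ih h, hx k]
          abel
    set c : ℕ → ℝ := fun i => α i * L (Y (i + 1)) with hc
    have hc_nonneg : ∀ i, 0 ≤ c i := fun i => mul_nonneg (hα_pos i).le (hL_nonneg _)
    set u : ℕ → ℝ := fun k => ‖x k - x a‖ with hu
    set B : ℝ := ‖x a‖ * CH + CH with hB
    have hB_nonneg : 0 ≤ B := by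
      have := norm_nonneg (x a)
      have := mul_nonneg this hCH
      simp only [hB]; linarith
    -- base inequality
    have hbase : ∀ k, a ≤ k → k ≤ K → u k ≤ B + ∑ i ∈ Finset.Ico a k, c i * u i := by
      intro k hak hkK
      obtain ⟨hb1, hb2⟩ := hsum_bounds k hak hkK
      have hsplit : ∑ i ∈ Finset.Ico a k, α i • H (x i) (Y (i + 1)) =
          (∑ i ∈ Finset.Ico a k, α i • H 0 (Y (i + 1))) +
          (∑ i ∈ Finset.Ico a k, α i • (H (x i) (Y (i + 1)) - H 0 (Y (i + 1)))) := by
        rw [← Finset.sum_add_distrib]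
        apply Finset.sum_congr rfl
        intro i _
        rw [smul_sub]
        abel
      have hstep : u k ≤ CH + ∑ i ∈ Finset.Ico a k, c i * (‖x a‖ + u i) := by
        calc u k = ‖∑ i ∈ Finset.Ico a k, α i • H (x i) (Y (i + 1))‖ := by
              rw [hu]; simp only []; rw [hx_tel k hak]
          _ ≤ ‖∑ i ∈ Finset.Ico a k, α i • H 0 (Y (i + 1))‖ +
              ‖∑ i ∈ Finset.Ico a k, α i • (H (x i) (Y (i + 1)) - H 0 (Y (i + 1)))‖ := by
              rw [hsplit]; exact norm_add_le _ _
          _ ≤ CH + ∑ i ∈ Finset.Ico a k, c i * (‖x a‖ + u i) := by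
              apply add_le_add hb1
              calc ‖∑ i ∈ Finset.Ico a k, α i • (H (x i) (Y (i + 1)) - H 0 (Y (i + 1)))‖
                  ≤ ∑ i ∈ Finset.Ico a k, ‖α i • (H (x i) (Y (i + 1)) - H 0 (Y (i + 1)))‖ :=
                    norm_sum_le _ _
                _ ≤ ∑ i ∈ Finset.Ico a k, c i * (‖x a‖ + u i) := by
                    apply Finset.sum_le_sum
                    intro i _
                    rw [norm_smul, Real.norm_eq_abs, abs_of_pos (hα_pos i)]
                    have hlip : ‖H (x i) (Y (i + 1)) - H 0 (Y (i + 1))‖ ≤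
                        L (Y (i + 1)) * ‖x i‖ := by
                      have := hH_lip (x i) 0 (Y (i + 1))
                      rwa [sub_zero] at this
                    have hxi : ‖x i‖ ≤ ‖x a‖ + u i := by
                      have : x i = x a + (x i - x a) := by abel
                      rw [this]
                      exact norm_add_le _ _
                    have hLnn := hL_nonneg (Y (i + 1))
                    calc α i * ‖H (x i) (Y (i + 1)) - H 0 (Y (i + 1))‖
                        ≤ α i * (L (Y (i + 1)) * ‖x i‖) := by
                          apply mul_le_mul_of_nonneg_left hlip (hα_pos i).le
                      _ ≤ α i * (L (Y (i + 1)) * (‖x a‖ + u i)) := by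
                          apply mul_le_mul_of_nonneg_left _ (hα_pos i).le
                          exact mul_le_mul_of_nonneg_left hxi hLnn
                      _ = c i * (‖x a‖ + u i) := by rw [hc]; ring
      have hfin : ∑ i ∈ Finset.Ico a k, c i * (‖x a‖ + u i) =
          ‖x a‖ * (∑ i ∈ Finset.Ico a k, c i) + ∑ i ∈ Finset.Ico a k, c i * u i := by
        rw [Finset.mul_sum, ← Finset.sum_add_distrib]
        apply Finset.sum_congr rfl
        intro i _
        ring
      have hxanorm : ‖x a‖ * (∑ i ∈ Finset.Ico a k, c i) ≤ ‖x a‖ * CH :=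
        mul_le_mul_of_nonneg_left hb2 (norm_nonneg _)
      rw [hB]
      calc u k ≤ CH + ∑ i ∈ Finset.Ico a k, c i * (‖x a‖ + u i) := hstep
        _ = CH + ‖x a‖ * (∑ i ∈ Finset.Ico a k, c i) + ∑ i ∈ Finset.Ico a k, c i * u i := by
            rw [hfin]; ring
        _ ≤ ‖x a‖ * CH + CH + ∑ i ∈ Finset.Ico a k, c i * u i := by linarith
    -- product identity
    have hprod_id : ∀ k, a ≤ k → ∏ i ∈ Finset.Ico a k, (1 + c i) =
        1 + ∑ i ∈ Finset.Ico a k, c i * ∏ j ∈ Finset.Ico a i, (1 + c j) := by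
      intro k hak
      induction k with
      | zero =>
        have : a = 0 := by omega
        simp [this]
      | succ k ih =>
        rcases Nat.lt_or_ge k a with h | h
        · have : a = k + 1 := by omega
          simp [this]
        · rw [Finset.prod_Ico_succ_top h, Finset.sum_Ico_succ_top h, ih h]
          ring
    -- Gronwall
    have hgron : ∀ k, a ≤ k → k ≤ K → u k ≤ B * ∏ i ∈ Finset.Ico a k, (1 + c i) := by
      intro k
      induction k using Nat.strong_induction_on with
      | _ k ih =>
        intro hak hkK
        calc u k ≤ B + ∑ i ∈ Finset.Ico a k, c i * u i := hbase k hak hkK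
          _ ≤ B + ∑ i ∈ Finset.Ico a k, c i * (B * ∏ j ∈ Finset.Ico a i, (1 + c j)) := by
              apply add_le_add le_rfl
              apply Finset.sum_le_sum
              intro i hi
              rw [Finset.mem_Ico] at hi
              exact mul_le_mul_of_nonneg_left
                (ih i hi.2 hi.1 (le_trans hi.2.le hkK)) (hc_nonneg i)
          _ = B * (1 + ∑ i ∈ Finset.Ico a k, c i * ∏ j ∈ Finset.Ico a i, (1 + c j)) := by
              rw [mul_add, mul_one, Finset.mul_sum]
              congr 1
              apply Finset.sum_congr rfl
              intro i _
              ring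
          _ = B * ∏ i ∈ Finset.Ico a k, (1 + c i) := by rw [hprod_id k hak]
    -- conclude
    have hprod_exp : ∏ i ∈ Finset.Ico a K, (1 + c i) ≤ Real.exp CH := by
      calc ∏ i ∈ Finset.Ico a K, (1 + c i)
          ≤ ∏ i ∈ Finset.Ico a K, Real.exp (c i) := by
            apply Finset.prod_le_prod
            · intro i _; linarith [hc_nonneg i]
            · intro i _
              have := Real.add_one_le_exp (c i)
              linarith
        _ = Real.exp (∑ i ∈ Finset.Ico a K, c i) := by rw [Real.exp_sum]
        _ ≤ Real.exp CH := by
            apply Real.exp_le_exp.mpr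
            exact (hsum_bounds K haK le_rfl).2
    calc ‖x K - x a‖ = u K := rfl
      _ ≤ B * ∏ i ∈ Finset.Ico a K, (1 + c i) := hgron K haK le_rfl
      _ ≤ B * Real.exp CH := mul_le_mul_of_nonneg_left hprod_exp hB_nonneg
  refine ⟨key, ?_⟩
  intro n
  have hd := hTseq_diff n
  have hk := key n (Tseq (n + 1) - Tseq n) hd le_rfl
  rw [show Tseq n + (Tseq (n + 1) - Tseq n) = Tseq (n + 1) by ring] at hk
  have htri := norm_sub_norm_le (x (m (Tseq (n + 1)))) (x (m (Tseq n)))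
  linarith
end

section
/- Equicontinuity of the scaled iterates, their ODE companions, and the discretization errors (Lemma 4). Under the full set of assumptions in the context, the three sequences of functions on [0, T) given by t ↦ x̂(T_n + t), t ↦ z_n(t), and t ↦ f_n(t) are each equicontinuous in the extended sense. -/
open Filter

def EquicontinuousExtendedSense {E : Type*} [NormedAddCommGroup E]
    (T : ℝ) (g : ℕ → ℝ → E) : Prop :=
  (∃ C : ℝ, ∀ n : ℕ, ‖g n 0‖ ≤ C) ∧
  ∀ ε : ℝ, 0 < ε → ∃ δ : ℝ, 0 < δ ∧ ∃ N : ℕ, ∀ n ≥ N, ∀ t₁ t₂ : ℝ,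
    0 ≤ t₁ → t₁ ≤ t₂ → t₂ < T → t₂ - t₁ ≤ δ → ‖g n t₁ - g n t₂‖ ≤ ε

private lemma my_prod_identity (β : ℕ → ℝ) (a : ℕ) :
    ∀ j, a ≤ j → (1:ℝ) + ∑ i ∈ Finset.Ico a j, β i * ∏ l ∈ Finset.Ico a i, (1 + β l)
      = ∏ i ∈ Finset.Ico a j, (1 + β i) := by
  intro j hj
  induction j, hj using Nat.le_induction with
  | base => simp
  | succ j hj ih =>
    rw [Finset.sum_Ico_succ_top hj, Finset.prod_Ico_succ_top hj, ← ih]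
    ring

private lemma my_discrete_gronwall (u β : ℕ → ℝ) (C : ℝ) (hC : 0 ≤ C) (hβ : ∀ i, 0 ≤ β i)
    (a J : ℕ) (hyp : ∀ j, a ≤ j → j ≤ J → u j ≤ C + ∑ i ∈ Finset.Ico a j, β i * u i) :
    ∀ j, a ≤ j → j ≤ J → u j ≤ C * Real.exp (∑ i ∈ Finset.Ico a j, β i) := by
  have key : ∀ j, a ≤ j → j ≤ J → u j ≤ C * ∏ i ∈ Finset.Ico a j, (1 + β i) := by
    intro j
    induction j using Nat.strong_induction_on with
    | _ j ih =>
      intro haj hjJ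
      calc u j ≤ C + ∑ i ∈ Finset.Ico a j, β i * u i := hyp j haj hjJ
        _ ≤ C + ∑ i ∈ Finset.Ico a j, β i * (C * ∏ l ∈ Finset.Ico a i, (1 + β l)) := by
            refine add_le_add (le_refl C) (Finset.sum_le_sum fun i hi => ?_)
            obtain ⟨hai, hij⟩ := Finset.mem_Ico.mp hi
            exact mul_le_mul_of_nonneg_left
              (ih i hij hai (le_trans (Nat.le_of_lt hij) hjJ)) (hβ i)
        _ = C * (1 + ∑ i ∈ Finset.Ico a j, β i * ∏ l ∈ Finset.Ico a i, (1 + β l)) := by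
            rw [mul_add, mul_one, Finset.mul_sum]
            congr 1
            exact Finset.sum_congr rfl fun i _ => by ring
        _ = C * ∏ i ∈ Finset.Ico a j, (1 + β i) := by rw [my_prod_identity β a j haj]
  intro j haj hjJ
  refine (key j haj hjJ).trans (mul_le_mul_of_nonneg_left ?_ hC)
  calc ∏ i ∈ Finset.Ico a j, (1 + β i) ≤ ∏ i ∈ Finset.Ico a j, Real.exp (β i) :=
        Finset.prod_le_prod (fun i _ => by linarith [hβ i]) (fun i _ => by
          have := Real.add_one_le_exp (β i); linarith)
    _ = Real.exp (∑ i ∈ Finset.Ico a j, β i) := (Real.exp_sum _ _).symm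

set_option maxHeartbeats 2000000 in
theorem equicontinuity_of_scaled_iterates
    {E : Type*} [NormedAddCommGroup E] [NormedSpace ℝ E] [FiniteDimensional ℝ E]
    [Nontrivial E]
    {𝓨 : Type*}
    (α : ℕ → ℝ)
    (hα_pos : ∀ n, 0 < α n)
    (hα_anti : ∀ n, α (n + 1) ≤ α n)
    (hα_div : Tendsto (fun n => ∑ i ∈ Finset.range n, α i) atTop atTop)
    (hα_to0 : Tendsto α atTop (nhds 0))
    (Cα : ℝ) (hCα_pos : 0 < Cα)
    (hCα : ∀ n, α n - α (n + 1) ≤ Cα * α n ^ 2)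
    (t : ℕ → ℝ) (ht : ∀ n, t n = ∑ i ∈ Finset.range n, α i)
    (m : ℝ → ℕ)
    (hm_le : ∀ s : ℝ, 0 ≤ s → t (m s) ≤ s)
    (hm_max : ∀ s : ℝ, 0 ≤ s → ∀ i : ℕ, t i ≤ s → i ≤ m s)
    (hm_neg : ∀ s : ℝ, s < 0 → m s = 0)
    (T : ℝ) (hT : 0 < T)
    (Tseq : ℕ → ℝ) (hTseq0 : Tseq 0 = 0)
    (hTseq : ∀ n, Tseq (n + 1) = t (m (Tseq n + T) + 1))
    (Y : ℕ → 𝓨) (H : E → 𝓨 → E)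
    (x : ℕ → E)
    (hx : ∀ n, x (n + 1) = x n + α n • H (x n) (Y (n + 1)))
    (L : 𝓨 → ℝ) (hL_nonneg : ∀ y, 0 ≤ L y)
    (hH_lip : ∀ x₁ x₂ : E, ∀ y : 𝓨, ‖H x₁ y - H x₂ y‖ ≤ L y * ‖x₁ - x₂‖)
    (Hinf : E → 𝓨 → E) (κ : ℝ → ℝ) (hκ : Tendsto κ atTop (nhds 0))
    (b : E → 𝓨 → E) (Lb : 𝓨 → ℝ) (hLb_nonneg : ∀ y, 0 ≤ Lb y)
    (hHc : ∀ c : ℝ, 1 ≤ c → ∀ x' : E, ∀ y : 𝓨,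
      c⁻¹ • H (c • x') y - Hinf x' y = κ c • b x' y)
    (hb_lip : ∀ x₁ x₂ : E, ∀ y : 𝓨, ‖b x₁ y - b x₂ y‖ ≤ Lb y * ‖x₁ - x₂‖)
    (hHinf_lip : ∀ x₁ x₂ : E, ∀ y : 𝓨, ‖Hinf x₁ y - Hinf x₂ y‖ ≤ L y * ‖x₁ - x₂‖)
    (h : E → E) (Lbar : ℝ) (hLbar : 0 ≤ Lbar)
    (Lbbar : ℝ) (hLbbar : 0 ≤ Lbbar)
    (hrateH : ∀ τ : ℝ, 0 < τ → ∀ x' : E, ∀ ε : ℝ, 0 < ε → ∃ N : ℕ, ∀ n ≥ N,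
      ∀ t₁ t₂ : ℝ, -τ ≤ t₁ → t₁ ≤ t₂ → t₂ ≤ τ →
        ‖∑ i ∈ Finset.Ico (m (t n + t₁)) (m (t n + t₂)),
            α i • (H x' (Y (i + 1)) - h x')‖ ≤ ε)
    (hrateLb : ∀ τ : ℝ, 0 < τ → ∀ ε : ℝ, 0 < ε → ∃ N : ℕ, ∀ n ≥ N,
      ∀ t₁ t₂ : ℝ, -τ ≤ t₁ → t₁ ≤ t₂ → t₂ ≤ τ →
        |∑ i ∈ Finset.Ico (m (t n + t₁)) (m (t n + t₂)),
            α i * (Lb (Y (i + 1)) - Lbbar)| ≤ ε)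
    (hrateL : ∀ τ : ℝ, 0 < τ → ∀ ε : ℝ, 0 < ε → ∃ N : ℕ, ∀ n ≥ N,
      ∀ t₁ t₂ : ℝ, -τ ≤ t₁ → t₁ ≤ t₂ → t₂ ≤ τ →
        |∑ i ∈ Finset.Ico (m (t n + t₁)) (m (t n + t₂)),
            α i * (L (Y (i + 1)) - Lbar)| ≤ ε)
    (hh_lip : ∀ x₁ x₂ : E, ‖h x₁ - h x₂‖ ≤ Lbar * ‖x₁ - x₂‖)
    (hinf : E → E)
    (hhinf_lip : ∀ x₁ x₂ : E, ‖hinf x₁ - hinf x₂‖ ≤ Lbar * ‖x₁ - x₂‖)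
    (hunif : ∀ K : Set E, IsCompact K →
      TendstoUniformlyOn (fun (c : ℝ) (x' : E) => c⁻¹ • h (c • x')) hinf atTop K)
    (r : ℕ → ℝ) (hr : ∀ n, r n = max 1 ‖x (m (Tseq n))‖)
    (z : ℕ → ℝ → E)
    (hz_cont : ∀ n, ContinuousOn (z n) (Set.Ico 0 T))
    (hz : ∀ n : ℕ, ∀ s : ℝ, 0 ≤ s → s < T →
      z n s = (r n)⁻¹ • x (m (Tseq n)) + ∫ u in (0:ℝ)..s, (r n)⁻¹ • h (r n • z n u))
 :
    EquicontinuousExtendedSense T (fun n s => (r n)⁻¹ • x (m (Tseq n + s))) ∧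
    EquicontinuousExtendedSense T z ∧
    EquicontinuousExtendedSense T
      (fun n s => (r n)⁻¹ • x (m (Tseq n + s)) - z n s) := by
  -- ## basic facts about α, t, m
  have hα_anti' : ∀ i j, i ≤ j → α j ≤ α i := fun i j hij =>
    antitone_nat_of_succ_le hα_anti hij
  have ht0 : t 0 = 0 := by simp [ht]
  have ht_succ : ∀ k, t (k + 1) = t k + α k := by
    intro k; simp [ht, Finset.sum_range_succ]
  have ht_mono : StrictMono t :=
    strictMono_nat_of_lt_succ (fun k => by rw [ht_succ]; linarith [hα_pos k])
  have ht_nonneg : ∀ k, 0 ≤ t k := fun k => by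
    rw [ht]; exact Finset.sum_nonneg fun i _ => (hα_pos i).le
  have hmt : ∀ k, m (t k) = k := by
    intro k
    have h1 : k ≤ m (t k) := hm_max _ (ht_nonneg k) k le_rfl
    have h2 : t (m (t k)) ≤ t k := hm_le _ (ht_nonneg k)
    exact le_antisymm (ht_mono.le_iff_le.mp h2) h1
  have hm_mono : ∀ s₁ s₂ : ℝ, 0 ≤ s₁ → s₁ ≤ s₂ → m s₁ ≤ m s₂ := fun s₁ s₂ h0 h12 =>
    hm_max s₂ (h0.trans h12) _ ((hm_le s₁ h0).trans h12)
  have hm_succ_gt : ∀ s : ℝ, 0 ≤ s → s < t (m s + 1) := by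
    intro s h0
    by_contra hc
    push_neg at hc
    have := hm_max s h0 (m s + 1) hc
    omega
  have hsum_Ico : ∀ j₁ j₂, j₁ ≤ j₂ → ∑ i ∈ Finset.Ico j₁ j₂, α i = t j₂ - t j₁ := by
    intro j₁ j₂ hj
    rw [ht, ht, Finset.sum_Ico_eq_sub _ hj]
  have hTk : ∀ n, ∃ k, n ≤ k ∧ Tseq n = t k := by
    intro n
    induction n with
    | zero => exact ⟨0, le_rfl, by rw [hTseq0, ht0]⟩
    | succ n ih =>
      obtain ⟨k, hnk, hk⟩ := ih
      refine ⟨m (Tseq n + T) + 1, ?_, hTseq n⟩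
      have h0 : 0 ≤ Tseq n := hk ▸ ht_nonneg k
      have : k ≤ m (Tseq n + T) := hm_max _ (by linarith) k (by rw [← hk]; linarith)
      omega
  have hTseq_nonneg : ∀ n, 0 ≤ Tseq n := by
    intro n; obtain ⟨k, _, hk⟩ := hTk n; exact hk ▸ ht_nonneg k
  have hmT : ∀ n, Tseq n = t (m (Tseq n)) ∧ n ≤ m (Tseq n) := by
    intro n; obtain ⟨k, hnk, hk⟩ := hTk n
    rw [hk, hmt]; exact ⟨rfl, hnk⟩
  -- ## facts about r
  have hr1 : ∀ n, (1:ℝ) ≤ r n := fun n => (hr n) ▸ le_max_left _ _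
  have hr_pos : ∀ n, (0:ℝ) < r n := fun n => lt_of_lt_of_le one_pos (hr1 n)
  have hrinv_nonneg : ∀ n, (0:ℝ) ≤ (r n)⁻¹ := fun n => inv_nonneg.mpr (hr_pos n).le
  have hrinv_le_one : ∀ n, (r n)⁻¹ ≤ 1 := fun n => inv_le_one_of_one_le₀ (hr1 n)
  have hrx : ∀ n, (r n)⁻¹ * ‖x (m (Tseq n))‖ ≤ 1 := by
    intro n
    have hxr : ‖x (m (Tseq n))‖ ≤ r n := (hr n) ▸ le_max_right _ _
    calc (r n)⁻¹ * ‖x (m (Tseq n))‖ ≤ (r n)⁻¹ * r n :=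
          mul_le_mul_of_nonneg_left hxr (hrinv_nonneg n)
      _ = 1 := inv_mul_cancel₀ (hr_pos n).ne'
  -- ## telescoping
  have htel : ∀ j₁ j₂, j₁ ≤ j₂ →
      x j₂ = x j₁ + ∑ i ∈ Finset.Ico j₁ j₂, α i • H (x i) (Y (i + 1)) := by
    intro j₁ j₂ hj
    induction j₂, hj using Nat.le_induction with
    | base => simp
    | succ j₂ hj ih =>
      rw [hx j₂, Finset.sum_Ico_succ_top hj, ← add_assoc, ← ih]
  -- ## decomposition bound
  have hdecomp : ∀ n j₁ j₂, j₁ ≤ j₂ →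
      (r n)⁻¹ * ‖x j₂ - x j₁‖ ≤
        (∑ i ∈ Finset.Ico j₁ j₂, (α i * L (Y (i + 1))) * ((r n)⁻¹ * ‖x i‖))
        + ‖∑ i ∈ Finset.Ico j₁ j₂, α i • (H 0 (Y (i + 1)) - h 0)‖
        + (t j₂ - t j₁) * ‖h 0‖ := by
    intro n j₁ j₂ hj
    have hxd : x j₂ - x j₁ = ∑ i ∈ Finset.Ico j₁ j₂, α i • H (x i) (Y (i + 1)) := by
      rw [htel j₁ j₂ hj]; abel
    have hsplit : ∑ i ∈ Finset.Ico j₁ j₂, α i • H (x i) (Y (i + 1))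
        = (∑ i ∈ Finset.Ico j₁ j₂, α i • (H (x i) (Y (i + 1)) - H 0 (Y (i + 1))))
          + (∑ i ∈ Finset.Ico j₁ j₂, α i • (H 0 (Y (i + 1)) - h 0))
          + (∑ i ∈ Finset.Ico j₁ j₂, α i) • h 0 := by
      rw [Finset.sum_smul, ← Finset.sum_add_distrib, ← Finset.sum_add_distrib]
      refine Finset.sum_congr rfl fun i _ => ?_
      rw [← smul_add, ← smul_add]
      congr 1
      abel
    have hA : (r n)⁻¹ * ‖∑ i ∈ Finset.Ico j₁ j₂, α i • (H (x i) (Y (i + 1)) - H 0 (Y (i + 1)))‖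
        ≤ ∑ i ∈ Finset.Ico j₁ j₂, (α i * L (Y (i + 1))) * ((r n)⁻¹ * ‖x i‖) := by
      calc (r n)⁻¹ * ‖∑ i ∈ Finset.Ico j₁ j₂, α i • (H (x i) (Y (i + 1)) - H 0 (Y (i + 1)))‖
          ≤ (r n)⁻¹ * ∑ i ∈ Finset.Ico j₁ j₂, ‖α i • (H (x i) (Y (i + 1)) - H 0 (Y (i + 1)))‖ :=
            mul_le_mul_of_nonneg_left (norm_sum_le _ _) (hrinv_nonneg n)
        _ = ∑ i ∈ Finset.Ico j₁ j₂, (r n)⁻¹ * ‖α i • (H (x i) (Y (i + 1)) - H 0 (Y (i + 1)))‖ :=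
            Finset.mul_sum _ _ _
        _ ≤ ∑ i ∈ Finset.Ico j₁ j₂, (α i * L (Y (i + 1))) * ((r n)⁻¹ * ‖x i‖) := by
            refine Finset.sum_le_sum fun i _ => ?_
            rw [norm_smul, Real.norm_eq_abs, abs_of_pos (hα_pos i)]
            have hlip : ‖H (x i) (Y (i + 1)) - H 0 (Y (i + 1))‖ ≤ L (Y (i + 1)) * ‖x i‖ := by
              simpa using hH_lip (x i) 0 (Y (i + 1))
            have := mul_le_mul_of_nonneg_left hlip (hα_pos i).le
            have := mul_le_mul_of_nonneg_left this (hrinv_nonneg n)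
            calc (r n)⁻¹ * (α i * ‖H (x i) (Y (i + 1)) - H 0 (Y (i + 1))‖)
                ≤ (r n)⁻¹ * (α i * (L (Y (i + 1)) * ‖x i‖)) := this
              _ = (α i * L (Y (i + 1))) * ((r n)⁻¹ * ‖x i‖) := by ring
    have hsum_nonneg : 0 ≤ ∑ i ∈ Finset.Ico j₁ j₂, α i :=
      Finset.sum_nonneg fun i _ => (hα_pos i).le
    have hC : ‖(∑ i ∈ Finset.Ico j₁ j₂, α i) • h 0‖ = (t j₂ - t j₁) * ‖h 0‖ := by
      rw [norm_smul, Real.norm_eq_abs, abs_of_nonneg hsum_nonneg, hsum_Ico j₁ j₂ hj]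
    set A := ∑ i ∈ Finset.Ico j₁ j₂, α i • (H (x i) (Y (i + 1)) - H 0 (Y (i + 1))) with hAdef
    set Bv := ∑ i ∈ Finset.Ico j₁ j₂, α i • (H 0 (Y (i + 1)) - h 0) with hBdef
    set Cv := (∑ i ∈ Finset.Ico j₁ j₂, α i) • h 0 with hCdef
    have hnorm3 : ‖x j₂ - x j₁‖ ≤ ‖A‖ + ‖Bv‖ + ‖Cv‖ := by
      rw [hxd, hsplit]
      exact norm_add₃_le
    calc (r n)⁻¹ * ‖x j₂ - x j₁‖ ≤ (r n)⁻¹ * (‖A‖ + ‖Bv‖ + ‖Cv‖) :=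
          mul_le_mul_of_nonneg_left hnorm3 (hrinv_nonneg n)
      _ = (r n)⁻¹ * ‖A‖ + (r n)⁻¹ * ‖Bv‖ + (r n)⁻¹ * ‖Cv‖ := by ring
      _ ≤ (∑ i ∈ Finset.Ico j₁ j₂, (α i * L (Y (i + 1))) * ((r n)⁻¹ * ‖x i‖))
          + ‖Bv‖ + (t j₂ - t j₁) * ‖h 0‖ := by
          have h2 : (r n)⁻¹ * ‖Bv‖ ≤ ‖Bv‖ :=
            mul_le_of_le_one_left (norm_nonneg _) (hrinv_le_one n)
          have h3 : (r n)⁻¹ * ‖Cv‖ ≤ (t j₂ - t j₁) * ‖h 0‖ := by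
            rw [← hC]
            exact mul_le_of_le_one_left (norm_nonneg _) (hrinv_le_one n)
          exact add_le_add (add_le_add hA h2) h3
  -- ## Step A : uniform bound on the scaled iterates over the windows
  have stepA : ∃ B : ℝ, 0 ≤ B ∧ ∃ N₁ : ℕ, ∀ n ≥ N₁, ∀ j, m (Tseq n) ≤ j →
      t j < Tseq n + T → (r n)⁻¹ * ‖x j‖ ≤ B := by
    obtain ⟨Nh, hNh⟩ := hrateH T hT 0 1 one_pos
    obtain ⟨NL, hNL⟩ := hrateL T hT 1 one_pos
    refine ⟨(2 + T * ‖h 0‖) * Real.exp (Lbar * T + 1), by positivity, max Nh NL, ?_⟩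
    intro n hn j hKj htj
    set K := m (Tseq n) with hKdef
    have hTK : Tseq n = t K := (hmT n).1
    have hnK : n ≤ K := (hmT n).2
    have hKNh : Nh ≤ K := le_trans (le_of_max_le_left hn) hnK
    have hKNL : NL ≤ K := le_trans (le_of_max_le_right hn) hnK
    have htjT : t j < t K + T := by rw [hTK] at htj; exact htj
    have hyp : ∀ j', K ≤ j' → j' ≤ j → (r n)⁻¹ * ‖x j'‖ ≤ (2 + T * ‖h 0‖)
        + ∑ i ∈ Finset.Ico K j', (α i * L (Y (i + 1))) * ((r n)⁻¹ * ‖x i‖) := by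
      intro j' hKj' hj'j
      have ht2 : 0 ≤ t j' - t K := by
        have := ht_mono.monotone hKj'; linarith
      have ht2T : t j' - t K < T := by
        have := ht_mono.monotone hj'j; linarith
      have hnoise : ‖∑ i ∈ Finset.Ico K j', α i • (H 0 (Y (i + 1)) - h 0)‖ ≤ 1 := by
        have := hNh K hKNh 0 (t j' - t K) (by linarith) (by linarith) (by linarith)
        rw [add_zero, show t K + (t j' - t K) = t j' from by ring, hmt, hmt] at this
        exact this
      have htri : (r n)⁻¹ * ‖x j'‖ ≤ (r n)⁻¹ * ‖x K‖ + (r n)⁻¹ * ‖x j' - x K‖ := by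
        have hxx : x j' = x K + (x j' - x K) := by abel
        have hnn : ‖x j'‖ ≤ ‖x K‖ + ‖x j' - x K‖ := by
          nth_rewrite 1 [hxx]; exact norm_add_le _ _
        nlinarith [hrinv_nonneg n]
      have hd := hdecomp n K j' hKj'
      have hh0 : (t j' - t K) * ‖h 0‖ ≤ T * ‖h 0‖ :=
        mul_le_mul_of_nonneg_right (le_of_lt ht2T) (norm_nonneg _)
      have hxK : (r n)⁻¹ * ‖x K‖ ≤ 1 := hrx n
      linarith [hd, hnoise, hh0, htri, hxK]
    have hg := my_discrete_gronwall (fun i => (r n)⁻¹ * ‖x i‖)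
      (fun i => α i * L (Y (i + 1))) (2 + T * ‖h 0‖) (by positivity)
      (fun i => mul_nonneg (hα_pos i).le (hL_nonneg _)) K j hyp j hKj le_rfl
    have hβsum : ∑ i ∈ Finset.Ico K j, α i * L (Y (i + 1)) ≤ Lbar * T + 1 := by
      have htmono := ht_mono.monotone hKj
      have hrl := hNL K hKNL 0 (t j - t K) (by linarith) (by linarith) (by linarith)
      rw [add_zero, show t K + (t j - t K) = t j from by ring, hmt, hmt] at hrl
      have hsplit : ∑ i ∈ Finset.Ico K j, α i * (L (Y (i + 1)) - Lbar)
          = (∑ i ∈ Finset.Ico K j, α i * L (Y (i + 1)))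
            - Lbar * ∑ i ∈ Finset.Ico K j, α i := by
        rw [Finset.mul_sum, ← Finset.sum_sub_distrib]
        exact Finset.sum_congr rfl fun i _ => by ring
      rw [hsplit] at hrl
      have habs := (abs_le.mp hrl).2
      have hαsum : ∑ i ∈ Finset.Ico K j, α i ≤ T := by
        rw [hsum_Ico K j hKj]; linarith
      have hαsum0 : 0 ≤ ∑ i ∈ Finset.Ico K j, α i :=
        Finset.sum_nonneg fun i _ => (hα_pos i).le
      nlinarith
    calc (r n)⁻¹ * ‖x j‖
        ≤ (2 + T * ‖h 0‖) * Real.exp (∑ i ∈ Finset.Ico K j, α i * L (Y (i + 1))) := hg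
      _ ≤ (2 + T * ‖h 0‖) * Real.exp (Lbar * T + 1) :=
          mul_le_mul_of_nonneg_left (Real.exp_le_exp.mpr hβsum) (by positivity)
  -- ## component 1
  have comp1 : EquicontinuousExtendedSense T (fun n s => (r n)⁻¹ • x (m (Tseq n + s))) := by
    constructor
    · refine ⟨1, fun n => ?_⟩
      show ‖(r n)⁻¹ • x (m (Tseq n + 0))‖ ≤ 1
      rw [add_zero, norm_smul, Real.norm_eq_abs, abs_of_nonneg (hrinv_nonneg n)]
      exact hrx n
    · intro ε hε
      obtain ⟨B, hB0, N₁, hstepA⟩ := stepA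
      obtain ⟨Nh, hNh⟩ := hrateH T hT 0 (ε/4) (by positivity)
      obtain ⟨NL, hNL⟩ := hrateL T hT (ε/(4*(B+1))) (by positivity)
      set δ := ε/(8*(B*Lbar + ‖h 0‖ + 1)) with hδdef
      have hδpos : 0 < δ := by positivity
      have hδeq : δ * (B*Lbar + ‖h 0‖ + 1) = ε/8 := by
        rw [hδdef]; field_simp
      obtain ⟨Nα, hNα⟩ := eventually_atTop.mp (hα_to0.eventually_lt_const hδpos)
      refine ⟨δ, hδpos, max (max N₁ Nh) (max NL Nα), ?_⟩
      intro n hn t₁ t₂ h01 h12 h2T hgap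
      show ‖(r n)⁻¹ • x (m (Tseq n + t₁)) - (r n)⁻¹ • x (m (Tseq n + t₂))‖ ≤ ε
      have hnN₁ : N₁ ≤ n := le_trans (le_max_left _ _) (le_of_max_le_left hn)
      have hnNh : Nh ≤ n := le_trans (le_max_right _ _) (le_of_max_le_left hn)
      have hnNL : NL ≤ n := le_trans (le_max_left _ _) (le_of_max_le_right hn)
      have hnNα : Nα ≤ n := le_trans (le_max_right _ _) (le_of_max_le_right hn)
      set K := m (Tseq n) with hKdef
      have hTK : Tseq n = t K := (hmT n).1
      have hnK : n ≤ K := (hmT n).2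
      have hT0 := hTseq_nonneg n
      set j₁ := m (Tseq n + t₁) with hj₁def
      set j₂ := m (Tseq n + t₂) with hj₂def
      have hj12 : j₁ ≤ j₂ := hm_mono _ _ (by linarith) (by linarith)
      have hKj₁ : K ≤ j₁ := hm_mono _ _ hT0 (by linarith)
      have hnorm : ‖(r n)⁻¹ • x j₁ - (r n)⁻¹ • x j₂‖ = (r n)⁻¹ * ‖x j₂ - x j₁‖ := by
        rw [← smul_sub, norm_smul, Real.norm_eq_abs, abs_of_nonneg (hrinv_nonneg n),
          norm_sub_rev]
      have ht_j₂ : t j₂ ≤ Tseq n + t₂ := hm_le _ (by linarith)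
      have ht_j₁ : Tseq n + t₁ < t j₁ + α j₁ := by
        have := hm_succ_gt (Tseq n + t₁) (by linarith)
        rw [ht_succ] at this; linarith
      have hαj₁ : α j₁ ≤ δ := by
        have hnj₁ : n ≤ j₁ := le_trans hnK hKj₁
        exact le_of_lt (lt_of_le_of_lt (hα_anti' n j₁ hnj₁) (hNα n hnNα))
      have hS : t j₂ - t j₁ ≤ 2*δ := by linarith
      have hS0 : 0 ≤ t j₂ - t j₁ := by have := ht_mono.monotone hj12; linarith
      have hnoise : ‖∑ i ∈ Finset.Ico j₁ j₂, α i • (H 0 (Y (i + 1)) - h 0)‖ ≤ ε/4 := by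
        have := hNh K (le_trans hnNh hnK) t₁ t₂ (by linarith) h12 (le_of_lt h2T)
        rw [← hTK] at this
        exact this
      have hLsum : ∑ i ∈ Finset.Ico j₁ j₂, α i * L (Y (i + 1))
          ≤ Lbar * (2*δ) + ε/(4*(B+1)) := by
        have hrl := hNL K (le_trans hnNL hnK) t₁ t₂ (by linarith) h12 (le_of_lt h2T)
        rw [← hTK] at hrl
        have hsplit : ∑ i ∈ Finset.Ico j₁ j₂, α i * (L (Y (i + 1)) - Lbar)
            = (∑ i ∈ Finset.Ico j₁ j₂, α i * L (Y (i + 1)))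
              - Lbar * ∑ i ∈ Finset.Ico j₁ j₂, α i := by
          rw [Finset.mul_sum, ← Finset.sum_sub_distrib]
          exact Finset.sum_congr rfl fun i _ => by ring
        rw [hsplit] at hrl
        have habs := (abs_le.mp hrl).2
        have hαsum_eq : ∑ i ∈ Finset.Ico j₁ j₂, α i = t j₂ - t j₁ := hsum_Ico _ _ hj12
        have hmul : Lbar * (∑ i ∈ Finset.Ico j₁ j₂, α i) ≤ Lbar * (2*δ) := by
          rw [hαsum_eq]; exact mul_le_mul_of_nonneg_left hS hLbar
        linarith
      have hu : ∀ i ∈ Finset.Ico j₁ j₂, (r n)⁻¹ * ‖x i‖ ≤ B := by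
        intro i hi
        obtain ⟨hi1, hi2⟩ := Finset.mem_Ico.mp hi
        refine hstepA n hnN₁ i (le_trans hKj₁ hi1) ?_
        have : t i < t j₂ := ht_mono hi2
        linarith
      have hd := hdecomp n j₁ j₂ hj12
      have hsum1 : ∑ i ∈ Finset.Ico j₁ j₂, (α i * L (Y (i + 1))) * ((r n)⁻¹ * ‖x i‖)
          ≤ B * (Lbar * (2*δ) + ε/(4*(B+1))) := by
        calc ∑ i ∈ Finset.Ico j₁ j₂, (α i * L (Y (i + 1))) * ((r n)⁻¹ * ‖x i‖)
            ≤ ∑ i ∈ Finset.Ico j₁ j₂, (α i * L (Y (i + 1))) * B :=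
              Finset.sum_le_sum fun i hi => mul_le_mul_of_nonneg_left (hu i hi)
                (mul_nonneg (hα_pos i).le (hL_nonneg _))
          _ = (∑ i ∈ Finset.Ico j₁ j₂, α i * L (Y (i + 1))) * B :=
              (Finset.sum_mul _ _ _).symm
          _ ≤ (Lbar * (2*δ) + ε/(4*(B+1))) * B := mul_le_mul_of_nonneg_right hLsum hB0
          _ = B * (Lbar * (2*δ) + ε/(4*(B+1))) := mul_comm _ _
      have hh0 : (t j₂ - t j₁) * ‖h 0‖ ≤ (2*δ) * ‖h 0‖ :=
        mul_le_mul_of_nonneg_right hS (norm_nonneg _)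
      have hfinal : (r n)⁻¹ * ‖x j₂ - x j₁‖
          ≤ B * (Lbar * (2*δ) + ε/(4*(B+1))) + ε/4 + (2*δ) * ‖h 0‖ := by
        linarith only [hd, hsum1, hnoise, hh0]
      rw [hnorm]
      refine hfinal.trans ?_
      have e1 : B * (ε/(4*(B+1))) ≤ ε/4 := by
        have hd1 : B/(B+1) ≤ 1 := div_le_one_of_le₀ (by linarith) (by linarith)
        calc B * (ε/(4*(B+1))) = (B/(B+1)) * (ε/4) := by
              rw [div_mul_div_comm]
              rw [mul_div_assoc']
              congr 1
              ring
          _ ≤ 1 * (ε/4) := mul_le_mul_of_nonneg_right hd1 (by positivity)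
          _ = ε/4 := one_mul _
      linarith only [e1, hδeq, hδpos.le, mul_nonneg hδpos.le (norm_nonneg (h 0)),
        mul_nonneg (mul_nonneg hδpos.le hB0) hLbar]
  -- ## z : boundedness
  have hcont : Continuous h := by
    have : LipschitzWith ⟨Lbar, hLbar⟩ h := by
      apply LipschitzWith.of_dist_le_mul
      intro a b
      rw [dist_eq_norm, dist_eq_norm]; exact hh_lip a b
    exact this.continuous
  have hGbound : ∀ n u, ‖(r n)⁻¹ • h (r n • z n u)‖ ≤ Lbar * ‖z n u‖ + ‖h 0‖ := by
    intro n u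
    rw [norm_smul, Real.norm_eq_abs, abs_of_nonneg (hrinv_nonneg n)]
    have h1 : ‖h (r n • z n u)‖ ≤ ‖h (r n • z n u) - h 0‖ + ‖h 0‖ := by
      have hxx : h (r n • z n u) = (h (r n • z n u) - h 0) + h 0 := by abel
      nth_rewrite 1 [hxx]; exact norm_add_le _ _
    have h2 : ‖h (r n • z n u) - h 0‖ ≤ Lbar * (r n * ‖z n u‖) := by
      have := hh_lip (r n • z n u) 0
      rw [sub_zero, norm_smul, Real.norm_eq_abs, abs_of_pos (hr_pos n)] at this
      exact this
    calc (r n)⁻¹ * ‖h (r n • z n u)‖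
        ≤ (r n)⁻¹ * (Lbar * (r n * ‖z n u‖) + ‖h 0‖) :=
          mul_le_mul_of_nonneg_left (by linarith) (hrinv_nonneg n)
      _ = Lbar * ‖z n u‖ * ((r n)⁻¹ * r n) + (r n)⁻¹ * ‖h 0‖ := by ring
      _ ≤ Lbar * ‖z n u‖ + ‖h 0‖ := by
          rw [inv_mul_cancel₀ (hr_pos n).ne', mul_one]
          have := mul_le_of_le_one_left (norm_nonneg (h 0)) (hrinv_le_one n)
          linarith
  have hGcont : ∀ n, ContinuousOn (fun v => (r n)⁻¹ • h (r n • z n v)) (Set.Ico 0 T) := by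
    intro n
    exact ((hcont.comp (continuous_const_smul (r n))).comp_continuousOn (hz_cont n)).const_smul _
  have hzB : ∃ Bz : ℝ, 0 ≤ Bz ∧ ∀ n, ∀ s : ℝ, 0 ≤ s → s < T → ‖z n s‖ ≤ Bz := by
    refine ⟨(1 + ‖h 0‖) * Real.exp ((Lbar+1)*T), by positivity, ?_⟩
    intro n s hs0 hsT
    have hIccIco : Set.Icc (0:ℝ) s ⊆ Set.Ico 0 T := fun u hu =>
      ⟨hu.1, lt_of_le_of_lt hu.2 hsT⟩
    have hderiv : ∀ u ∈ Set.Ico (0:ℝ) s, HasDerivWithinAt (z n)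
        ((r n)⁻¹ • h (r n • z n u)) (Set.Ici u) u := by
      intro u hu
      have hu0 : (0:ℝ) ≤ u := hu.1
      have huT : u < T := lt_trans hu.2 hsT
      have hmemIci : Set.Ico (0:ℝ) T ∈ nhdsWithin u (Set.Ici u) := by
        refine mem_nhdsWithin.mpr ⟨Set.Iio T, isOpen_Iio, huT, ?_⟩
        rintro v ⟨hv1, hv2⟩
        exact ⟨le_trans hu0 hv2, hv1⟩
      have hmemIoi : Set.Ico (0:ℝ) T ∈ nhdsWithin u (Set.Ioi u) := by
        refine mem_nhdsWithin.mpr ⟨Set.Iio T, isOpen_Iio, huT, ?_⟩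
        rintro v ⟨hv1, hv2⟩
        exact ⟨le_trans hu0 (le_of_lt hv2), hv1⟩
      have hInt : IntervalIntegrable (fun v => (r n)⁻¹ • h (r n • z n v))
          MeasureTheory.volume 0 u := by
        apply ContinuousOn.intervalIntegrable
        apply (hGcont n).mono
        rw [Set.uIcc_of_le hu0]
        exact fun v hv => ⟨hv.1, lt_of_le_of_lt hv.2 huT⟩
      have hmeas : StronglyMeasurableAtFilter (fun v => (r n)⁻¹ • h (r n • z n v))
          (nhdsWithin u (Set.Ioi u)) MeasureTheory.volume :=
        ⟨Set.Ico 0 T, hmemIoi, ((hGcont n).aestronglyMeasurable measurableSet_Ico)⟩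
      have hcw : ContinuousWithinAt (fun v => (r n)⁻¹ • h (r n • z n v)) (Set.Ioi u) u :=
        ((hGcont n) u ⟨hu0, huT⟩).mono_of_mem_nhdsWithin hmemIoi
      have hw : HasDerivWithinAt (fun v => ∫ y in (0:ℝ)..v, (r n)⁻¹ • h (r n • z n y))
          ((r n)⁻¹ • h (r n • z n u)) (Set.Ici u) u :=
        intervalIntegral.integral_hasDerivWithinAt_right hInt hmeas hcw
      have hw' := hw.const_add ((r n)⁻¹ • x (m (Tseq n)))
      refine hw'.congr_of_eventuallyEq ?_ ?_
      · exact Filter.eventually_of_mem hmemIci (fun v hv => hz n v hv.1 hv.2)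
      · exact hz n u hu0 huT
    have hz0 : ‖z n 0‖ ≤ 1 := by
      rw [hz n 0 le_rfl hT, intervalIntegral.integral_same, add_zero, norm_smul,
        Real.norm_eq_abs, abs_of_nonneg (hrinv_nonneg n)]
      exact hrx n
    have hbound : ∀ u ∈ Set.Ico (0:ℝ) s, ‖(r n)⁻¹ • h (r n • z n u)‖
        ≤ (Lbar+1) * ‖z n u‖ + ‖h 0‖ := by
      intro u _
      have := hGbound n u
      have := norm_nonneg (z n u)
      linarith
    have hcont' : ContinuousOn (z n) (Set.Icc 0 s) := (hz_cont n).mono hIccIco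
    have hgb := norm_le_gronwallBound_of_norm_deriv_right_le hcont' hderiv hz0 hbound s
      (Set.right_mem_Icc.mpr hs0)
    rw [sub_zero] at hgb
    refine hgb.trans ?_
    have hKpos : (0:ℝ) < Lbar + 1 := by positivity
    rw [gronwallBound_of_K_ne_0 hKpos.ne']
    have hE : Real.exp ((Lbar+1)*s) ≤ Real.exp ((Lbar+1)*T) :=
      Real.exp_le_exp.mpr (mul_le_mul_of_nonneg_left hsT.le hKpos.le)
    have hE1 : (1:ℝ) ≤ Real.exp ((Lbar+1)*s) :=
      Real.one_le_exp (mul_nonneg (by positivity) hs0)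
    have hdiv : ‖h 0‖/(Lbar+1) ≤ ‖h 0‖ :=
      div_le_self (norm_nonneg _) (by linarith only [hLbar])
    have t2 : ‖h 0‖/(Lbar+1) * (Real.exp ((Lbar+1)*s) - 1)
        ≤ ‖h 0‖ * (Real.exp ((Lbar+1)*s) - 1) :=
      mul_le_mul_of_nonneg_right hdiv (by linarith only [hE1])
    have t3 : ‖h 0‖ * (Real.exp ((Lbar+1)*s) - 1) ≤ ‖h 0‖ * Real.exp ((Lbar+1)*T) :=
      mul_le_mul_of_nonneg_left (by linarith only [hE]) (norm_nonneg _)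
    have goal1 : (1:ℝ) * Real.exp ((Lbar+1)*s) + ‖h 0‖/(Lbar+1) * (Real.exp ((Lbar+1)*s) - 1)
        ≤ (1 + ‖h 0‖) * Real.exp ((Lbar+1)*T) := by linarith only [t2, t3, hE]
    exact goal1
  have comp2 : EquicontinuousExtendedSense T z := by
    obtain ⟨Bz, hBz0, hBz⟩ := hzB
    constructor
    · refine ⟨1, fun n => ?_⟩
      rw [hz n 0 le_rfl hT, intervalIntegral.integral_same, add_zero, norm_smul,
        Real.norm_eq_abs, abs_of_nonneg (hrinv_nonneg n)]
      exact hrx n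
    · intro ε hε
      set Cz := Lbar * Bz + ‖h 0‖ with hCzdef
      have hCz0 : 0 ≤ Cz := by
        rw [hCzdef]; exact add_nonneg (mul_nonneg hLbar hBz0) (norm_nonneg _)
      refine ⟨ε/(Cz+1), div_pos hε (by linarith only [hCz0]), 0, ?_⟩
      intro n _ t₁ t₂ h01 h12 h2T hgap
      have h02 : (0:ℝ) ≤ t₂ := le_trans h01 h12
      have h1T : t₁ < T := lt_of_le_of_lt h12 h2T
      have hint1 : IntervalIntegrable (fun v => (r n)⁻¹ • h (r n • z n v))
          MeasureTheory.volume 0 t₁ := by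
        apply ContinuousOn.intervalIntegrable
        apply (hGcont n).mono
        rw [Set.uIcc_of_le h01]
        exact fun v hv => ⟨hv.1, lt_of_le_of_lt hv.2 h1T⟩
      have hint2 : IntervalIntegrable (fun v => (r n)⁻¹ • h (r n • z n v))
          MeasureTheory.volume 0 t₂ := by
        apply ContinuousOn.intervalIntegrable
        apply (hGcont n).mono
        rw [Set.uIcc_of_le h02]
        exact fun v hv => ⟨hv.1, lt_of_le_of_lt hv.2 h2T⟩
      have hdiff : z n t₂ - z n t₁ = ∫ u in t₁..t₂, (r n)⁻¹ • h (r n • z n u) := by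
        have key := intervalIntegral.integral_interval_sub_left hint2 hint1
        have step : z n t₂ - z n t₁ = (∫ u in (0:ℝ)..t₂, (r n)⁻¹ • h (r n • z n u))
            - ∫ u in (0:ℝ)..t₁, (r n)⁻¹ • h (r n • z n u) := by
          rw [hz n t₂ h02 h2T, hz n t₁ h01 h1T]
          abel
        rw [step, key]
      rw [norm_sub_rev, hdiff]
      have hb : ∀ u ∈ Set.uIoc t₁ t₂, ‖(r n)⁻¹ • h (r n • z n u)‖ ≤ Cz := by
        intro u hu
        rw [Set.uIoc_of_le h12] at hu
        have hu0 : (0:ℝ) ≤ u := le_trans h01 (le_of_lt hu.1)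
        have huT : u < T := lt_of_le_of_lt hu.2 h2T
        have hg1 := hGbound n u
        have hg2 := hBz n u hu0 huT
        have hg3 : Lbar * ‖z n u‖ ≤ Lbar * Bz := mul_le_mul_of_nonneg_left hg2 hLbar
        rw [hCzdef]
        linarith
      have hni := intervalIntegral.norm_integral_le_of_norm_le_const hb
      rw [abs_of_nonneg (by linarith : (0:ℝ) ≤ t₂ - t₁)] at hni
      refine hni.trans ?_
      have e0 : Cz * (t₂ - t₁) ≤ Cz * (ε/(Cz+1)) := mul_le_mul_of_nonneg_left hgap hCz0
      have e1 : Cz * (ε/(Cz+1)) ≤ ε := by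
        rw [mul_div_assoc', div_le_iff₀ (by linarith only [hCz0])]
        nlinarith [hε.le, hCz0, mul_nonneg hε.le hCz0]
      exact e0.trans e1
  refine ⟨comp1, comp2, ?_, ?_⟩
  · obtain ⟨C1, hC1⟩ := comp1.1
    obtain ⟨C2, hC2⟩ := comp2.1
    exact ⟨C1 + C2, fun n => (norm_sub_le _ _).trans (add_le_add (hC1 n) (hC2 n))⟩
  · intro ε hε
    obtain ⟨δ₁, hδ₁, N₁, h1⟩ := comp1.2 (ε/2) (by positivity)
    obtain ⟨δ₂, hδ₂, N₂, h2⟩ := comp2.2 (ε/2) (by positivity)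
    refine ⟨min δ₁ δ₂, lt_min hδ₁ hδ₂, max N₁ N₂, ?_⟩
    intro n hn t₁ t₂ h0 h12 h2T hgap
    have e1 := h1 n (le_of_max_le_left hn) t₁ t₂ h0 h12 h2T (hgap.trans (min_le_left _ _))
    have e2 := h2 n (le_of_max_le_right hn) t₁ t₂ h0 h12 h2T (hgap.trans (min_le_right _ _))
    calc ‖((r n)⁻¹ • x (m (Tseq n + t₁)) - z n t₁) - ((r n)⁻¹ • x (m (Tseq n + t₂)) - z n t₂)‖
        = ‖((r n)⁻¹ • x (m (Tseq n + t₁)) - (r n)⁻¹ • x (m (Tseq n + t₂))) - (z n t₁ - z n t₂)‖ := by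
          congr 1; abel
      _ ≤ ‖(r n)⁻¹ • x (m (Tseq n + t₁)) - (r n)⁻¹ • x (m (Tseq n + t₂))‖ + ‖z n t₁ - z n t₂‖ :=
          norm_sub_le _ _
      _ ≤ ε/2 + ε/2 := add_le_add e1 e2
      _ = ε := by ring
end

section
/- Existence of a diverging subsequence with increasing successor (combinatorial core of Lemma 5 and Lemma 'r w r' k infty'). Let r : ℕ → ℝ satisfy r_n ≥ 1 for all n, and suppose there is a constant C ≥ 0 such that r_{n+1} ≤ (r_n·C + C)·e^C + r_n + 1 for all n. If limsup_{n→∞} r_n = ∞, then there exists a strictly increasing sequence of indices (n_k) with lim_{k→∞} r_{n_k} = ∞ and r_{n_k + 1} > r_{n_k} for every k. -/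
/-!
Let `g` bound one step of growth, `r (n + 1) ≤ g (r n)`, and fix `M` and `N`. Since `r` is
unbounded, it eventually climbs from `r N` to above `K > max (g M) (r N)`; at the step `m ≥ N`
where it first crosses `K` we have `r m < K ≤ r (m + 1)`, and `r m ≥ M`, because a value below
`M` could only be followed by one below `g M < K`. Choosing such an `m` with `M = k` beyond the
previous index gives the subsequence.
-/

open Filter

section

variable {α : Type*} [LinearOrder α] {r : ℕ → α}

theorem exists_lt_le_succ_of_lt_of_le {K : α} {N n : ℕ} (hNn : N ≤ n) (hN : r N < K)
    (hn : K ≤ r n) : ∃ m, N ≤ m ∧ r m < K ∧ K ≤ r (m + 1) := by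
  obtain ⟨i, hi, hi1⟩ :=
    Nat.exists_not_and_succ_of_not_zero_of_exists (p := fun i => K ≤ r (N + i))
      (by simpa using hN)
      ⟨n - N, by simpa [Nat.add_sub_cancel' hNn] using hn⟩
  exact ⟨N + i, Nat.le_add_right N i, not_le.1 hi, hi1⟩

theorem frequently_le_and_lt_succ_of_monotone_bound [NoMaxOrder α] {g : α → α}
    (hg : Monotone g) (hgrow : ∀ n, r (n + 1) ≤ g (r n))
    (hr : ∀ M, ∃ᶠ n in atTop, M ≤ r n) (M : α) :
    ∃ᶠ m in atTop, M ≤ r m ∧ r m < r (m + 1) := by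
  refine frequently_atTop.2 fun N => ?_
  obtain ⟨K, hK⟩ := exists_gt (max (g M) (r N))
  obtain ⟨n, hNn, hn⟩ := frequently_atTop.1 (hr K) N
  obtain ⟨m, hNm, hm, hm1⟩ :=
    exists_lt_le_succ_of_lt_of_le hNn (le_max_right _ _ |>.trans_lt hK) hn
  refine ⟨m, hNm, le_of_not_gt fun hmM => ?_, hm.trans_le hm1⟩
  have : r (m + 1) < K :=
    calc r (m + 1) ≤ g (r m) := hgrow m
      _ ≤ g M := hg hmM.le
      _ < K := le_max_left _ _ |>.trans_lt hK
  exact this.not_ge hm1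

end

theorem exists_strictMono_tendsto_atTop_of_frequently {r : ℕ → ℝ} {Q : ℕ → Prop}
    (h : ∀ M, ∃ᶠ m in atTop, M ≤ r m ∧ Q m) :
    ∃ φ : ℕ → ℕ, StrictMono φ ∧ Tendsto (r ∘ φ) atTop atTop ∧ ∀ k, Q (φ k) := by
  obtain ⟨φ, hφ, hφr⟩ := extraction_forall_of_frequently fun k : ℕ => h k
  exact ⟨φ, hφ, tendsto_atTop_mono (fun k => (hφr k).1) tendsto_natCast_atTop_atTop,
    fun k => (hφr k).2⟩

theorem diverging_subsequence_with_increasing_successor_general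
    (r : ℕ → ℝ)
    (C : ℝ) (hC : 0 ≤ C)
    (hgrow : ∀ n, r (n + 1) ≤ (r n * C + C) * Real.exp C + r n + 1)
    (hlimsup : ∀ M : ℝ, ∀ N : ℕ, ∃ n : ℕ, N ≤ n ∧ M ≤ r n) :
    ∃ φ : ℕ → ℕ, StrictMono φ ∧
      Tendsto (fun k => r (φ k)) atTop atTop ∧
      ∀ k : ℕ, r (φ k) < r (φ k + 1) := by
  have hmono : Monotone fun x : ℝ => (x * C + C) * Real.exp C + x + 1 := fun x y hxy => by
    dsimp only
    gcongr
  exact exists_strictMono_tendsto_atTop_of_frequently <|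
    frequently_le_and_lt_succ_of_monotone_bound hmono hgrow fun M => frequently_atTop.2 (hlimsup M)

theorem diverging_subsequence_with_increasing_successor
    (r : ℕ → ℝ) (hr1 : ∀ n, 1 ≤ r n)
    (C : ℝ) (hC : 0 ≤ C)
    (hgrow : ∀ n, r (n + 1) ≤ (r n * C + C) * Real.exp C + r n + 1)
    (hlimsup : ∀ M : ℝ, ∀ N : ℕ, ∃ n : ℕ, N ≤ n ∧ M ≤ r n) :
    ∃ φ : ℕ → ℕ, StrictMono φ ∧
      Tendsto (fun k => r (φ k)) atTop atTop ∧
      ∀ k : ℕ, r (φ k) < r (φ k + 1) :=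
  diverging_subsequence_with_increasing_successor_general r C hC hgrow hlimsup
end

section
/- Uniform-in-k double-limit convergence (Lemma 6). Assume the full context and the subsequence setting, and recall the corresponding scaling factors r_{n_j} (so r_{n_j} → ∞). Then for every t ∈ [0, T): as j → ∞, the quantities ‖∑_{i=m(T_{n_k})}^{m(T_{n_k}+t)−1} α(i)·H_{r_{n_j}}(x̂(t(i)), Y_{i+1}) − ∫_0^t h_{r_{n_j}}(x̂^lim(s)) ds‖ converge, uniformly in k, to ‖∑_{i=m(T_{n_k})}^{m(T_{n_k}+t)−1} α(i)·H_∞(x̂(t(i)), Y_{i+1}) − ∫_0^t h_∞(x̂^lim(s)) ds‖. -/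
/-! The two sums differ by `κ(r_j) • ∑ α_i b(x̂_i, Y_{i+1})`, so it suffices to bound this window
sum of `b` uniformly in `k`. The Lipschitz bound on `b` reduces it to
`∑ α_i L_b(Y_{i+1}) ‖x̂_i‖ + ‖∑ α_i b(0, Y_{i+1})‖`; the iterates `x̂` are eventually bounded since
they converge uniformly to the continuous `x̂^lim`, the rate conditions bound `∑ α_i L_b(Y_{i+1})`
and `∑ α_i H(0, Y_{i+1})` on windows of length `t < T`, and `b(0, ·)` is a multiple of `H(0, ·)`
(compare the scaling identity at two scales). The integrals converge because `h_c → h_∞`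
uniformly on the compact set `x̂^lim([0, t])`. -/

open Filter Finset Topology Interval

lemma abs_norm_sub_sub_norm_sub_le {E : Type*} [SeminormedAddCommGroup E] (a b c d : E) :
    |‖a - c‖ - ‖b - d‖| ≤ ‖a - b‖ + ‖c - d‖ :=
  calc |‖a - c‖ - ‖b - d‖| ≤ ‖(a - c) - (b - d)‖ := abs_norm_sub_norm_le _ _
    _ = ‖(a - b) - (c - d)‖ := by congr 1; abel
    _ ≤ ‖a - b‖ + ‖c - d‖ := norm_sub_le _ _

lemma exists_forall_abs_norm_sub_sub_norm_sub_le {ι E : Type*} [SeminormedAddCommGroup E]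
    {A : ℕ → ι → E} {B : ι → E} {I : ℕ → E} {I₀ : E} {κ : ℕ → ℝ} {C : ι → ℝ}
    (hκ : Tendsto κ atTop (𝓝 0)) (hI : Tendsto I atTop (𝓝 I₀))
    (hAB : ∀ j k, ‖A j k - B k‖ ≤ |κ j| * C k) (hC : BddAbove (Set.range C)) {ε : ℝ} (hε : 0 < ε) :
    ∃ J, ∀ j ≥ J, ∀ k, |‖A j k - I j‖ - ‖B k - I₀‖| ≤ ε := by
  obtain ⟨C₀, hC₀⟩ := hC
  have hlim : Tendsto (fun j => |κ j| * C₀ + ‖I j - I₀‖) atTop (𝓝 0) := by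
    simpa using (hκ.abs.mul_const C₀).add (tendsto_iff_norm_sub_tendsto_zero.1 hI)
  obtain ⟨J, hJ⟩ := eventually_atTop.1 (hlim.eventually (ge_mem_nhds hε))
  refine ⟨J, fun j hj k => (abs_norm_sub_sub_norm_sub_le _ _ _ _).trans ?_⟩
  calc ‖A j k - B k‖ + ‖I j - I₀‖ ≤ |κ j| * C₀ + ‖I j - I₀‖ := by
        gcongr
        exact (hAB j k).trans (mul_le_mul_of_nonneg_left (hC₀ ⟨k, rfl⟩) (abs_nonneg _))
    _ ≤ ε := hJ j hj

section WeightedSums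

variable {ι E : Type*} [SeminormedAddCommGroup E] [NormedSpace ℝ E]
  {I : Finset ι} {α : ι → ℝ}

lemma norm_sum_smul_le_of_norm_sum_smul_sub_le (hα : ∀ i ∈ I, 0 ≤ α i) {v : ι → E} {w : E}
    {δ : ℝ} (h : ‖∑ i ∈ I, α i • (v i - w)‖ ≤ δ) :
    ‖∑ i ∈ I, α i • v i‖ ≤ δ + (∑ i ∈ I, α i) * ‖w‖ := by
  have hsplit : ∑ i ∈ I, α i • v i = ∑ i ∈ I, α i • (v i - w) + (∑ i ∈ I, α i) • w := by
    simp only [smul_sub, sum_sub_distrib, sum_smul, sub_add_cancel]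
  rw [hsplit]
  refine (norm_add_le _ _).trans (add_le_add h ?_)
  rw [norm_smul, Real.norm_of_nonneg (sum_nonneg hα)]

lemma norm_sum_smul_sub_le_sum_mul_norm {F : Type*} [SeminormedAddCommGroup F]
    (hα : ∀ i ∈ I, 0 ≤ α i) {g : ι → F → E} {L : ι → ℝ}
    (hg : ∀ i ∈ I, ∀ z, ‖g i z - g i 0‖ ≤ L i * ‖z‖) (z : ι → F) :
    ‖∑ i ∈ I, α i • (g i (z i) - g i 0)‖ ≤ ∑ i ∈ I, α i * L i * ‖z i‖ := by
  refine (norm_sum_le _ _).trans (sum_le_sum fun i hi => ?_)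
  rw [norm_smul, Real.norm_of_nonneg (hα i hi), mul_assoc]
  exact mul_le_mul_of_nonneg_left (hg i hi (z i)) (hα i hi)

end WeightedSums

section Scaling

variable {E 𝓨 : Type*} [NormedAddCommGroup E] [NormedSpace ℝ E] {H Hinf b : E → 𝓨 → E}

-- The factor `κ c` is needed: `b 0` is unconstrained when `κ` vanishes on `[1, ∞)`.
lemma exists_smul_b_zero_eq {κ : ℝ → ℝ} (hκ : Tendsto κ atTop (𝓝 0))
    (hHc : ∀ c : ℝ, 1 ≤ c → ∀ x' : E, ∀ y : 𝓨, c⁻¹ • H (c • x') y - Hinf x' y = κ c • b x' y) :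
    ∃ μ : ℝ, ∀ c, 1 ≤ c → ∀ y, κ c • b 0 y = (κ c * μ) • H 0 y := by
  by_cases hκ0 : ∀ c, 1 ≤ c → κ c = 0
  · exact ⟨0, fun c hc y => by simp [hκ0 c hc]⟩
  push Not at hκ0
  obtain ⟨c₁, hc₁, hκc₁⟩ := hκ0
  have hκabs : Tendsto (fun c => |κ c|) atTop (𝓝 0) := by simpa using hκ.abs
  obtain ⟨c₀, hlt, hc₀⟩ :=
    ((hκabs.eventually (gt_mem_nhds (abs_pos.2 hκc₁))).and (eventually_ge_atTop 1)).exists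
  have hne : κ c₀ - κ c₁ ≠ 0 := fun h => (sub_eq_zero.1 h ▸ hlt).false
  refine ⟨(κ c₀ - κ c₁)⁻¹ * (c₀⁻¹ - c₁⁻¹), fun c _ y => ?_⟩
  have h₀ := hHc c₀ hc₀ 0 y
  have h₁ := hHc c₁ hc₁ 0 y
  rw [smul_zero] at h₀ h₁
  have hb0 : (κ c₀ - κ c₁) • b 0 y = (c₀⁻¹ - c₁⁻¹) • H 0 y := by
    rw [sub_smul, sub_smul, ← h₀, ← h₁]; abel
  rw [← smul_smul, ← smul_smul, ← hb0, inv_smul_smul₀ hne]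

lemma norm_sum_smul_scaled_sub_le {c k μ : ℝ}
    (hc : ∀ x' : E, ∀ y : 𝓨, c⁻¹ • H (c • x') y - Hinf x' y = k • b x' y)
    (hμ : ∀ y, k • b 0 y = (k * μ) • H 0 y) {Lb : 𝓨 → ℝ}
    (hb_lip : ∀ x₁ x₂ : E, ∀ y : 𝓨, ‖b x₁ y - b x₂ y‖ ≤ Lb y * ‖x₁ - x₂‖)
    {I : Finset ℕ} {α : ℕ → ℝ} (hα : ∀ i ∈ I, 0 ≤ α i) (z : ℕ → E) (y : ℕ → 𝓨) :
    ‖∑ i ∈ I, α i • (c⁻¹ • H (c • z i) (y i)) - ∑ i ∈ I, α i • Hinf (z i) (y i)‖ ≤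
      |k| * (∑ i ∈ I, α i * Lb (y i) * ‖z i‖ + |μ| * ‖∑ i ∈ I, α i • H 0 (y i)‖) := by
  have hsplit : ∑ i ∈ I, α i • (c⁻¹ • H (c • z i) (y i)) - ∑ i ∈ I, α i • Hinf (z i) (y i) =
      k • ∑ i ∈ I, α i • (b (z i) (y i) - b 0 (y i)) + (k * μ) • ∑ i ∈ I, α i • H 0 (y i) := by
    rw [← sum_sub_distrib, smul_sum, smul_sum, ← sum_add_distrib]
    refine sum_congr rfl fun i _ => ?_
    rw [← smul_sub, hc, smul_comm (k * μ), ← hμ, smul_comm k, ← smul_add, ← smul_add,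
      sub_add_cancel]
  rw [hsplit, mul_add, ← mul_assoc, ← abs_mul]
  refine (norm_add_le _ _).trans (add_le_add ?_ (norm_smul _ _).le)
  rw [norm_smul, Real.norm_eq_abs]
  exact mul_le_mul_of_nonneg_left
    (norm_sum_smul_sub_le_sum_mul_norm hα (fun i _ z => by simpa using hb_lip z 0 (y i)) z)
    (abs_nonneg k)

end Scaling

lemma TendstoUniformlyOn.tendsto_intervalIntegral_comp {ι E F : Type*}
    [NormedAddCommGroup E] [NormedAddCommGroup F] [NormedSpace ℝ F]
    {l : Filter ι} [l.IsCountablyGenerated] {G : ι → E → F} {g : E → F} {f : ℝ → E} {a b : ℝ}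
    (hG : ∀ i, Continuous (G i)) (hf : ContinuousOn f [[a, b]])
    (hGg : TendstoUniformlyOn G g l (f '' [[a, b]])) :
    Tendsto (fun i => ∫ u in a..b, G i (f u)) l (𝓝 (∫ u in a..b, g (f u))) :=
  ((hGg.comp f).mono (Set.subset_preimage_image f _)).tendsto_intervalIntegral_of_continuousOn
    (.of_forall fun i => (hG i).comp_continuousOn hf)

structure IsTimeGrid (α t : ℕ → ℝ) (m : ℝ → ℕ) : Prop where
  pos : ∀ n, 0 < α n
  t_eq : ∀ n, t n = ∑ i ∈ range n, α i
  t_m_le : ∀ s, 0 ≤ s → t (m s) ≤ s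
  le_m : ∀ s, 0 ≤ s → ∀ i, t i ≤ s → i ≤ m s

namespace IsTimeGrid

variable {α t : ℕ → ℝ} {m : ℝ → ℕ}

lemma strictMono (hg : IsTimeGrid α t m) : StrictMono t :=
  strictMono_nat_of_lt_succ fun n => by
    rw [hg.t_eq, hg.t_eq, sum_range_succ]
    linarith [hg.pos n]

lemma t_zero (hg : IsTimeGrid α t m) : t 0 = 0 := by
  rw [hg.t_eq, sum_range_zero]

lemma t_nonneg (hg : IsTimeGrid α t m) (n : ℕ) : 0 ≤ t n :=
  hg.t_zero ▸ hg.strictMono.monotone (Nat.zero_le n)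

lemma m_t (hg : IsTimeGrid α t m) (i : ℕ) : m (t i) = i :=
  le_antisymm (hg.strictMono.le_iff_le.1 (hg.t_m_le _ (hg.t_nonneg i)))
    (hg.le_m _ (hg.t_nonneg i) i le_rfl)

lemma m_mono (hg : IsTimeGrid α t m) {s₁ s₂ : ℝ} (h₀ : 0 ≤ s₁) (h : s₁ ≤ s₂) : m s₁ ≤ m s₂ :=
  hg.le_m s₂ (h₀.trans h) _ ((hg.t_m_le s₁ h₀).trans h)

lemma sum_Ico_le (hg : IsTimeGrid α t m) {a s : ℝ} (ha : t (m a) = a) (hs : 0 ≤ s) :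
    ∑ i ∈ Ico (m a) (m (a + s)), α i ≤ s := by
  have ha₀ : 0 ≤ a := ha ▸ hg.t_nonneg _
  rw [sum_Ico_eq_sub _ (hg.m_mono ha₀ (by linarith)), ← hg.t_eq, ← hg.t_eq, ha]
  linarith [hg.t_m_le (a + s) (by linarith)]

lemma exists_m_eq_of_mem_Ico (hg : IsTimeGrid α t m) {a s : ℝ} (ha : t (m a) = a)
    (hs : 0 ≤ s) {i : ℕ} (hi : i ∈ Ico (m a) (m (a + s))) : ∃ u ∈ Set.Ico 0 s, m (a + u) = i := by
  rw [Finset.mem_Ico] at hi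
  have hai : a ≤ t i := ha ▸ hg.strictMono.monotone hi.1
  have his : t i < a + s :=
    (hg.strictMono hi.2).trans_le (hg.t_m_le _ (by linarith [hg.t_nonneg (m a)]))
  exact ⟨t i - a, ⟨by linarith, by linarith⟩, by rw [add_sub_cancel, hg.m_t]⟩

section Restarts

variable {T : ℝ} {Tseq : ℕ → ℝ}

lemma t_m_Tseq (hg : IsTimeGrid α t m) (h₀ : Tseq 0 = 0)
    (hsucc : ∀ n, Tseq (n + 1) = t (m (Tseq n + T) + 1)) (n : ℕ) : t (m (Tseq n)) = Tseq n := by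
  cases n with
  | zero => rw [h₀, ← hg.t_zero, hg.m_t]
  | succ n => rw [hsucc, hg.m_t]

lemma le_m_Tseq (hg : IsTimeGrid α t m) (hT : 0 ≤ T) (h₀ : Tseq 0 = 0)
    (hsucc : ∀ n, Tseq (n + 1) = t (m (Tseq n + T) + 1)) (n : ℕ) : n ≤ m (Tseq n) := by
  induction n with
  | zero => exact Nat.zero_le _
  | succ n ih =>
    have h₀ : 0 ≤ Tseq n := hg.t_m_Tseq h₀ hsucc n ▸ hg.t_nonneg _
    rw [hsucc, hg.m_t]
    exact Nat.succ_le_succ (ih.trans (hg.m_mono h₀ (by linarith)))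

end Restarts

variable {E : Type*} [NormedAddCommGroup E] {a : ℕ → ℝ}

lemma eventually_norm_sum_Ico_le [NormedSpace ℝ E] (hg : IsTimeGrid α t m)
    (ha : ∀ k, t (m (a k)) = a k)
    (ha_top : Tendsto (fun k => m (a k)) atTop atTop) {τ s δ : ℝ} (hs : 0 ≤ s) (hsτ : s ≤ τ)
    {v : ℕ → E} {w : E}
    (hrate : ∃ N : ℕ, ∀ n ≥ N, ∀ t₁ t₂ : ℝ, -τ ≤ t₁ → t₁ ≤ t₂ → t₂ ≤ τ →
      ‖∑ i ∈ Ico (m (t n + t₁)) (m (t n + t₂)), α i • (v i - w)‖ ≤ δ) :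
    ∀ᶠ k in atTop, ‖∑ i ∈ Ico (m (a k)) (m (a k + s)), α i • v i‖ ≤ δ + s * ‖w‖ := by
  obtain ⟨N, hN⟩ := hrate
  filter_upwards [ha_top.eventually_ge_atTop N] with k hk
  have hwindow := hN _ hk 0 s (by linarith) hs hsτ
  rw [add_zero, ha k] at hwindow
  refine (norm_sum_smul_le_of_norm_sum_smul_sub_le (fun i _ => (hg.pos i).le) hwindow).trans ?_
  gcongr
  exact hg.sum_Ico_le (ha k) hs

lemma exists_eventually_norm_le (hg : IsTimeGrid α t m) (ha : ∀ k, t (m (a k)) = a k)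
    {s : ℝ} (hs : 0 ≤ s) {X : ℕ → ℕ → E} {f : ℝ → E} (hf : ContinuousOn f (Set.Icc 0 s))
    (hX : TendstoUniformlyOn (fun k u => X k (m (a k + u))) f atTop (Set.Ico 0 s)) :
    ∃ M, 0 ≤ M ∧ ∀ᶠ k in atTop, ∀ i ∈ Ico (m (a k)) (m (a k + s)), ‖X k i‖ ≤ M := by
  obtain ⟨M, hM⟩ := isCompact_Icc.exists_bound_of_continuousOn hf
  refine ⟨M + 1, by linarith [(norm_nonneg _).trans (hM 0 ⟨le_rfl, hs⟩)], ?_⟩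
  filter_upwards [(uniformContinuous_norm.comp_tendstoUniformlyOn hX).eventually_forall_le
    (lt_add_one M) fun u hu => hM u (Set.Ico_subset_Icc_self hu)] with k hk i hi
  obtain ⟨u, hu, rfl⟩ := hg.exists_m_eq_of_mem_Ico (ha k) hs hi
  exact hk u hu

lemma bddAbove_range_window_sums [NormedSpace ℝ E] (hg : IsTimeGrid α t m)
    (ha : ∀ k, t (m (a k)) = a k) (ha_top : Tendsto (fun k => m (a k)) atTop atTop)
    {τ s M c : ℝ} (hs : 0 ≤ s) (hsτ : s ≤ τ) (hM : 0 ≤ M) (hc : 0 ≤ c)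
    {L : ℕ → ℝ} (hL : ∀ i, 0 ≤ L i) {L₀ : ℝ}
    (hrateL : ∃ N : ℕ, ∀ n ≥ N, ∀ t₁ t₂ : ℝ, -τ ≤ t₁ → t₁ ≤ t₂ → t₂ ≤ τ →
      |∑ i ∈ Ico (m (t n + t₁)) (m (t n + t₂)), α i * (L i - L₀)| ≤ 1)
    {v : ℕ → E} {w : E}
    (hratev : ∃ N : ℕ, ∀ n ≥ N, ∀ t₁ t₂ : ℝ, -τ ≤ t₁ → t₁ ≤ t₂ → t₂ ≤ τ →
      ‖∑ i ∈ Ico (m (t n + t₁)) (m (t n + t₂)), α i • (v i - w)‖ ≤ 1)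
    {z : ℕ → ℕ → E} (hz : ∀ᶠ k in atTop, ∀ i ∈ Ico (m (a k)) (m (a k + s)), ‖z k i‖ ≤ M) :
    BddAbove (Set.range fun k => ∑ i ∈ Ico (m (a k)) (m (a k + s)), α i * L i * ‖z k i‖ +
      c * ‖∑ i ∈ Ico (m (a k)) (m (a k + s)), α i • v i‖) := by
  have hLsum := hg.eventually_norm_sum_Ico_le ha ha_top hs hsτ (v := L) (w := L₀)
    (by simpa only [Real.norm_eq_abs, smul_eq_mul] using hrateL)
  have hvsum := hg.eventually_norm_sum_Ico_le ha ha_top hs hsτ hratev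
  refine IsBoundedUnder.bddAbove_range
    ⟨M * (1 + s * ‖L₀‖) + c * (1 + s * ‖w‖), eventually_map.2 ?_⟩
  filter_upwards [hz, hLsum, hvsum] with k hzk hLk hvk
  refine add_le_add ?_ (mul_le_mul_of_nonneg_left hvk hc)
  calc _ ≤ ∑ i ∈ Ico (m (a k)) (m (a k + s)), α i * L i * M :=
        sum_le_sum fun i hi => mul_le_mul_of_nonneg_left (hzk i hi)
          (mul_nonneg (hg.pos i).le (hL i))
    _ = M * ∑ i ∈ Ico (m (a k)) (m (a k + s)), α i • L i := by
        rw [mul_sum]; simp only [smul_eq_mul, mul_comm]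
    _ ≤ M * (1 + s * ‖L₀‖) := mul_le_mul_of_nonneg_left ((le_abs_self _).trans hLk) hM

end IsTimeGrid

theorem uniform_in_k_double_limit_general
    {E : Type*} [NormedAddCommGroup E] [NormedSpace ℝ E]
    {𝓨 : Type*}
    (α : ℕ → ℝ)
    (hα_pos : ∀ n, 0 < α n)
    (t : ℕ → ℝ) (ht : ∀ n, t n = ∑ i ∈ Finset.range n, α i)
    (m : ℝ → ℕ)
    (hm_le : ∀ s : ℝ, 0 ≤ s → t (m s) ≤ s)
    (hm_max : ∀ s : ℝ, 0 ≤ s → ∀ i : ℕ, t i ≤ s → i ≤ m s)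
    (T : ℝ) (hT : 0 < T)
    (Tseq : ℕ → ℝ) (hTseq0 : Tseq 0 = 0)
    (hTseq : ∀ n, Tseq (n + 1) = t (m (Tseq n + T) + 1))
    (Y : ℕ → 𝓨) (H : E → 𝓨 → E)
    (x : ℕ → E)
    (Hinf : E → 𝓨 → E) (κ : ℝ → ℝ) (hκ : Tendsto κ atTop (nhds 0))
    (b : E → 𝓨 → E) (Lb : 𝓨 → ℝ) (hLb_nonneg : ∀ y, 0 ≤ Lb y)
    (hHc : ∀ c : ℝ, 1 ≤ c → ∀ x' : E, ∀ y : 𝓨,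
      c⁻¹ • H (c • x') y - Hinf x' y = κ c • b x' y)
    (hb_lip : ∀ x₁ x₂ : E, ∀ y : 𝓨, ‖b x₁ y - b x₂ y‖ ≤ Lb y * ‖x₁ - x₂‖)
    (h : E → E) (Lbar : ℝ)
    (Lbbar : ℝ)
    (hrateH : ∀ τ : ℝ, 0 < τ → ∀ x' : E, ∀ ε : ℝ, 0 < ε → ∃ N : ℕ, ∀ n ≥ N,
      ∀ t₁ t₂ : ℝ, -τ ≤ t₁ → t₁ ≤ t₂ → t₂ ≤ τ →
        ‖∑ i ∈ Finset.Ico (m (t n + t₁)) (m (t n + t₂)),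
            α i • (H x' (Y (i + 1)) - h x')‖ ≤ ε)
    (hrateLb : ∀ τ : ℝ, 0 < τ → ∀ ε : ℝ, 0 < ε → ∃ N : ℕ, ∀ n ≥ N,
      ∀ t₁ t₂ : ℝ, -τ ≤ t₁ → t₁ ≤ t₂ → t₂ ≤ τ →
        |∑ i ∈ Finset.Ico (m (t n + t₁)) (m (t n + t₂)),
            α i * (Lb (Y (i + 1)) - Lbbar)| ≤ ε)
    (hh_lip : ∀ x₁ x₂ : E, ‖h x₁ - h x₂‖ ≤ Lbar * ‖x₁ - x₂‖)
    (hinf : E → E)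
    (hunif : ∀ K : Set E, IsCompact K →
      TendstoUniformlyOn (fun (c : ℝ) (x' : E) => c⁻¹ • h (c • x')) hinf atTop K)
    (r : ℕ → ℝ) (hr : ∀ n, r n = max 1 ‖x (m (Tseq n))‖)
    (nk : ℕ → ℕ) (hnk_mono : StrictMono nk)
    (hnk_div : Tendsto (fun k => r (nk k)) atTop atTop)
    (xlim : ℝ → E) (hxlim_cont : ContinuousOn xlim (Set.Ico 0 T))
    (hxlim : TendstoUniformlyOn (fun (k : ℕ) (s : ℝ) => (r (nk k))⁻¹ • x (m (Tseq (nk k) + s)))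
      xlim atTop (Set.Ico 0 T))
 :
    ∀ s : ℝ, 0 ≤ s → s < T → ∀ ε : ℝ, 0 < ε → ∃ J : ℕ, ∀ j ≥ J, ∀ k : ℕ,
      |‖(∑ i ∈ Finset.Ico (m (Tseq (nk k))) (m (Tseq (nk k) + s)),
            α i • ((r (nk j))⁻¹ • H (r (nk j) • ((r (nk k))⁻¹ • x i)) (Y (i + 1)))) -
          ∫ u in (0:ℝ)..s, (r (nk j))⁻¹ • h (r (nk j) • xlim u)‖ -
        ‖(∑ i ∈ Finset.Ico (m (Tseq (nk k))) (m (Tseq (nk k) + s)),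
            α i • Hinf ((r (nk k))⁻¹ • x i) (Y (i + 1))) -
          ∫ u in (0:ℝ)..s, hinf (xlim u)‖| ≤ ε := by
  intro s hs hsT ε hε
  have hg : IsTimeGrid α t m := ⟨hα_pos, ht, hm_le, hm_max⟩
  have hr₁ : ∀ n, 1 ≤ r n := fun n => hr n ▸ le_max_left _ _
  have ha := hg.t_m_Tseq hTseq0 hTseq
  have ha_top : Tendsto (fun k => m (Tseq (nk k))) atTop atTop :=
    tendsto_atTop_mono (fun k => hnk_mono.le_apply.trans (hg.le_m_Tseq hT.le hTseq0 hTseq _))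
      tendsto_id
  have hxc : ContinuousOn xlim [[0, s]] := hxlim_cont.mono <| by
    rw [Set.uIcc_of_le hs]; exact Set.Icc_subset_Ico_right hsT
  have hh : Continuous h :=
    (LipschitzWith.of_dist_le' (by simpa only [dist_eq_norm] using hh_lip)).continuous
  obtain ⟨μ, hμ⟩ := exists_smul_b_zero_eq hκ hHc
  obtain ⟨M, hM₀, hM⟩ := hg.exists_eventually_norm_le (fun k => ha (nk k)) hs
    (X := fun k i => (r (nk k))⁻¹ • x i) (by rwa [Set.uIcc_of_le hs] at hxc)
    (hxlim.mono (Set.Ico_subset_Ico_right hsT.le))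
  refine exists_forall_abs_norm_sub_sub_norm_sub_le (hκ.comp hnk_div)
    (((hunif _ (isCompact_uIcc.image_of_continuousOn hxc)).tendsto_intervalIntegral_comp
      (fun c => by fun_prop) hxc).comp hnk_div)
    (fun j k => norm_sum_smul_scaled_sub_le (hHc _ (hr₁ _)) (hμ _ (hr₁ _)) hb_lip
      (fun i _ => (hα_pos i).le) _ (fun i => Y (i + 1)))
    (hg.bddAbove_range_window_sums (fun k => ha (nk k)) ha_top hs hsT.le hM₀ (abs_nonneg μ)
      (fun i => hLb_nonneg _) (hrateLb T hT 1 one_pos) (hrateH T hT 0 1 one_pos) hM) hε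

theorem uniform_in_k_double_limit
    {E : Type*} [NormedAddCommGroup E] [NormedSpace ℝ E] [FiniteDimensional ℝ E]
    [Nontrivial E]
    {𝓨 : Type*}
    (α : ℕ → ℝ)
    (hα_pos : ∀ n, 0 < α n)
    (hα_anti : ∀ n, α (n + 1) ≤ α n)
    (hα_div : Tendsto (fun n => ∑ i ∈ Finset.range n, α i) atTop atTop)
    (hα_to0 : Tendsto α atTop (nhds 0))
    (Cα : ℝ) (hCα_pos : 0 < Cα)
    (hCα : ∀ n, α n - α (n + 1) ≤ Cα * α n ^ 2)
    (t : ℕ → ℝ) (ht : ∀ n, t n = ∑ i ∈ Finset.range n, α i)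
    (m : ℝ → ℕ)
    (hm_le : ∀ s : ℝ, 0 ≤ s → t (m s) ≤ s)
    (hm_max : ∀ s : ℝ, 0 ≤ s → ∀ i : ℕ, t i ≤ s → i ≤ m s)
    (hm_neg : ∀ s : ℝ, s < 0 → m s = 0)
    (T : ℝ) (hT : 0 < T)
    (Tseq : ℕ → ℝ) (hTseq0 : Tseq 0 = 0)
    (hTseq : ∀ n, Tseq (n + 1) = t (m (Tseq n + T) + 1))
    (Y : ℕ → 𝓨) (H : E → 𝓨 → E)
    (x : ℕ → E)
    (hx : ∀ n, x (n + 1) = x n + α n • H (x n) (Y (n + 1)))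
    (L : 𝓨 → ℝ) (hL_nonneg : ∀ y, 0 ≤ L y)
    (hH_lip : ∀ x₁ x₂ : E, ∀ y : 𝓨, ‖H x₁ y - H x₂ y‖ ≤ L y * ‖x₁ - x₂‖)
    (Hinf : E → 𝓨 → E) (κ : ℝ → ℝ) (hκ : Tendsto κ atTop (nhds 0))
    (b : E → 𝓨 → E) (Lb : 𝓨 → ℝ) (hLb_nonneg : ∀ y, 0 ≤ Lb y)
    (hHc : ∀ c : ℝ, 1 ≤ c → ∀ x' : E, ∀ y : 𝓨,
      c⁻¹ • H (c • x') y - Hinf x' y = κ c • b x' y)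
    (hb_lip : ∀ x₁ x₂ : E, ∀ y : 𝓨, ‖b x₁ y - b x₂ y‖ ≤ Lb y * ‖x₁ - x₂‖)
    (hHinf_lip : ∀ x₁ x₂ : E, ∀ y : 𝓨, ‖Hinf x₁ y - Hinf x₂ y‖ ≤ L y * ‖x₁ - x₂‖)
    (h : E → E) (Lbar : ℝ) (hLbar : 0 ≤ Lbar)
    (Lbbar : ℝ) (hLbbar : 0 ≤ Lbbar)
    (hrateH : ∀ τ : ℝ, 0 < τ → ∀ x' : E, ∀ ε : ℝ, 0 < ε → ∃ N : ℕ, ∀ n ≥ N,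
      ∀ t₁ t₂ : ℝ, -τ ≤ t₁ → t₁ ≤ t₂ → t₂ ≤ τ →
        ‖∑ i ∈ Finset.Ico (m (t n + t₁)) (m (t n + t₂)),
            α i • (H x' (Y (i + 1)) - h x')‖ ≤ ε)
    (hrateLb : ∀ τ : ℝ, 0 < τ → ∀ ε : ℝ, 0 < ε → ∃ N : ℕ, ∀ n ≥ N,
      ∀ t₁ t₂ : ℝ, -τ ≤ t₁ → t₁ ≤ t₂ → t₂ ≤ τ →
        |∑ i ∈ Finset.Ico (m (t n + t₁)) (m (t n + t₂)),
            α i * (Lb (Y (i + 1)) - Lbbar)| ≤ ε)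
    (hrateL : ∀ τ : ℝ, 0 < τ → ∀ ε : ℝ, 0 < ε → ∃ N : ℕ, ∀ n ≥ N,
      ∀ t₁ t₂ : ℝ, -τ ≤ t₁ → t₁ ≤ t₂ → t₂ ≤ τ →
        |∑ i ∈ Finset.Ico (m (t n + t₁)) (m (t n + t₂)),
            α i * (L (Y (i + 1)) - Lbar)| ≤ ε)
    (hh_lip : ∀ x₁ x₂ : E, ‖h x₁ - h x₂‖ ≤ Lbar * ‖x₁ - x₂‖)
    (hinf : E → E)
    (hhinf_lip : ∀ x₁ x₂ : E, ‖hinf x₁ - hinf x₂‖ ≤ Lbar * ‖x₁ - x₂‖)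
    (hunif : ∀ K : Set E, IsCompact K →
      TendstoUniformlyOn (fun (c : ℝ) (x' : E) => c⁻¹ • h (c • x')) hinf atTop K)
    (r : ℕ → ℝ) (hr : ∀ n, r n = max 1 ‖x (m (Tseq n))‖)
    (nk : ℕ → ℕ) (hnk_mono : StrictMono nk)
    (hnk_div : Tendsto (fun k => r (nk k)) atTop atTop)
    (xlim : ℝ → E) (hxlim_cont : ContinuousOn xlim (Set.Ico 0 T))
    (hxlim : TendstoUniformlyOn (fun (k : ℕ) (s : ℝ) => (r (nk k))⁻¹ • x (m (Tseq (nk k) + s)))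
      xlim atTop (Set.Ico 0 T))
 :
    ∀ s : ℝ, 0 ≤ s → s < T → ∀ ε : ℝ, 0 < ε → ∃ J : ℕ, ∀ j ≥ J, ∀ k : ℕ,
      |‖(∑ i ∈ Finset.Ico (m (Tseq (nk k))) (m (Tseq (nk k) + s)),
            α i • ((r (nk j))⁻¹ • H (r (nk j) • ((r (nk k))⁻¹ • x i)) (Y (i + 1)))) -
          ∫ u in (0:ℝ)..s, (r (nk j))⁻¹ • h (r (nk j) • xlim u)‖ -
        ‖(∑ i ∈ Finset.Ico (m (Tseq (nk k))) (m (Tseq (nk k) + s)),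
            α i • Hinf ((r (nk k))⁻¹ • x i) (Y (i + 1))) -
          ∫ u in (0:ℝ)..s, hinf (xlim u)‖| ≤ ε :=
  uniform_in_k_double_limit_general α hα_pos t ht m hm_le hm_max T hT Tseq hTseq0 hTseq Y H x Hinf κ
    hκ b Lb hLb_nonneg hHc hb_lip h Lbar Lbbar hrateH hrateLb hh_lip hinf hunif r hr nk hnk_mono
    hnk_div xlim hxlim_cont hxlim
end

section
/- Fixed-scale averaging along the subsequence (Lemma 7, the central averaging step). Assume the full context and the subsequence setting. Then for every c ∈ [1, ∞) and every t ∈ [0, T), lim_{k→∞} ‖∑_{i=m(T_{n_k})}^{m(T_{n_k}+t)−1} α(i)·H_c(x̂(t(i)), Y_{i+1}) − ∫_0^t h_c(x̂^lim(s)) ds‖ = 0. -/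
open Filter


private lemma sum_Ico_telescope' {M : Type*} [AddCommMonoid M] (f : ℕ → M) (a : ℕ → ℕ)
    (ha : Monotone a) (p : ℕ) :
    ∑ j ∈ Finset.range p, ∑ i ∈ Finset.Ico (a j) (a (j+1)), f i
      = ∑ i ∈ Finset.Ico (a 0) (a p), f i := by
  induction p with
  | zero => simp
  | succ p ih =>
      rw [Finset.sum_range_succ, ih,
        Finset.sum_Ico_consecutive f (ha (Nat.zero_le p)) (ha (Nat.le_succ p))]

set_option maxHeartbeats 1600000 in
theorem fixed_scale_averaging_along_subsequence
    {E : Type*} [NormedAddCommGroup E] [NormedSpace ℝ E] [FiniteDimensional ℝ E]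
    [Nontrivial E]
    {𝓨 : Type*}
    (α : ℕ → ℝ)
    (hα_pos : ∀ n, 0 < α n)
    (hα_anti : ∀ n, α (n + 1) ≤ α n)
    (hα_div : Tendsto (fun n => ∑ i ∈ Finset.range n, α i) atTop atTop)
    (hα_to0 : Tendsto α atTop (nhds 0))
    (Cα : ℝ) (hCα_pos : 0 < Cα)
    (hCα : ∀ n, α n - α (n + 1) ≤ Cα * α n ^ 2)
    (t : ℕ → ℝ) (ht : ∀ n, t n = ∑ i ∈ Finset.range n, α i)
    (m : ℝ → ℕ)
    (hm_le : ∀ s : ℝ, 0 ≤ s → t (m s) ≤ s)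
    (hm_max : ∀ s : ℝ, 0 ≤ s → ∀ i : ℕ, t i ≤ s → i ≤ m s)
    (hm_neg : ∀ s : ℝ, s < 0 → m s = 0)
    (T : ℝ) (hT : 0 < T)
    (Tseq : ℕ → ℝ) (hTseq0 : Tseq 0 = 0)
    (hTseq : ∀ n, Tseq (n + 1) = t (m (Tseq n + T) + 1))
    (Y : ℕ → 𝓨) (H : E → 𝓨 → E)
    (x : ℕ → E)
    (hx : ∀ n, x (n + 1) = x n + α n • H (x n) (Y (n + 1)))
    (L : 𝓨 → ℝ) (hL_nonneg : ∀ y, 0 ≤ L y)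
    (hH_lip : ∀ x₁ x₂ : E, ∀ y : 𝓨, ‖H x₁ y - H x₂ y‖ ≤ L y * ‖x₁ - x₂‖)
    (h : E → E) (Lbar : ℝ) (hLbar : 0 ≤ Lbar)
    (hrateH : ∀ τ : ℝ, 0 < τ → ∀ x' : E, ∀ ε : ℝ, 0 < ε → ∃ N : ℕ, ∀ n ≥ N,
      ∀ t₁ t₂ : ℝ, -τ ≤ t₁ → t₁ ≤ t₂ → t₂ ≤ τ →
        ‖∑ i ∈ Finset.Ico (m (t n + t₁)) (m (t n + t₂)),
            α i • (H x' (Y (i + 1)) - h x')‖ ≤ ε)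
    (hrateL : ∀ τ : ℝ, 0 < τ → ∀ ε : ℝ, 0 < ε → ∃ N : ℕ, ∀ n ≥ N,
      ∀ t₁ t₂ : ℝ, -τ ≤ t₁ → t₁ ≤ t₂ → t₂ ≤ τ →
        |∑ i ∈ Finset.Ico (m (t n + t₁)) (m (t n + t₂)),
            α i * (L (Y (i + 1)) - Lbar)| ≤ ε)
    (hh_lip : ∀ x₁ x₂ : E, ‖h x₁ - h x₂‖ ≤ Lbar * ‖x₁ - x₂‖)
    (r : ℕ → ℝ) (hr : ∀ n, r n = max 1 ‖x (m (Tseq n))‖)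
    (nk : ℕ → ℕ) (hnk_mono : StrictMono nk)
    (hnk_div : Tendsto (fun k => r (nk k)) atTop atTop)
    (xlim : ℝ → E) (hxlim_cont : ContinuousOn xlim (Set.Ico 0 T))
    (hxlim : TendstoUniformlyOn (fun (k : ℕ) (s : ℝ) => (r (nk k))⁻¹ • x (m (Tseq (nk k) + s)))
      xlim atTop (Set.Ico 0 T))
 :
    ∀ c : ℝ, 1 ≤ c → ∀ s : ℝ, 0 ≤ s → s < T →
      Tendsto (fun k =>
        ‖(∑ i ∈ Finset.Ico (m (Tseq (nk k))) (m (Tseq (nk k) + s)),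
            α i • (c⁻¹ • H (c • ((r (nk k))⁻¹ • x i)) (Y (i + 1)))) -
          ∫ u in (0:ℝ)..s, c⁻¹ • h (c • xlim u)‖) atTop (nhds 0) := by

  -- Preliminary facts
  have ht0 : t 0 = 0 := by simp [ht]
  have htmono : StrictMono t := by
    apply strictMono_nat_of_lt_succ
    intro n
    rw [ht, ht, Finset.sum_range_succ]
    linarith [hα_pos n]
  have ht_nonneg : ∀ n, 0 ≤ t n := by
    intro n
    rw [ht]
    exact Finset.sum_nonneg fun i _ => (hα_pos i).le
  have ht_succ : ∀ n, t (n + 1) = t n + α n := by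
    intro n; rw [ht, ht, Finset.sum_range_succ]
  have hmt : ∀ n, m (t n) = n := by
    intro n
    refine le_antisymm ?_ (hm_max (t n) (ht_nonneg n) n le_rfl)
    exact htmono.le_iff_le.mp (hm_le (t n) (ht_nonneg n))
  have hm_mono : ∀ s₁ s₂ : ℝ, 0 ≤ s₁ → s₁ ≤ s₂ → m s₁ ≤ m s₂ := by
    intro s₁ s₂ h1 h12
    exact hm_max s₂ (h1.trans h12) (m s₁) ((hm_le s₁ h1).trans h12)
  have hm_lt : ∀ s : ℝ, 0 ≤ s → s < t (m s + 1) := by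
    intro s hs
    by_contra hcon
    push_neg at hcon
    have := hm_max s hs (m s + 1) hcon
    omega
  have hsum_Ico : ∀ a b : ℕ, a ≤ b → ∑ i ∈ Finset.Ico a b, α i = t b - t a := by
    intro a b hab
    rw [Finset.sum_Ico_eq_sub α hab, ht, ht]
  have hα_anti' : Antitone α := antitone_nat_of_succ_le hα_anti
  have hTseq_nonneg : ∀ n, 0 ≤ Tseq n := by
    intro n
    cases n with
    | zero => rw [hTseq0]
    | succ n => rw [hTseq n]; exact ht_nonneg _
  have hTt : ∀ n, t (m (Tseq n)) = Tseq n := by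
    intro n
    cases n with
    | zero => rw [hTseq0, ← ht0, hmt, ht0]
    | succ n => rw [hTseq n, hmt]
  have hTseq_ge : ∀ n : ℕ, (n : ℝ) * T ≤ Tseq n := by
    intro n
    induction n with
    | zero => simp [hTseq0]
    | succ n ih =>
        have h1 : Tseq n + T < t (m (Tseq n + T) + 1) :=
          hm_lt _ (by linarith [hTseq_nonneg n, hT.le])
        rw [hTseq n]
        have he : ((n:ℝ)+1)*T = ↑n*T + T := by ring
        push_cast
        linarith
  have hJdiv : Tendsto (fun n => m (Tseq n)) atTop atTop := by
    rw [tendsto_atTop_atTop]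
    intro N
    obtain ⟨K, hK⟩ := exists_nat_gt (t N / T)
    refine ⟨K, fun n hn => ?_⟩
    have h1 : t N < (n : ℝ) * T := by
      rw [div_lt_iff₀ hT] at hK
      have : (K:ℝ) ≤ (n:ℝ) := Nat.cast_le.mpr hn
      nlinarith
    have h2 : t N < t (m (Tseq n)) := by
      rw [hTt]
      exact h1.trans_le (hTseq_ge n)
    exact (htmono.lt_iff_lt.mp h2).le
  have hJnk : Tendsto (fun k => m (Tseq (nk k))) atTop atTop :=
    hJdiv.comp hnk_mono.tendsto_atTop
  intro c hc s hs0 hsT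
  have hc0 : (0:ℝ) < c := lt_of_lt_of_le one_pos hc
  rcases eq_or_lt_of_le hs0 with hs | hs
  · -- s = 0
    have : ∀ k : ℕ, ‖(∑ i ∈ Finset.Ico (m (Tseq (nk k))) (m (Tseq (nk k) + s)),
            α i • (c⁻¹ • H (c • ((r (nk k))⁻¹ • x i)) (Y (i + 1)))) -
          ∫ u in (0:ℝ)..s, c⁻¹ • h (c • xlim u)‖ = 0 := by
      intro k
      rw [← hs]
      simp [intervalIntegral.integral_same]
    simp only [this]
    exact tendsto_const_nhds

  -- main case 0 < s
  set g : ℝ → E := fun u => c⁻¹ • h (c • xlim u) with hg_def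
  have hh_cont : Continuous h := by
    apply LipschitzWith.continuous (K := Real.toNNReal Lbar)
    apply LipschitzWith.of_dist_le_mul
    intro a b
    rw [dist_eq_norm, dist_eq_norm]
    calc ‖h a - h b‖ ≤ Lbar * ‖a - b‖ := hh_lip a b
    _ = Real.toNNReal Lbar * ‖a - b‖ := by rw [Real.coe_toNNReal _ hLbar]
  have hIcc_sub : Set.Icc (0:ℝ) s ⊆ Set.Ico (0:ℝ) T := fun u hu =>
    ⟨hu.1, lt_of_le_of_lt hu.2 hsT⟩
  have hxlim_cont' : ContinuousOn xlim (Set.Icc 0 s) := hxlim_cont.mono hIcc_sub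
  have hg_cont : ContinuousOn g (Set.Icc 0 s) := by
    apply ContinuousOn.const_smul
    exact hh_cont.comp_continuousOn (continuousOn_const.smul hxlim_cont')
  obtain ⟨G0, hG0⟩ := (isCompact_Icc).exists_bound_of_continuousOn hg_cont
  set G : ℝ := max G0 0 with hG_def
  have hG_nonneg : 0 ≤ G := le_max_right _ _
  have hG : ∀ u ∈ Set.Icc (0:ℝ) s, ‖g u‖ ≤ G := fun u hu =>
    (hG0 u hu).trans (le_max_left _ _)
  set M : ℝ := Lbar * s + 1 with hM_def
  have hM1 : 1 ≤ M := by
    have : 0 ≤ Lbar * s := mul_nonneg hLbar hs0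
    rw [hM_def]; linarith
  have hM0 : 0 < M := by linarith
  -- uniform continuity of xlim on Icc 0 s
  have hxlim_unif : UniformContinuousOn xlim (Set.Icc 0 s) :=
    isCompact_Icc.uniformContinuousOn_of_continuous hxlim_cont'
  -- reduce to eventually-norm-small
  have key : Tendsto (fun k =>
      (∑ i ∈ Finset.Ico (m (Tseq (nk k))) (m (Tseq (nk k) + s)),
          α i • (c⁻¹ • H (c • ((r (nk k))⁻¹ • x i)) (Y (i + 1)))) -
        ∫ u in (0:ℝ)..s, g u) atTop (nhds 0) := by
    rw [NormedAddCommGroup.tendsto_nhds_zero]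
    intro ε hε
    set ω : ℝ := ε / (8 * (M + s * Lbar + 1)) with hω_def
    have hden : (0:ℝ) < 8 * (M + s * Lbar + 1) := by
      have : 0 ≤ s * Lbar := mul_nonneg hs0 hLbar
      linarith
    have hω_pos : 0 < ω := div_pos hε hden
    set η : ℝ := ε / (8 * M) with hη_def
    have hη_pos : 0 < η := div_pos hε (by linarith)
    rw [Metric.uniformContinuousOn_iff] at hxlim_unif
    obtain ⟨δ₀, hδ₀_pos, hδ₀⟩ := hxlim_unif ω hω_pos
    obtain ⟨p, hp⟩ := exists_nat_gt (2 * s / δ₀)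
    have hp0 : 0 < p := by
      have : (0:ℝ) < 2 * s / δ₀ := by positivity
      exact_mod_cast Nat.cast_pos.mp (this.trans hp)
    have hp0' : (0:ℝ) < p := Nat.cast_pos.mpr hp0
    set δ : ℝ := s / p with hδ_def
    have hδ_pos : 0 < δ := div_pos hs hp0'
    have hδ_le : δ ≤ δ₀ / 2 := by
      rw [hδ_def, div_le_div_iff₀ hp0' two_pos]
      rw [div_lt_iff₀ hδ₀_pos] at hp
      nlinarith
    set u : ℕ → ℝ := fun j => j * δ with hu_def
    have hu_mono : Monotone u := fun j1 j2 h12 => by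
      simp only [hu_def]
      exact mul_le_mul_of_nonneg_right (Nat.cast_le.mpr h12) hδ_pos.le
    have hu0 : u 0 = 0 := by simp [hu_def]
    have hup : u p = s := by
      simp only [hu_def, hδ_def]
      field_simp
    have hu_nonneg : ∀ j, 0 ≤ u j := fun j => by positivity
    have hu_mem : ∀ j, j ≤ p → u j ∈ Set.Icc (0:ℝ) s := fun j hj =>
      ⟨hu_nonneg j, by rw [← hup]; exact hu_mono hj⟩
    have h8p : (0:ℝ) < ε / (8 * p) := by positivity
    have hG1 : (0:ℝ) < G + 1 := by linarith
    have hbp : (0:ℝ) < ε / (8 * p * (G + 1)) := by positivity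
    choose N hN using fun j : ℕ => hrateH T hT (c • xlim (u j)) (ε / (8 * p)) h8p
    set N₁ := (Finset.range (p+1)).sup N with hN₁_def
    obtain ⟨N₂, hN₂⟩ := hrateL T hT 1 one_pos
    have ev1 : ∀ᶠ k in atTop, max N₁ N₂ ≤ m (Tseq (nk k)) := hJnk.eventually_ge_atTop _
    have hα_tend : Tendsto (fun k => α (m (Tseq (nk k)))) atTop (nhds 0) := hα_to0.comp hJnk
    have ev2 : ∀ᶠ k in atTop,
        α (m (Tseq (nk k))) < min (δ₀/2) (ε / (8*p*(G+1))) :=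
      hα_tend.eventually_lt_const (lt_min (by linarith) hbp)
    have ev3 : ∀ᶠ k in atTop, ∀ u' ∈ Set.Ico (0:ℝ) T,
        dist (xlim u') ((r (nk k))⁻¹ • x (m (Tseq (nk k) + u'))) < η :=
      (Metric.tendstoUniformlyOn_iff.mp hxlim) η hη_pos
    filter_upwards [ev1, ev2, ev3] with k hk1 hk2 hk3
    set Tk := Tseq (nk k) with hTk_def
    set R := (r (nk k))⁻¹ with hR_def
    set a : ℕ → ℕ := fun j => m (Tk + u j) with ha_def
    have hTk0 : 0 ≤ Tk := hTseq_nonneg _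
    have hTku : ∀ j, 0 ≤ Tk + u j := fun j => by
      have := hu_nonneg j; linarith
    have ha0 : a 0 = m Tk := by simp only [ha_def, hu0, add_zero]
    have hap : a p = m (Tk + s) := by simp only [ha_def, hup]
    have hta0 : t (a 0) = Tk := by rw [ha0]; exact hTt _
    have ha_mono : Monotone a := fun j1 j2 h12 =>
      hm_mono _ _ (hTku j1) (add_le_add le_rfl (hu_mono h12))
    have hta_le : ∀ j, t (a j) ≤ Tk + u j := fun j => hm_le _ (hTku j)
    have hta_gt : ∀ j, Tk + u j < t (a j) + α (a j) := fun j => by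
      have := hm_lt (Tk + u j) (hTku j)
      rwa [ht_succ] at this
    have hαa : ∀ j, α (a j) ≤ α (a 0) := fun j => hα_anti' (ha_mono (Nat.zero_le j))
    have hαa0 : α (a 0) < min (δ₀ / 2) (ε / (8 * ↑p * (G + 1))) := by rw [ha0]; exact hk2
    have hαa0₁ : α (a 0) < δ₀ / 2 := lt_of_lt_of_le hαa0 (min_le_left _ _)
    have hαa0₂ : α (a 0) < ε / (8 * ↑p * (G + 1)) := lt_of_lt_of_le hαa0 (min_le_right _ _)
    have hg_intj : ∀ j, j < p → IntervalIntegrable g MeasureTheory.volume (u j) (u (j+1)) := by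
      intro j hj
      apply ContinuousOn.intervalIntegrable
      apply hg_cont.mono
      rw [Set.uIcc_of_le (hu_mono (Nat.le_succ j))]
      exact Set.Icc_subset_Icc (hu_nonneg j) ((hu_mem (j+1) hj).2)
    have hsum_split : (∑ i ∈ Finset.Ico (m Tk) (m (Tk + s)),
          α i • (c⁻¹ • H (c • (R • x i)) (Y (i + 1))))
        = ∑ j ∈ Finset.range p, ∑ i ∈ Finset.Ico (a j) (a (j+1)),
            α i • (c⁻¹ • H (c • (R • x i)) (Y (i + 1))) := by
      rw [sum_Ico_telescope' _ a ha_mono p, ha0, hap]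
    have hint_split : (∫ u' in (0:ℝ)..s, g u')
        = ∑ j ∈ Finset.range p, ∫ u' in (u j)..(u (j+1)), g u' := by
      rw [intervalIntegral.sum_integral_adjacent_intervals hg_intj, hu0, hup]
    have hL_full : ∑ i ∈ Finset.Ico (a 0) (a p), α i * L (Y (i+1)) ≤ M := by
      have h1 := hN₂ (m Tk) (le_trans (le_max_right _ _) hk1) 0 s
        (by linarith) hs0 hsT.le
      have e1 : t (m Tk) + 0 = Tk := by rw [add_zero, ← ha0, hta0]
      have e2 : t (m Tk) + s = Tk + s := by rw [← ha0, hta0]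
      rw [e1, e2, ← ha0, ← hap] at h1
      have h2 : ∑ i ∈ Finset.Ico (a 0) (a p), α i * (L (Y (i+1)) - Lbar) ≤ 1 :=
        (le_abs_self _).trans h1
      have h3 : ∑ i ∈ Finset.Ico (a 0) (a p), α i = t (a p) - t (a 0) :=
        hsum_Ico _ _ (ha_mono (Nat.zero_le p))
      have h4 : t (a p) - t (a 0) ≤ s := by
        have := hta_le p
        rw [hup] at this
        rw [hta0]
        linarith
      have h5 : ∑ i ∈ Finset.Ico (a 0) (a p), α i * L (Y (i+1))
          = (∑ i ∈ Finset.Ico (a 0) (a p), α i * (L (Y (i+1)) - Lbar))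
            + Lbar * ∑ i ∈ Finset.Ico (a 0) (a p), α i := by
        rw [Finset.mul_sum, ← Finset.sum_add_distrib]
        congr 1
        funext i
        ring
      rw [h5, h3, hM_def]
      have h6 : Lbar * (t (a p) - t (a 0)) ≤ Lbar * s := mul_le_mul_of_nonneg_left h4 hLbar
      linarith
    rw [hsum_split, hint_split, ← Finset.sum_sub_distrib]
    refine lt_of_le_of_lt (norm_sum_le _ _) ?_
    have hkey : ∀ j ∈ Finset.range p,
        ‖(∑ i ∈ Finset.Ico (a j) (a (j+1)),
            α i • (c⁻¹ • H (c • (R • x i)) (Y (i + 1)))) -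
          ∫ u' in (u j)..(u (j+1)), g u'‖
        ≤ (η + ω) * (∑ i ∈ Finset.Ico (a j) (a (j+1)), α i * L (Y (i+1)))
          + ε/(8*p) + ε/(8*p*(G+1)) * G + δ * (Lbar * ω) := by
      intro j hj
      rw [Finset.mem_range] at hj
      have hjp : j ≤ p := hj.le
      have hj1p : j + 1 ≤ p := hj
      have hujmem : u j ∈ Set.Icc (0:ℝ) s := hu_mem j hjp
      have huj1mem : u (j+1) ∈ Set.Icc (0:ℝ) s := hu_mem (j+1) hj1p
      have huu : u (j+1) = u j + δ := by
        simp only [hu_def]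
        push_cast
        ring
      have haj : a j ≤ a (j+1) := ha_mono (Nat.le_succ j)
      have htmTk : t (m Tk) = Tk := by rw [← ha0, hta0]
      have haW : ∀ j' : ℕ, m (Tk + u j') = a j' := fun _ => rfl
      have hguj : g (u j) = c⁻¹ • h (c • xlim (u j)) := rfl
      -- closeness of scaled iterates to xlim (u j)
      have hx_close : ∀ i ∈ Finset.Ico (a j) (a (j+1)),
          ‖R • x i - xlim (u j)‖ ≤ η + ω := by
        intro i hi
        rw [Finset.mem_Ico] at hi
        have hti_ge : Tk ≤ t i := by
          rw [← hta0]
          exact htmono.monotone (le_trans (ha_mono (Nat.zero_le j)) hi.1)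
        have hti_lt : t i < Tk + s := by
          have h1 : i < a p := lt_of_lt_of_le hi.2 (ha_mono hj1p)
          have h2 := htmono h1
          have h3 : t (a p) ≤ Tk + s := by
            have := hta_le p
            rwa [hup] at this
          linarith
        set θ := t i - Tk with hθ_def
        have hθ0 : 0 ≤ θ := by simp only [hθ_def]; linarith
        have hθs : θ < s := by simp only [hθ_def]; linarith
        have hmθ : m (Tk + θ) = i := by
          have he : Tk + θ = t i := by simp only [hθ_def]; ring
          rw [he, hmt]
        have h1 : dist (xlim θ) (R • x i) < η := by
          have := hk3 θ ⟨hθ0, lt_trans hθs hsT⟩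
          rwa [hmθ] at this
        have hθu : dist θ (u j) < δ₀ := by
          rw [Real.dist_eq, abs_sub_lt_iff]
          have h2 : t i < t (a (j+1)) := htmono hi.2
          have h3 : t (a (j+1)) ≤ Tk + u (j+1) := hta_le (j+1)
          have h4 : t (a j) ≤ t i := htmono.monotone hi.1
          have h5 := hta_gt j
          have h6 := hαa j
          constructor
          · simp only [hθ_def]
            linarith [hδ₀_pos]
          · simp only [hθ_def]
            linarith [hαa0₁]
        have h2 : dist (xlim θ) (xlim (u j)) < ω :=
          hδ₀ θ ⟨hθ0, hθs.le⟩ (u j) hujmem hθu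
        rw [← dist_eq_norm]
        calc dist (R • x i) (xlim (u j))
            ≤ dist (R • x i) (xlim θ) + dist (xlim θ) (xlim (u j)) := dist_triangle _ _ _
        _ ≤ η + ω := by
            rw [dist_comm] at h1
            linarith
      set x' := c • xlim (u j) with hx'_def
      set A := ∑ i ∈ Finset.Ico (a j) (a (j+1)),
          α i • (c⁻¹ • (H (c • (R • x i)) (Y (i+1)) - H x' (Y (i+1)))) with hA_def
      set B := c⁻¹ • ∑ i ∈ Finset.Ico (a j) (a (j+1)),
          α i • (H x' (Y (i+1)) - h x') with hB_def
      set Sα := ∑ i ∈ Finset.Ico (a j) (a (j+1)), α i with hSα_def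
      have claim1 : A + B = (∑ i ∈ Finset.Ico (a j) (a (j+1)),
          α i • (c⁻¹ • H (c • (R • x i)) (Y (i+1)))) - Sα • g (u j) := by
        rw [hA_def, hB_def, Finset.smul_sum]
        rw [← Finset.sum_add_distrib]
        have he : ∀ i ∈ Finset.Ico (a j) (a (j+1)),
            α i • (c⁻¹ • (H (c • (R • x i)) (Y (i+1)) - H x' (Y (i+1))))
              + c⁻¹ • (α i • (H x' (Y (i+1)) - h x'))
            = α i • (c⁻¹ • H (c • (R • x i)) (Y (i+1))) - α i • (c⁻¹ • h x') := by
          intro i _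
          module
        rw [Finset.sum_congr rfl he, Finset.sum_sub_distrib, ← Finset.sum_smul]
      have hdecomp : (∑ i ∈ Finset.Ico (a j) (a (j+1)),
            α i • (c⁻¹ • H (c • (R • x i)) (Y (i+1)))) - (∫ u' in (u j)..(u (j+1)), g u')
          = A + B + ((Sα - δ) • g (u j)
            + (δ • g (u j) - ∫ u' in (u j)..(u (j+1)), g u')) := by
        rw [claim1, sub_smul]
        abel
      have hA_bound : ‖A‖ ≤ (η + ω) * ∑ i ∈ Finset.Ico (a j) (a (j+1)), α i * L (Y (i+1)) := by
        rw [hA_def]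
        refine (norm_sum_le _ _).trans ?_
        rw [Finset.mul_sum]
        refine Finset.sum_le_sum fun i hi => ?_
        have hLi := hL_nonneg (Y (i+1))
        have hαi := (hα_pos i).le
        have hcinv : (0:ℝ) < c⁻¹ := inv_pos.mpr hc0
        have hlip : ‖H (c • (R • x i)) (Y (i+1)) - H x' (Y (i+1))‖
            ≤ L (Y (i+1)) * (c * ‖R • x i - xlim (u j)‖) := by
          have := hH_lip (c • (R • x i)) x' (Y (i+1))
          rw [hx'_def, ← smul_sub, norm_smul, Real.norm_eq_abs, abs_of_pos hc0] at this
          exact this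
        have hnorm : ‖α i • (c⁻¹ • (H (c • (R • x i)) (Y (i+1)) - H x' (Y (i+1))))‖
            = α i * (c⁻¹ * ‖H (c • (R • x i)) (Y (i+1)) - H x' (Y (i+1))‖) := by
          rw [norm_smul, norm_smul, Real.norm_eq_abs, Real.norm_eq_abs,
            abs_of_nonneg hαi, abs_of_pos hcinv]
        rw [hnorm]
        have hcc : c⁻¹ * c = 1 := inv_mul_cancel₀ (ne_of_gt hc0)
        calc α i * (c⁻¹ * ‖H (c • (R • x i)) (Y (i+1)) - H x' (Y (i+1))‖)
            ≤ α i * (c⁻¹ * (L (Y (i+1)) * (c * ‖R • x i - xlim (u j)‖))) := by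
              refine mul_le_mul_of_nonneg_left (mul_le_mul_of_nonneg_left hlip hcinv.le) hαi
        _ = α i * L (Y (i+1)) * ‖R • x i - xlim (u j)‖ := by
              field_simp
        _ ≤ α i * L (Y (i+1)) * (η + ω) := by
              refine mul_le_mul_of_nonneg_left (hx_close i hi) (mul_nonneg hαi hLi)
        _ = (η + ω) * (α i * L (Y (i+1))) := by ring
      have hB_bound : ‖B‖ ≤ ε / (8*p) := by
        have hNj : N j ≤ m Tk := by
          refine le_trans ?_ (le_trans (le_max_left N₁ N₂) hk1)
          exact Finset.le_sup (Finset.mem_range.mpr (by omega : j < p + 1))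
        have h1 := hN j (m Tk) hNj (u j) (u (j+1))
          (by linarith [hu_nonneg j, hT.le]) (hu_mono (Nat.le_succ j))
          (le_trans huj1mem.2 hsT.le)
        rw [htmTk, haW j, haW (j+1), ← hx'_def] at h1
        rw [hB_def, norm_smul, Real.norm_eq_abs, abs_of_pos (inv_pos.mpr hc0)]
        calc c⁻¹ * ‖∑ i ∈ Finset.Ico (a j) (a (j+1)), α i • (H x' (Y (i+1)) - h x')‖
            ≤ 1 * ‖∑ i ∈ Finset.Ico (a j) (a (j+1)), α i • (H x' (Y (i+1)) - h x')‖ := by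
              refine mul_le_mul_of_nonneg_right (inv_le_one_of_one_le₀ hc) (norm_nonneg _)
        _ = ‖∑ i ∈ Finset.Ico (a j) (a (j+1)), α i • (H x' (Y (i+1)) - h x')‖ := one_mul _
        _ ≤ ε / (8*p) := h1
      have hSα_close : |Sα - δ| ≤ ε / (8*p*(G+1)) := by
        have h1 : Sα = t (a (j+1)) - t (a j) := hsum_Ico _ _ haj
        have h2 : t (a (j+1)) ≤ Tk + u (j+1) := hta_le (j+1)
        have h3 := hta_gt j
        have h4 := hta_gt (j+1)
        have h5 : t (a j) ≤ Tk + u j := hta_le j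
        have h6 := hαa j
        have h7 := hαa (j+1)
        rw [abs_sub_le_iff]
        constructor
        · rw [h1]
          have := hαa0₂
          linarith [huu]
        · rw [h1]
          have := hαa0₂
          linarith [huu]
      have hC1_bound : ‖(Sα - δ) • g (u j)‖ ≤ ε/(8*p*(G+1)) * G := by
        rw [norm_smul, Real.norm_eq_abs]
        exact mul_le_mul hSα_close (hG (u j) hujmem) (norm_nonneg _) hbp.le
      have hC2_bound : ‖δ • g (u j) - ∫ u' in (u j)..(u (j+1)), g u'‖ ≤ δ * (Lbar * ω) := by
        have hconst : (∫ _ in (u j)..(u (j+1)), g (u j)) = δ • g (u j) := by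
          rw [intervalIntegral.integral_const, huu]
          congr 1
          ring
        have hint : δ • g (u j) - (∫ u' in (u j)..(u (j+1)), g u')
            = ∫ u' in (u j)..(u (j+1)), (g (u j) - g u') := by
          rw [intervalIntegral.integral_sub intervalIntegrable_const (hg_intj j hj), hconst]
        rw [hint]
        have hb : ∀ u' ∈ Set.uIoc (u j) (u (j+1)), ‖g (u j) - g u'‖ ≤ Lbar * ω := by
          intro u' hu'
          rw [Set.uIoc_of_le (hu_mono (Nat.le_succ j))] at hu'
          have hu'mem : u' ∈ Set.Icc (0:ℝ) s :=
            ⟨le_trans hujmem.1 hu'.1.le, le_trans hu'.2 huj1mem.2⟩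
          have hdist : dist (u j) u' < δ₀ := by
            rw [Real.dist_eq, abs_sub_lt_iff]
            constructor
            · linarith [hu'.1, hδ₀_pos]
            · have := hu'.2
              rw [huu] at this
              linarith
          have hxl : dist (xlim (u j)) (xlim u') < ω :=
            hδ₀ (u j) hujmem u' hu'mem hdist
          have he : g (u j) - g u' = c⁻¹ • (h (c • xlim (u j)) - h (c • xlim u')) := by
            rw [hguj]
            show _ = _
            rw [smul_sub]
          rw [he, norm_smul, Real.norm_eq_abs, abs_of_pos (inv_pos.mpr hc0)]
          have hl := hh_lip (c • xlim (u j)) (c • xlim u')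
          rw [← smul_sub, norm_smul, Real.norm_eq_abs, abs_of_pos hc0] at hl
          have hxl' : ‖xlim (u j) - xlim u'‖ ≤ ω := by
            rw [← dist_eq_norm]
            exact hxl.le
          calc c⁻¹ * ‖h (c • xlim (u j)) - h (c • xlim u')‖
              ≤ c⁻¹ * (Lbar * (c * ‖xlim (u j) - xlim u'‖)) :=
                mul_le_mul_of_nonneg_left hl (inv_pos.mpr hc0).le
          _ = Lbar * ‖xlim (u j) - xlim u'‖ := by field_simp
          _ ≤ Lbar * ω := mul_le_mul_of_nonneg_left hxl' hLbar
        have := intervalIntegral.norm_integral_le_of_norm_le_const hb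
        have habs : |u (j+1) - u j| = δ := by
          rw [huu]
          rw [show u j + δ - u j = δ by ring]
          exact abs_of_pos hδ_pos
        rw [habs] at this
        linarith [this]
      rw [hdecomp]
      calc ‖A + B + ((Sα - δ) • g (u j) + (δ • g (u j) - ∫ u' in (u j)..(u (j+1)), g u'))‖
          ≤ ‖A‖ + ‖B‖ + (‖(Sα - δ) • g (u j)‖
            + ‖δ • g (u j) - ∫ u' in (u j)..(u (j+1)), g u'‖) := by
            refine le_trans (norm_add_le _ _) ?_
            have := norm_add_le A B
            have := norm_add_le ((Sα - δ) • g (u j))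
              (δ • g (u j) - ∫ u' in (u j)..(u (j+1)), g u')
            linarith
      _ ≤ (η + ω) * (∑ i ∈ Finset.Ico (a j) (a (j+1)), α i * L (Y (i+1)))
            + ε/(8*p) + (ε/(8*p*(G+1)) * G + δ * (Lbar * ω)) := by
            refine add_le_add (add_le_add hA_bound hB_bound) (add_le_add hC1_bound hC2_bound)
      _ = (η + ω) * (∑ i ∈ Finset.Ico (a j) (a (j+1)), α i * L (Y (i+1)))
            + ε/(8*p) + ε/(8*p*(G+1)) * G + δ * (Lbar * ω) := by ring
    have hsum_le := Finset.sum_le_sum hkey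
    refine lt_of_le_of_lt hsum_le ?_
    have hdist : ∑ j ∈ Finset.range p,
        ((η + ω) * (∑ i ∈ Finset.Ico (a j) (a (j+1)), α i * L (Y (i+1)))
          + ε/(8*p) + ε/(8*p*(G+1)) * G + δ * (Lbar * ω))
        = (η + ω) * (∑ i ∈ Finset.Ico (a 0) (a p), α i * L (Y (i+1)))
          + p * (ε/(8*p)) + p * (ε/(8*p*(G+1)) * G) + p * (δ * (Lbar * ω)) := by
      rw [Finset.sum_add_distrib, Finset.sum_add_distrib, Finset.sum_add_distrib,
        ← Finset.mul_sum, sum_Ico_telescope' _ a ha_mono p,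
        Finset.sum_const, Finset.sum_const, Finset.sum_const,
        Finset.card_range, nsmul_eq_mul, nsmul_eq_mul, nsmul_eq_mul]
    rw [hdist]
    have hAL_nonneg : 0 ≤ ∑ i ∈ Finset.Ico (a 0) (a p), α i * L (Y (i+1)) :=
      Finset.sum_nonneg fun i _ => mul_nonneg (hα_pos i).le (hL_nonneg _)
    have e1 : (p:ℝ) * (ε/(8*p)) = ε/8 := by field_simp
    have e2 : (p:ℝ) * δ = s := by rw [hδ_def]; field_simp
    have e3 : η * M = ε / 8 := by rw [hη_def]; field_simp
    have e4 : ω * (M + s*Lbar + 1) = ε / 8 := by rw [hω_def]; field_simp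
    have e5 : (p:ℝ) * (ε/(8*p*(G+1)) * G) = ε/8 * (G/(G+1)) := by field_simp
    have e6 : G / (G+1) < 1 := by rw [div_lt_one hG1]; linarith
    have e7 : (p:ℝ) * (δ * (Lbar * ω)) = s * Lbar * ω := by rw [← mul_assoc, e2]; ring
    set AL := ∑ i ∈ Finset.Ico (a 0) (a p), α i * L (Y (i+1))
    rw [e1, e5, e7]
    clear_value AL G M ω η δ
    have b1 : η * AL ≤ ε / 8 := by
      calc η * AL ≤ η * M := mul_le_mul_of_nonneg_left hL_full hη_pos.le
      _ = ε/8 := e3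
    have b2 : ω * AL + s * Lbar * ω ≤ ε / 8 := by
      have hb21 : ω * AL ≤ ω * M := mul_le_mul_of_nonneg_left hL_full hω_pos.le
      have hb22 : ω * (M + s*Lbar) ≤ ω * (M + s*Lbar + 1) :=
        mul_le_mul_of_nonneg_left (by linarith) hω_pos.le
      have hexp : ω * (M + s*Lbar) = ω * M + s * Lbar * ω := by ring
      linarith
    have b3 : ε/8 * (G/(G+1)) < ε/8 := by
      have h8 : (0:ℝ) < ε/8 := by linarith
      exact mul_lt_of_lt_one_right h8 e6
    have hexpand : (η + ω) * AL = η * AL + ω * AL := by ring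
    linarith

  have key2 := key.norm
  simp only [norm_zero] at key2
  exact key2
end
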